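/- arXiv:math/0407062 — 7 statements merged into one kernel-verified Lean document; each statement's English description precedes it below -/
import Mathlib

section
/- Assume the i.i.d. sample satisfies the second-order condition with index γ₀ = 0 and second-order parameter ρ ≤ 0, and let k_n be an intermediate sequence with Φ(k_n/n) = O(k_n^{−1/2}). Let r_n be a sequence of real random variables with k_n^{1/2}|r_n| stochastically bounded. Then P( 1 + r_n (X_{n−⌊k_n t⌋, n} − X_{n−k_n, n})/a(k_n/n) ≥ 1/2 for all t ∈ [1/(2k_n), 1] ) → 1 as n → ∞. -/
open MeasureTheory ProbabilityTheory Filter Set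

noncomputable section

/-- The distribution function `F(x) = P(X ≤ x)` of a real random variable. -/
def distFun {Ω : Type*} [MeasurableSpace Ω] (P : Measure Ω) (X : Ω → ℝ) (x : ℝ) : ℝ :=
  (P {ω | X ω ≤ x}).toReal

/-- The generalized inverse `F^←(p) = inf {x | F(x) ≥ p}`. -/
def qtFun {Ω : Type*} [MeasurableSpace Ω] (P : Measure Ω) (X : Ω → ℝ) (p : ℝ) : ℝ :=
  sInf {x | p ≤ distFun P X x}

/-- `(x^{-γ} - 1)/γ`, read as `-log x` when `γ = 0`. -/
def hDH (γ x : ℝ) : ℝ := if γ = 0 then -Real.log x else (x ^ (-γ) - 1) / γ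

/-- The second-order limit function `Ψ`. -/
def PsiFun (γ ρ x : ℝ) : ℝ :=
  if ρ < 0 then (x ^ (-(γ + ρ)) - 1) / (γ + ρ)
  else if γ = 0 then (Real.log x) ^ 2
  else -(x ^ (-γ)) * Real.log x / γ

/-- A function is locally bounded on `(0,1)`. -/
def LocallyBddOn01 (f : ℝ → ℝ) : Prop :=
  ∀ t ∈ Ioo (0 : ℝ) 1, ∃ ε > 0, ∃ M : ℝ, ∀ s ∈ Ioo (0 : ℝ) 1, |s - t| < ε → |f s| ≤ M

/-- A sequence of real random variables is stochastically bounded (`O_p(1)`). -/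
def StochasticallyBounded {Ω : Type*} [MeasurableSpace Ω] (P : Measure Ω)
    (Z : ℕ → Ω → ℝ) : Prop :=
  ∀ ε : ℝ, 0 < ε → ∃ M : ℝ,
    Filter.limsup (fun n => P {ω | M < |Z n ω|}) Filter.atTop ≤ ENNReal.ofReal ε

/-- Convergence in probability to `0`. -/
def TendstoInProbZero {Ω : Type*} [MeasurableSpace Ω] (P : Measure Ω)
    (Z : ℕ → Ω → ℝ) : Prop :=
  ∀ ε : ℝ, 0 < ε → Filter.Tendsto (fun n => P {ω | ε < |Z n ω|}) Filter.atTop (nhds 0)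

/-- `(γ, σ) ∈ (-1/2, ∞) × (0, ∞)` solves the generalized Pareto likelihood equations
for sample size `n` and threshold index `k` at the point `ω`, where `Xord n i` is the
`i`-th order statistic `X_{i,n}`. -/
def SolvesMLE {Ω : Type*} (Xord : ℕ → ℕ → Ω → ℝ) (n k : ℕ) (γ σ : ℝ) (ω : Ω) : Prop :=
  -(1 / 2) < γ ∧ 0 < σ ∧
  (γ ≠ 0 →
    ((1 / (k : ℝ)) * ∑ i ∈ Finset.Icc 1 k,
        Real.log (1 + γ / σ * (Xord n (n - i + 1) ω - Xord n (n - k) ω)) = γ ∧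
      (1 / (k : ℝ)) * ∑ i ∈ Finset.Icc 1 k,
        (1 + γ / σ * (Xord n (n - i + 1) ω - Xord n (n - k) ω))⁻¹ = 1 / (γ + 1))) ∧
  (γ = 0 →
    ((∑ i ∈ Finset.Icc 1 k,
        ((1 / 2) * ((Xord n (n - i + 1) ω - Xord n (n - k) ω) / σ) ^ 2
          - (Xord n (n - i + 1) ω - Xord n (n - k) ω) / σ)) = 0 ∧
      (∑ i ∈ Finset.Icc 1 k, (Xord n (n - i + 1) ω - Xord n (n - k) ω) / σ) = (k : ℝ)))


section AuxLemmas

/-- From the first-order condition (`γ₀ = 0`), the scale ratio `a(t/2)/a(t) → 1`. -/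
lemma aux_ratio_tendsto (q a : ℝ → ℝ)
    (ha_pos : ∀ t ∈ Ioo (0:ℝ) 1, 0 < a t)
    (h1 : ∀ x : ℝ, 0 < x → Tendsto (fun t => (q (1 - t*x) - q (1-t)) / a t)
      (nhdsWithin 0 (Ioi 0)) (nhds (- Real.log x))) :
    Tendsto (fun t => a (t/2) / a t) (nhdsWithin 0 (Ioi 0)) (nhds 1) := by
  have hhalf : Tendsto (fun t : ℝ => t/2) (nhdsWithin 0 (Ioi 0)) (nhdsWithin 0 (Ioi 0)) := by
    rw [tendsto_nhdsWithin_iff]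
    constructor
    · have h : Tendsto (fun t : ℝ => t/2) (nhds 0) (nhds (0/2)) :=
        (continuous_id.div_const (2:ℝ)).tendsto (0:ℝ)
      norm_num at h
      exact h.mono_left nhdsWithin_le_nhds
    · filter_upwards [self_mem_nhdsWithin] with t (ht : t ∈ Ioi (0:ℝ))
      exact half_pos (show (0:ℝ) < t from ht)
  have hlogfact : -Real.log (1/4) - -Real.log (1/2) = Real.log 2 := by
    rw [one_div, one_div, Real.log_inv, Real.log_inv,
      show (4:ℝ) = 2*2 by norm_num, Real.log_mul two_ne_zero two_ne_zero]
    ring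
  -- g t = (q(1-t/4) - q(1-t/2))/a t → log 2
  have hg : Tendsto (fun t => (q (1 - t/4) - q (1 - t/2)) / a t)
      (nhdsWithin 0 (Ioi 0)) (nhds (Real.log 2)) := by
    have h4 := h1 (1/4) (by norm_num)
    have h2 := h1 (1/2) (by norm_num)
    have hsub := h4.sub h2
    rw [hlogfact] at hsub
    have heq : (fun t => (q (1 - t*(1/4)) - q (1-t)) / a t - (q (1 - t*(1/2)) - q (1-t)) / a t)
        = fun t => (q (1 - t/4) - q (1 - t/2)) / a t := by
      funext t
      rw [div_sub_div_same]
      ring_nf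
    rwa [heq] at hsub
  -- f t = (q(1-t/4) - q(1-t/2))/a (t/2) → log 2
  have hf : Tendsto (fun t => (q (1 - t/4) - q (1 - t/2)) / a (t/2))
      (nhdsWithin 0 (Ioi 0)) (nhds (Real.log 2)) := by
    have h2 := (h1 (1/2) (by norm_num)).comp hhalf
    have heq : ∀ t : ℝ, (q (1 - t/2*(1/2)) - q (1-t/2)) / a (t/2)
        = (q (1 - t/4) - q (1 - t/2)) / a (t/2) := by
      intro t; ring_nf
    have h3 := h2.congr heq
    have : -Real.log (1/2) = Real.log 2 := by
      rw [one_div, Real.log_inv]; ring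
    rwa [this] at h3
  have hlog2 : (0:ℝ) < Real.log 2 := Real.log_pos (by norm_num)
  have key : Tendsto (fun t => ((q (1 - t/4) - q (1 - t/2)) / a t) /
      ((q (1 - t/4) - q (1 - t/2)) / a (t/2))) (nhdsWithin 0 (Ioi 0)) (nhds 1) := by
    have h := hg.div hf hlog2.ne'
    rw [div_self hlog2.ne'] at h
    exact h
  refine key.congr' ?_
  have hIoo : Ioo (0:ℝ) 1 ∈ nhdsWithin (0:ℝ) (Ioi 0) :=
    (nhdsGT_basis (0:ℝ)).mem_of_mem one_pos
  filter_upwards [hIoo, hf.eventually_const_lt hlog2] with t ht hft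
  have hat : 0 < a t := ha_pos t ht
  have hat2 : 0 < a (t/2) := ha_pos (t/2) ⟨half_pos ht.1, by linarith [ht.2]⟩
  have hc : 0 < q (1 - t/4) - q (1 - t/2) := by
    by_contra hle
    push_neg at hle
    have h0 : (q (1 - t/4) - q (1 - t/2)) / a (t/2) ≤ 0 := div_nonpos_of_nonpos_of_nonneg hle hat2.le
    linarith
  show (q (1 - t/4) - q (1 - t/2)) / a t / ((q (1 - t/4) - q (1 - t/2)) / a (t/2)) = a (t/2) / a t
  rw [div_div_div_comm, div_self hc.ne', one_div, inv_div]

/-- Dyadic growth bound for a `Π`-varying quantile function (case `γ₀ = 0`). -/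
lemma aux_growth (q a : ℝ → ℝ)
    (ha_pos : ∀ t ∈ Ioo (0:ℝ) 1, 0 < a t)
    (h1 : ∀ x : ℝ, 0 < x → Tendsto (fun t => (q (1 - t*x) - q (1-t)) / a t)
      (nhdsWithin 0 (Ioi 0)) (nhds (- Real.log x))) :
    ∃ t₀ : ℝ, 0 < t₀ ∧ t₀ < 1/2 ∧ ∀ t : ℝ, 0 < t → 2*t ≤ t₀ → ∀ m : ℕ,
      q (1 - t/2^m) - q (1 - 2*t) ≤ 16 * (9/8)^m * a t := by
  have hrat := aux_ratio_tendsto q a ha_pos h1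
  have hhalf := h1 (1/2) (by norm_num)
  have hlog2 : Real.log 2 < 1 := by
    have := Real.log_lt_sub_one_of_pos (by norm_num : (0:ℝ) < 2) (by norm_num)
    linarith
  -- collect eventual properties
  have hev : ∀ᶠ s in nhdsWithin (0:ℝ) (Ioi 0),
      (q (1 - s/2) - q (1 - s) ≤ a s) ∧ a (s/2) ≤ (9/8) * a s ∧ (7/8) * a s ≤ a (s/2)
        ∧ s ∈ Ioo (0:ℝ) 1 := by
    have e1 : ∀ᶠ s in nhdsWithin (0:ℝ) (Ioi 0), (q (1 - s*(1/2)) - q (1 - s)) / a s < 1 := by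
      apply hhalf.eventually_lt_const
      rw [one_div, Real.log_inv]; linarith
    have e2 : ∀ᶠ s in nhdsWithin (0:ℝ) (Ioi 0), a (s/2) / a s < 9/8 :=
      hrat.eventually_lt_const (by norm_num)
    have e3 : ∀ᶠ s in nhdsWithin (0:ℝ) (Ioi 0), (7/8 : ℝ) < a (s/2) / a s :=
      hrat.eventually_const_lt (by norm_num)
    have e4 : Ioo (0:ℝ) 1 ∈ nhdsWithin (0:ℝ) (Ioi 0) :=
      (nhdsGT_basis (0:ℝ)).mem_of_mem one_pos
    filter_upwards [e1, e2, e3, e4] with s h1' h2' h3' h4'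
    have has : 0 < a s := ha_pos s h4'
    refine ⟨?_, ?_, ?_, h4'⟩
    · have := (div_lt_one has).mp (by simpa [mul_one_div] using h1')
      calc q (1 - s/2) - q (1 - s) = q (1 - s*(1/2)) - q (1 - s) := by ring_nf
        _ ≤ a s := by
          have := (div_lt_one has).mp h1'
          linarith [this]
    · exact le_of_lt ((div_lt_iff₀ has).mp h2')
    · exact le_of_lt ((lt_div_iff₀ has).mp h3')
  rw [(nhdsGT_basis (0:ℝ)).eventually_iff] at hev
  obtain ⟨t₁, ht₁pos, ht₁⟩ := hev
  set t₀ : ℝ := min (t₁/2) (1/4) with ht₀def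
  have ht₀pos : 0 < t₀ := lt_min (half_pos ht₁pos) (by norm_num)
  have ht₀lt : t₀ < 1/2 := lt_of_le_of_lt (min_le_right _ _) (by norm_num)
  have hprop : ∀ s : ℝ, 0 < s → s ≤ t₀ →
      (q (1 - s/2) - q (1 - s) ≤ a s) ∧ a (s/2) ≤ (9/8) * a s ∧ (7/8) * a s ≤ a (s/2)
        ∧ s ∈ Ioo (0:ℝ) 1 := by
    intro s hs hs'
    refine ht₁ ⟨hs, ?_⟩
    calc s ≤ t₀ := hs'
      _ ≤ t₁/2 := min_le_left _ _
      _ < t₁ := half_lt_self ht₁pos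
  -- a (s/2^m) ≤ (9/8)^m * a s for s ∈ (0, t₀]
  have hstep : ∀ s : ℝ, 0 < s → s ≤ t₀ → ∀ m : ℕ, a (s/2^m) ≤ (9/8)^m * a s := by
    intro s hs hs'
    intro m
    induction m with
    | zero => simp
    | succ m ih =>
      have hsm : 0 < s/2^m := by positivity
      have hsm' : s/2^m ≤ t₀ := le_trans (by
        apply div_le_self hs.le
        exact one_le_pow₀ (by norm_num)) hs'
      have h2 := (hprop (s/2^m) hsm hsm').2.1
      have : s/2^(m+1) = (s/2^m)/2 := by ring
      rw [this]
      calc a ((s/2^m)/2) ≤ (9/8) * a (s/2^m) := h2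
        _ ≤ (9/8) * ((9/8)^m * a s) := by
            have := ha_pos s (hprop s hs hs').2.2.2
            nlinarith [ih]
        _ = (9/8)^(m+1) * a s := by ring
  -- telescoping bound from base s
  have htel : ∀ s : ℝ, 0 < s → s ≤ t₀ → ∀ m : ℕ,
      q (1 - s/2^m) - q (1 - s) ≤ 8 * (9/8)^m * a s := by
    intro s hs hs' m
    induction m with
    | zero =>
      simp only [pow_zero, div_one, sub_self]
      have := ha_pos s (hprop s hs hs').2.2.2
      nlinarith
    | succ m ih =>
      have hsm : 0 < s/2^m := by positivity
      have hsm' : s/2^m ≤ t₀ := le_trans (by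
        apply div_le_self hs.le
        exact one_le_pow₀ (by norm_num)) hs'
      have h1' := (hprop (s/2^m) hsm hsm').1
      have h2' := hstep s hs hs' m
      have heq : (1 : ℝ) - s/2^(m+1) = 1 - (s/2^m)/2 := by ring
      have has : 0 < a s := ha_pos s (hprop s hs hs').2.2.2
      have key : q (1 - s/2^(m+1)) - q (1 - s)
          = (q (1 - (s/2^m)/2) - q (1 - s/2^m)) + (q (1 - s/2^m) - q (1 - s)) := by
        rw [heq]; ring
      rw [key]
      have hb : q (1 - (s/2^m)/2) - q (1 - s/2^m) ≤ (9/8)^m * a s := le_trans h1' h2'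
      calc (q (1 - (s/2^m)/2) - q (1 - s/2^m)) + (q (1 - s/2^m) - q (1 - s))
          ≤ (9/8)^m * a s + 8 * (9/8)^m * a s := add_le_add hb ih
        _ = 8 * (9/8)^(m+1) * a s := by ring
  refine ⟨t₀, ht₀pos, ht₀lt, ?_⟩
  intro t ht ht2 m
  have h2t : 0 < 2*t := by linarith
  have h2t' : 2*t ≤ t₀ := ht2
  have hbase := htel (2*t) h2t h2t' (m+1)
  have heq : (1:ℝ) - (2*t)/2^(m+1) = 1 - t/2^m := by ring
  rw [heq] at hbase
  have hratio := (hprop (2*t) h2t h2t').2.2.1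
  have hmem := (hprop (2*t) h2t h2t').2.2.2
  have ha2t : 0 < a (2*t) := ha_pos _ hmem
  have hat : 0 < a t := by
    have : (2*t)/2 = t := by ring
    have h := (hprop (2*t) h2t h2t').2.2.1
    rw [this] at h
    nlinarith
  have ha2t_le : a (2*t) ≤ (8/7) * a t := by
    have : (2*t)/2 = t := by ring
    rw [this] at hratio
    linarith
  calc q (1 - t/2^m) - q (1 - 2*t) ≤ 8 * (9/8)^(m+1) * a (2*t) := hbase
    _ ≤ 8 * (9/8)^(m+1) * ((8/7) * a t) := by
        have : (0:ℝ) < 8 * (9/8)^(m+1) := by positivity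
        nlinarith
    _ ≤ 16 * (9/8)^m * a t := by
        have hp : (0:ℝ) < (9/8)^m := by positivity
        rw [pow_succ]
        nlinarith [mul_pos hp hat]


lemma aux_quantile_setEq (μ : Measure ℝ) [IsProbabilityMeasure μ] (p : ℝ) :
    {x | p ≤ (μ (Iic x)).toReal} = {x | p ≤ cdf μ x} := by
  ext x; simp [cdf_eq_real, measureReal_def]

lemma aux_quantile_Iic (μ : Measure ℝ) [IsProbabilityMeasure μ] {p : ℝ}
    (hp0 : 0 < p) (hp1 : p < 1) :
    ENNReal.ofReal p ≤ μ (Iic (sInf {x | p ≤ (μ (Iic x)).toReal})) := by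
  rw [aux_quantile_setEq]
  set S := {x | p ≤ cdf μ x} with hS
  set Q := sInf S with hQ
  have hne : S.Nonempty := by
    obtain ⟨x, hx⟩ := ((tendsto_cdf_atTop μ).eventually_const_lt hp1).exists
    exact ⟨x, hx.le⟩
  have hbdd : BddBelow S := by
    obtain ⟨x₀, hx₀⟩ := ((tendsto_cdf_atBot μ).eventually_lt_const hp0).exists
    refine ⟨x₀, fun y hy => ?_⟩
    by_contra hlt
    push_neg at hlt
    exact absurd (le_trans hy (monotone_cdf μ hlt.le)) (not_le.2 hx₀)
  have hup : ∀ x, Q < x → p ≤ cdf μ x := by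
    intro x hx
    obtain ⟨s, hsS, hs⟩ := csInf_lt_iff hbdd hne |>.mp hx
    exact le_trans hsS (monotone_cdf μ hs.le)
  have hcont : Tendsto (cdf μ) (nhdsWithin Q (Ioi Q)) (nhds (cdf μ Q)) :=
    ((cdf μ).right_continuous Q).mono_left (nhdsWithin_mono Q Ioi_subset_Ici_self)
  have hple : p ≤ cdf μ Q := by
    refine ge_of_tendsto hcont ?_
    filter_upwards [self_mem_nhdsWithin] with x hx
    exact hup x hx
  calc ENNReal.ofReal p ≤ ENNReal.ofReal (cdf μ Q) := ENNReal.ofReal_le_ofReal hple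
    _ = μ (Iic Q) := ofReal_cdf μ Q

lemma aux_quantile_Iio (μ : Measure ℝ) [IsProbabilityMeasure μ] {p : ℝ}
    (hp0 : 0 < p) (hp1 : p < 1) :
    μ (Iio (sInf {x | p ≤ (μ (Iic x)).toReal})) ≤ ENNReal.ofReal p := by
  rw [aux_quantile_setEq]
  set S := {x | p ≤ cdf μ x} with hS
  set Q := sInf S with hQ
  have hbdd : BddBelow S := by
    obtain ⟨x₀, hx₀⟩ := ((tendsto_cdf_atBot μ).eventually_lt_const hp0).exists
    refine ⟨x₀, fun y hy => ?_⟩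
    by_contra hlt
    push_neg at hlt
    exact absurd (le_trans hy (monotone_cdf μ hlt.le)) (not_le.2 hx₀)
  have hlow : ∀ x, x < Q → cdf μ x < p := by
    intro x hx
    by_contra hge
    push_neg at hge
    exact absurd (csInf_le hbdd hge) (not_le.2 hx)
  have hunion : Iio Q = ⋃ n : ℕ, Iic (Q - 1/(n+1)) := by
    ext x
    simp only [mem_Iio, mem_iUnion, mem_Iic]
    constructor
    · intro hx
      obtain ⟨n, hn⟩ := exists_nat_one_div_lt (sub_pos.2 hx)
      exact ⟨n, by linarith⟩
    · rintro ⟨n, hn⟩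
      have : (0:ℝ) < 1/(n+1) := by positivity
      linarith
  rw [hunion]
  have hkey : ∀ m n : ℕ, m ≤ n → Q - 1/((m:ℝ)+1) ≤ Q - 1/((n:ℝ)+1) := by
    intro m n h
    have hm : (0:ℝ) < (m:ℝ)+1 := by positivity
    have : ((m:ℝ)+1) ≤ (n:ℝ)+1 := by exact_mod_cast Nat.succ_le_succ h
    have := one_div_le_one_div_of_le hm this
    linarith
  have hdir : Directed (· ⊆ ·) (fun n : ℕ => Iic (Q - 1/((n:ℝ)+1))) := by
    intro m n
    exact ⟨max m n, Iic_subset_Iic.2 (hkey _ _ (le_max_left m n)),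
      Iic_subset_Iic.2 (hkey _ _ (le_max_right m n))⟩
  rw [hdir.measure_iUnion]
  refine iSup_le fun n => ?_
  have hlt : Q - 1/((n:ℝ)+1) < Q := by
    have : (0:ℝ) < 1/((n:ℝ)+1) := by positivity
    linarith
  have := (hlow _ hlt).le
  calc μ (Iic (Q - 1/((n:ℝ)+1))) = ENNReal.ofReal (cdf μ (Q - 1/((n:ℝ)+1))) :=
        (ofReal_cdf μ _).symm
    _ ≤ ENNReal.ofReal p := ENNReal.ofReal_le_ofReal this


lemma aux_count {Ω : Type*} [MeasurableSpace Ω] (P : Measure Ω) [IsProbabilityMeasure P]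
    (X : ℕ → Ω → ℝ) (hX_meas : ∀ i, Measurable (X i))
    (hX_indep : iIndepFun X P)
    (hX_ident : ∀ i, IdentDistrib (X i) (X 1) P P)
    (n k : ℕ) (hk1 : 1 ≤ k) (hn : 0 < n) (v : ℝ)
    (hp : ENNReal.ofReal (2*(k:ℝ)/(n:ℝ)) ≤ (P.map (X 1)) (Ici v)) :
    P {ω | (((Finset.Icc 1 n).filter (fun i => v ≤ X i ω)).card : ℝ) ≤ (k:ℝ)}
      ≤ ENNReal.ofReal (2/(k:ℝ)) := by
  classical
  set μ : Measure ℝ := P.map (X 1) with hμ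
  have hμprob : IsProbabilityMeasure μ := Measure.isProbabilityMeasure_map (hX_meas 1).aemeasurable
  set φ : ℝ → ℝ := (Ici v).indicator (fun _ => 1) with hφdef
  have hφ : Measurable φ := measurable_const.indicator measurableSet_Ici
  set pr : ℝ := (μ (Ici v)).toReal with hpr
  have hμfin : μ (Ici v) ≠ ⊤ := measure_ne_top μ _
  have hpr0 : 0 ≤ pr := ENNReal.toReal_nonneg
  have hprlb : 2*(k:ℝ)/(n:ℝ) ≤ pr :=
    (ENNReal.ofReal_le_iff_le_toReal hμfin).mp hp
  have hnpr : 2*(k:ℝ) ≤ (n:ℝ) * pr := by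
    have hn' : (0:ℝ) < n := by exact_mod_cast hn
    rw [div_le_iff₀ hn'] at hprlb
    linarith
  have hk' : (0:ℝ) < k := by exact_mod_cast hk1
  -- the random variables
  set Y : ℕ → Ω → ℝ := fun i => φ ∘ X i with hY
  have hYmeas : ∀ i, Measurable (Y i) := fun i => hφ.comp (hX_meas i)
  have hYbdd : ∀ i, ∀ ω, ‖Y i ω‖ ≤ 1 := by
    intro i ω
    rw [hY]
    simp only [Function.comp_apply, hφdef, indicator_apply]
    split <;> simp
  have hYmem : ∀ i, MemLp (Y i) 2 P := fun i =>
    MemLp.of_bound (hYmeas i).aestronglyMeasurable 1 (Eventually.of_forall (hYbdd i))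
  have hYint : ∀ i, Integrable (Y i) P := fun i => (hYmem i).integrable one_le_two
  -- expectation of each Y i
  have hYexp : ∀ i, P[Y i] = pr := by
    intro i
    have h1 : P[Y i] = ∫ x, φ x ∂(P.map (X i)) :=
      (integral_map (hX_meas i).aemeasurable hφ.aestronglyMeasurable).symm
    rw [h1, (hX_ident i).map_eq, ← hμ]
    rw [hφdef]
    rw [integral_indicator_const (1:ℝ) measurableSet_Ici]
    simp [hpr, measureReal_def]
  -- variance of each Y i
  have hYsq : ∀ i, (Y i)^2 = Y i := by
    intro i
    funext ω
    simp only [Pi.pow_apply, hY, Function.comp_apply, hφdef, indicator_apply]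
    split <;> norm_num
  have hYvar : ∀ i, variance (Y i) P ≤ pr := by
    intro i
    rw [variance_eq_sub (hYmem i), hYsq i, hYexp i]
    nlinarith [sq_nonneg pr]
  have hYvar0 : ∀ i, 0 ≤ variance (Y i) P := fun i => variance_nonneg _ _
  -- sum
  set N : Ω → ℝ := ∑ i ∈ Finset.Icc 1 n, Y i with hN
  have hNmem : MemLp N 2 P := memLp_finset_sum' _ (fun i _ => hYmem i)
  have hNexp : P[N] = (n:ℝ) * pr := by
    rw [hN]
    show ∫ ω, (∑ i ∈ Finset.Icc 1 n, Y i) ω ∂P = (n:ℝ) * pr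
    simp_rw [Finset.sum_apply]
    rw [integral_finset_sum _ (fun i _ => hYint i)]
    simp only [hYexp]
    rw [Finset.sum_const, Nat.card_Icc]
    simp [nsmul_eq_mul]
  have hNvar : variance N P ≤ (n:ℝ) * pr := by
    rw [hN, IndepFun.variance_sum (fun i _ => hYmem i)
      (fun i _ j _ hij => ((hX_indep.indepFun hij).comp hφ hφ))]
    calc ∑ i ∈ Finset.Icc 1 n, variance (Y i) P ≤ ∑ _i ∈ Finset.Icc 1 n, pr :=
          Finset.sum_le_sum (fun i _ => hYvar i)
      _ = (n:ℝ) * pr := by rw [Finset.sum_const, Nat.card_Icc]; simp [nsmul_eq_mul]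
  -- Chebyshev
  set c : ℝ := (n:ℝ) * pr - (k:ℝ) with hc
  have hcpos : 0 < c := by rw [hc]; linarith
  have hcheb := meas_ge_le_variance_div_sq hNmem hcpos
  -- inclusion of events
  have hsub : {ω | (((Finset.Icc 1 n).filter (fun i => v ≤ X i ω)).card : ℝ) ≤ (k:ℝ)}
      ⊆ {ω | c ≤ |N ω - P[N]|} := by
    intro ω hω
    simp only [mem_setOf_eq] at hω ⊢
    have hNval : N ω = (((Finset.Icc 1 n).filter (fun i => v ≤ X i ω)).card : ℝ) := by
      rw [hN, Finset.sum_apply]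
      rw [Finset.card_filter]
      push_cast
      refine Finset.sum_congr rfl (fun i _ => ?_)
      simp only [hY, Function.comp_apply, hφdef, indicator_apply, mem_Ici]
    have hle : N ω ≤ (k:ℝ) := by rw [hNval]; exact hω
    rw [hNexp]
    rw [abs_sub_comm, abs_of_nonneg (by rw [hc] at *; linarith)]
    rw [hc]; linarith
  calc P {ω | (((Finset.Icc 1 n).filter (fun i => v ≤ X i ω)).card : ℝ) ≤ (k:ℝ)}
      ≤ P {ω | c ≤ |N ω - P[N]|} := measure_mono hsub
    _ ≤ ENNReal.ofReal (variance N P / c^2) := hcheb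
    _ ≤ ENNReal.ofReal (2/(k:ℝ)) := by
        apply ENNReal.ofReal_le_ofReal
        rw [div_le_div_iff₀ (by positivity) hk']
        have h1 : (k:ℝ) ≤ c := by rw [hc]; linarith
        have h2 : (n:ℝ) * pr ≤ 2 * c := by rw [hc]; linarith
        nlinarith [hNvar, hYvar0, hcpos, variance_nonneg N P]


lemma aux_max {Ω : Type*} [MeasurableSpace Ω] (P : Measure Ω) [IsProbabilityMeasure P]
    (X : ℕ → Ω → ℝ) (hX_meas : ∀ i, Measurable (X i))
    (hX_ident : ∀ i, IdentDistrib (X i) (X 1) P P)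
    (Xord : ℕ → ℕ → Ω → ℝ)
    (hord_perm : ∀ n ω, Multiset.map (fun i => Xord n i ω) (Finset.Icc 1 n).val =
      Multiset.map (fun i => X i ω) (Finset.Icc 1 n).val)
    (n : ℕ) (hn : 1 ≤ n) (u : ℝ) :
    P {ω | u < Xord n n ω} ≤ (n : ENNReal) * (P.map (X 1)) (Ioi u) := by
  classical
  have hsub : {ω | u < Xord n n ω} ⊆ ⋃ i ∈ Finset.Icc 1 n, {ω | u < X i ω} := by
    intro ω hω
    have hmem : Xord n n ω ∈ Multiset.map (fun i => Xord n i ω) (Finset.Icc 1 n).val :=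
      Multiset.mem_map.2 ⟨n, by simp [Finset.mem_Icc, hn], rfl⟩
    rw [hord_perm n ω] at hmem
    obtain ⟨i, hi, hXi⟩ := Multiset.mem_map.1 hmem
    refine mem_iUnion₂.2 ⟨i, hi, ?_⟩
    simp only [mem_setOf_eq]
    rw [hXi]
    exact hω
  calc P {ω | u < Xord n n ω} ≤ ∑ i ∈ Finset.Icc 1 n, P {ω | u < X i ω} :=
        le_trans (measure_mono hsub) (measure_biUnion_finset_le _ _)
    _ = ∑ _i ∈ Finset.Icc 1 n, (P.map (X 1)) (Ioi u) := by
        refine Finset.sum_congr rfl (fun i _ => ?_)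
        have : {ω | u < X i ω} = (X i)⁻¹' (Ioi u) := rfl
        rw [this, ← Measure.map_apply (hX_meas i) measurableSet_Ioi, (hX_ident i).map_eq]
    _ = (n : ENNReal) * (P.map (X 1)) (Ioi u) := by
        rw [Finset.sum_const, Nat.card_Icc]
        simp [nsmul_eq_mul]

lemma aux_ord_count {Ω : Type*} (X : ℕ → Ω → ℝ) (Xord : ℕ → ℕ → Ω → ℝ)
    (hord_mono : ∀ n ω, ∀ i j, 1 ≤ i → i ≤ j → j ≤ n → Xord n i ω ≤ Xord n j ω)
    (hord_perm : ∀ n ω, Multiset.map (fun i => Xord n i ω) (Finset.Icc 1 n).val =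
      Multiset.map (fun i => X i ω) (Finset.Icc 1 n).val)
    (n k : ℕ) (hk : 1 ≤ k) (hkn : k + 1 ≤ n) (ω : Ω) (v : ℝ)
    (h : Xord n (n - k) ω < v) :
    (((Finset.Icc 1 n).filter (fun i => v ≤ X i ω)).card : ℝ) ≤ (k : ℝ) := by
  classical
  have hcount : ((Finset.Icc 1 n).filter (fun i => v ≤ X i ω)).card
      = ((Finset.Icc 1 n).filter (fun i => v ≤ Xord n i ω)).card := by
    have h1 : Multiset.countP (fun x => v ≤ x)
        (Multiset.map (fun i => X i ω) (Finset.Icc 1 n).val)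
        = Multiset.countP (fun x => v ≤ x)
        (Multiset.map (fun i => Xord n i ω) (Finset.Icc 1 n).val) := by
      rw [hord_perm n ω]
    rw [Multiset.countP_map, Multiset.countP_map] at h1
    simpa [Finset.card, Finset.filter_val] using h1
  rw [hcount]
  have hsub : (Finset.Icc 1 n).filter (fun i => v ≤ Xord n i ω) ⊆ Finset.Ioc (n - k) n := by
    intro i hi
    rw [Finset.mem_filter, Finset.mem_Icc] at hi
    rw [Finset.mem_Ioc]
    refine ⟨?_, hi.1.2⟩
    by_contra hle
    push_neg at hle
    have := hord_mono n ω i (n - k) hi.1.1 hle (Nat.sub_le n k)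
    linarith [hi.2]
  have hcard : ((Finset.Icc 1 n).filter (fun i => v ≤ Xord n i ω)).card ≤ k := by
    calc ((Finset.Icc 1 n).filter (fun i => v ≤ Xord n i ω)).card
        ≤ (Finset.Ioc (n - k) n).card := Finset.card_le_card hsub
      _ = n - (n - k) := Nat.card_Ioc _ _
      _ = k := by omega
  exact_mod_cast hcard

end AuxLemmas

set_option maxHeartbeats 1000000 in
/-- **Lemma 3.2 (case `γ₀ = 0`, lower bound).** Under the second-order condition with
index `γ₀ = 0` and `Φ(k_n/n) = O(k_n^{-1/2})`, for any random sequence `r_n` with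
`k_n^{1/2}|r_n| = O_p(1)`, with probability tending to one
`1 + r_n (X_{n-⌊k_n t⌋,n} - X_{n-k_n,n})/a(k_n/n) ≥ 1/2` for all `t ∈ [1/(2k_n), 1]`. -/
theorem excess_ratio_lower_bound_gamma_zero
    {Ω : Type*} [MeasurableSpace Ω] (P : Measure Ω) [IsProbabilityMeasure P]
    (X : ℕ → Ω → ℝ) (hX_meas : ∀ i, Measurable (X i))
    (hX_indep : iIndepFun X P)
    (hX_ident : ∀ i, IdentDistrib (X i) (X 1) P P)
    (Xord : ℕ → ℕ → Ω → ℝ)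
    (hord_mono : ∀ n ω, ∀ i j, 1 ≤ i → i ≤ j → j ≤ n → Xord n i ω ≤ Xord n j ω)
    (hord_perm : ∀ n ω, Multiset.map (fun i => Xord n i ω) (Finset.Icc 1 n).val =
      Multiset.map (fun i => X i ω) (Finset.Icc 1 n).val)
    (ρ : ℝ) (hρ : ρ ≤ 0)
    (a Φ : ℝ → ℝ) (ha_meas : Measurable a) (hΦ_meas : Measurable Φ)
    (ha_pos : ∀ t ∈ Ioo (0 : ℝ) 1, 0 < a t) (hΦ_pos : ∀ t ∈ Ioo (0 : ℝ) 1, 0 < Φ t)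
    (ha_loc : LocallyBddOn01 a) (hΦ_loc : LocallyBddOn01 Φ)
    (hΦ0 : Tendsto Φ (nhdsWithin 0 (Ioi 0)) (nhds 0))
    (h2nd : ∀ x : ℝ, 0 < x →
      Tendsto (fun t => ((qtFun P (X 1) (1 - t * x) - qtFun P (X 1) (1 - t)) / a t
          + Real.log x) / Φ t)
        (nhdsWithin 0 (Ioi 0)) (nhds (PsiFun 0 ρ x)))
    (k : ℕ → ℕ) (hk_top : Tendsto (fun n => (k n : ℝ)) atTop atTop)
    (hk_small : Tendsto (fun n => (k n : ℝ) / (n : ℝ)) atTop (nhds 0))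
    (hΦk : (fun n => Φ ((k n : ℝ) / (n : ℝ))) =O[atTop]
      fun n => ((k n : ℝ)) ^ (-(1 / 2) : ℝ))
    (r : ℕ → Ω → ℝ) (hr_meas : ∀ n, Measurable (r n))
    (hr_bdd : StochasticallyBounded P (fun n ω => Real.sqrt (k n) * |r n ω|)) :
    Tendsto (fun n => P {ω | ∀ t ∈ Icc (1 / (2 * (k n : ℝ))) 1,
        (1 : ℝ) / 2 ≤
          1 + r n ω * (Xord n (n - ⌊(k n : ℝ) * t⌋₊) ω - Xord n (n - k n) ω) /
            a ((k n : ℝ) / (n : ℝ))}) atTop (nhds 1) := by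
  classical
  set μ : Measure ℝ := P.map (X 1) with hμdef
  have hμprob : IsProbabilityMeasure μ := Measure.isProbabilityMeasure_map (hX_meas 1).aemeasurable
  set q : ℝ → ℝ := qtFun P (X 1) with hqdef
  -- identification of the quantile function with the measure-level one
  have hdist : ∀ x : ℝ, distFun P (X 1) x = (μ (Iic x)).toReal := by
    intro x
    unfold distFun
    rw [hμdef, Measure.map_apply (hX_meas 1) measurableSet_Iic]
    rfl
  have hqeq : ∀ p : ℝ, q p = sInf {x | p ≤ (μ (Iic x)).toReal} := by
    intro p
    rw [hqdef]
    unfold qtFun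
    congr 1
    ext x
    simp only [mem_setOf_eq, hdist x]
  -- tail bounds at quantiles
  have hIoiQ : ∀ p : ℝ, 0 < p → p < 1 → μ (Ioi (q p)) ≤ ENNReal.ofReal (1 - p) := by
    intro p hp0 hp1
    have h1 : ENNReal.ofReal p ≤ μ (Iic (q p)) := by
      rw [hqeq]; exact aux_quantile_Iic μ hp0 hp1
    have h2 : μ (Ioi (q p)) = 1 - μ (Iic (q p)) := by
      rw [← compl_Iic, measure_compl measurableSet_Iic (measure_ne_top μ _), measure_univ]
    rw [h2]
    calc (1:ENNReal) - μ (Iic (q p)) ≤ 1 - ENNReal.ofReal p := tsub_le_tsub_left h1 1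
      _ = ENNReal.ofReal (1 - p) := by
          rw [ENNReal.ofReal_sub 1 hp0.le, ENNReal.ofReal_one]
  have hIciQ : ∀ p : ℝ, 0 < p → p < 1 → ENNReal.ofReal (1 - p) ≤ μ (Ici (q p)) := by
    intro p hp0 hp1
    have h1 : μ (Iio (q p)) ≤ ENNReal.ofReal p := by
      rw [hqeq]; exact aux_quantile_Iio μ hp0 hp1
    have h2 : μ (Ici (q p)) = 1 - μ (Iio (q p)) := by
      rw [← compl_Iio, measure_compl measurableSet_Iio (measure_ne_top μ _), measure_univ]
    rw [h2]
    calc ENNReal.ofReal (1 - p) = 1 - ENNReal.ofReal p := by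
          rw [ENNReal.ofReal_sub 1 hp0.le, ENNReal.ofReal_one]
      _ ≤ 1 - μ (Iio (q p)) := tsub_le_tsub_left h1 1
  -- first-order condition
  have hfo : ∀ x : ℝ, 0 < x → Tendsto (fun t => (q (1 - t*x) - q (1-t)) / a t)
      (nhdsWithin 0 (Ioi 0)) (nhds (- Real.log x)) := by
    intro x hx
    have hmul := (h2nd x hx).mul hΦ0
    rw [mul_zero] at hmul
    have hIoo : Ioo (0:ℝ) 1 ∈ nhdsWithin (0:ℝ) (Ioi 0) :=
      (nhdsGT_basis (0:ℝ)).mem_of_mem one_pos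
    have hcongr : Tendsto (fun t => (q (1 - t*x) - q (1-t)) / a t + Real.log x)
        (nhdsWithin 0 (Ioi 0)) (nhds 0) := by
      refine hmul.congr' ?_
      filter_upwards [hIoo] with t ht
      rw [div_mul_cancel₀]
      exact (hΦ_pos t ht).ne'
    have := hcongr.sub_const (Real.log x)
    simpa using this
  obtain ⟨t₀, ht₀pos, ht₀lt, hgrow⟩ := aux_growth q a ha_pos hfo
  -- the event
  set A : ℕ → Set Ω := fun n => {ω | ∀ t ∈ Icc (1 / (2 * (k n : ℝ))) 1,
      (1 : ℝ) / 2 ≤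
        1 + r n ω * (Xord n (n - ⌊(k n : ℝ) * t⌋₊) ω - Xord n (n - k n) ω) /
          a ((k n : ℝ) / (n : ℝ))} with hAdef
  show Tendsto (fun n => P (A n)) atTop (nhds 1)
  -- reduce to the complement tending to zero
  suffices hbad : Tendsto (fun n => P ((A n)ᶜ)) atTop (nhds 0) by
    have hlow : Tendsto (fun n => 1 - P ((A n)ᶜ)) atTop (nhds 1) := by
      have := ENNReal.Tendsto.sub (tendsto_const_nhds (x := (1:ENNReal)) (f := atTop)) hbad
        (Or.inl ENNReal.one_ne_top)
      simpa using this
    refine tendsto_of_tendsto_of_tendsto_of_le_of_le hlow tendsto_const_nhds ?_ ?_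
    · intro n
      rw [tsub_le_iff_right]
      calc (1:ENNReal) = P univ := (measure_univ (μ := P)).symm
        _ = P ((A n) ∪ (A n)ᶜ) := by rw [union_compl_self]
        _ ≤ P (A n) + P ((A n)ᶜ) := measure_union_le _ _
    · intro n
      exact prob_le_one
  -- complement tends to zero
  rw [ENNReal.tendsto_nhds_zero]
  intro ε hε
  -- choose δ
  obtain ⟨δ, hδ, hδε⟩ : ∃ δ : ℝ, 0 < δ ∧ ENNReal.ofReal (4*δ) ≤ ε := by
    rcases eq_or_ne ε ⊤ with h | h
    · exact ⟨1, one_pos, by simp [h]⟩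
    · have h8 : (0:ℝ) < ε.toReal := ENNReal.toReal_pos hε.ne' h
      refine ⟨ε.toReal/8, by linarith, ?_⟩
      · calc ENNReal.ofReal (4*(ε.toReal/8)) ≤ ENNReal.ofReal ε.toReal :=
              ENNReal.ofReal_le_ofReal (by linarith)
          _ = ε := ENNReal.ofReal_toReal h
  -- stochastic boundedness event
  obtain ⟨M₀, hM₀⟩ := hr_bdd δ hδ
  set M : ℝ := max M₀ 1 with hMdef
  have hMpos : (0:ℝ) < M := lt_of_lt_of_le one_pos (le_max_right _ _)
  set C : ℕ → Set Ω := fun n => {ω | M < Real.sqrt (k n) * |r n ω|} with hCdef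
  have hlimsupC : limsup (fun n => P (C n)) atTop ≤ ENNReal.ofReal δ := by
    refine le_trans (limsup_le_limsup ?_) hM₀
    refine Eventually.of_forall fun n => measure_mono fun ω hω => ?_
    simp only [hCdef, mem_setOf_eq] at hω ⊢
    have h1 : abs (Real.sqrt (k n) * |r n ω|) = Real.sqrt (k n) * |r n ω| :=
      abs_of_nonneg (by positivity)
    rw [h1]
    exact lt_of_le_of_lt (le_max_left _ _) hω
  have hCev : ∀ᶠ n in atTop, P (C n) < ENNReal.ofReal (2*δ) := by
    refine eventually_lt_of_limsup_lt (lt_of_le_of_lt hlimsupC ?_)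
    exact (ENNReal.ofReal_lt_ofReal_iff (by linarith)).2 (by linarith)
  -- deterministic quantities
  set v : ℕ → ℝ := fun n => q (1 - 2 * ((k n:ℝ)/(n:ℝ))) with hvdef
  set u : ℕ → ℝ := fun n =>
    v n + (Real.sqrt (k n)/(2*M)) * a ((k n:ℝ)/(n:ℝ)) with hudef
  set D : ℕ → Set Ω := fun n => {ω | u n < Xord n n ω} with hDdef
  set E : ℕ → Set Ω := fun n => {ω | Xord n (n - k n) ω < v n} with hEdef
  -- eventual facts
  have hn1 : ∀ᶠ n in atTop, 1 ≤ n := eventually_ge_atTop 1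
  have hk2 : ∀ᶠ n in atTop, (2:ℝ) ≤ (k n:ℝ) := hk_top.eventually_ge_atTop 2
  have hklarge : ∀ᶠ n in atTop, (32*M)^10 * 256 ≤ (k n:ℝ) := hk_top.eventually_ge_atTop _
  have hkdelta : ∀ᶠ n in atTop, 2/δ ≤ (k n:ℝ) := hk_top.eventually_ge_atTop _
  have htsmall : ∀ᶠ n in atTop, (k n:ℝ)/(n:ℝ) < min (t₀/2) (1/4) :=
    hk_small.eventually_lt_const (lt_min (by linarith) (by norm_num))
  have hmain : ∀ᶠ n in atTop, P ((A n)ᶜ) ≤ ENNReal.ofReal (4*δ) := by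
    filter_upwards [hn1, hk2, hklarge, hkdelta, htsmall, hCev] with n hn1' hk2' hklarge'
      hkdelta' htsmall' hCev'
    -- basic facts
    have hn0 : (0:ℝ) < (n:ℝ) := by exact_mod_cast hn1'
    have hk1 : 1 ≤ k n := by exact_mod_cast le_trans (by norm_num : (1:ℝ) ≤ 2) hk2'
    have hkr : (0:ℝ) < (k n:ℝ) := by linarith
    have htpos : 0 < (k n:ℝ)/(n:ℝ) := div_pos hkr hn0
    have ht2 : 2 * ((k n:ℝ)/(n:ℝ)) ≤ t₀ := by
      have := lt_min_iff.1 htsmall'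
      linarith [this.1]
    have ht14 : (k n:ℝ)/(n:ℝ) < 1/4 := (lt_min_iff.1 htsmall').2
    have hkn : k n + 1 ≤ n := by
      have hlt : (k n:ℝ) < (n:ℝ) := by
        rw [div_lt_iff₀ hn0] at ht14
        nlinarith
      have : k n < n := by exact_mod_cast hlt
      omega
    have htIoo : (k n:ℝ)/(n:ℝ) ∈ Ioo (0:ℝ) 1 := ⟨htpos, by linarith⟩
    have hapos : 0 < a ((k n:ℝ)/(n:ℝ)) := ha_pos _ htIoo
    have hsq : (0:ℝ) < Real.sqrt (k n) := Real.sqrt_pos.2 hkr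
    -- the dyadic exponent
    set c : ℕ := Nat.clog 2 (k n + 1) with hcdef
    set m : ℕ := 2 * c with hmdef
    have hc1 : 1 ≤ c := Nat.clog_pos one_lt_two (by omega)
    have hlbN : k n + 1 ≤ 2^c := Nat.le_pow_clog one_lt_two _
    have hubN : (2:ℕ)^c ≤ 2*(k n + 1) := by
      have h := Nat.pow_pred_clog_lt_self one_lt_two (show 1 < k n + 1 by omega)
      rw [Nat.pred_eq_sub_one, ← hcdef] at h
      have h2 : (2:ℕ)^c = 2 * 2^(c-1) := by
        rw [← pow_succ']
        congr 1
        omega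
      omega
    have hlbR : ((k n:ℝ)+1)^2 ≤ (2:ℝ)^m := by
      have h1 : ((k n:ℝ)+1) ≤ (2:ℝ)^c := by exact_mod_cast hlbN
      have h2 : (2:ℝ)^m = ((2:ℝ)^c)^2 := by rw [hmdef, mul_comm, pow_mul]
      rw [h2]
      exact pow_le_pow_left₀ (by linarith) h1 2
    have hubR : (2:ℝ)^m ≤ 4*((k n:ℝ)+1)^2 := by
      have h1 : (2:ℝ)^c ≤ 2*((k n:ℝ)+1) := by exact_mod_cast hubN
      have h2 : (2:ℝ)^m = ((2:ℝ)^c)^2 := by rw [hmdef, mul_comm, pow_mul]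
      rw [h2]
      calc ((2:ℝ)^c)^2 ≤ (2*((k n:ℝ)+1))^2 := pow_le_pow_left₀ (by positivity) h1 2
        _ = 4*((k n:ℝ)+1)^2 := by ring
    -- key power inequality
    have hpowM : 32*M*(9/8:ℝ)^m ≤ Real.sqrt (k n) := by
      have h98 : ((9/8:ℝ)^m)^5 ≤ (2:ℝ)^m := by
        have h1 : ((9/8:ℝ)^m)^5 = ((9/8:ℝ)^5)^m := by
          rw [← pow_mul, ← pow_mul, Nat.mul_comm]
        rw [h1]
        exact pow_le_pow_left₀ (by norm_num) (by norm_num) m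
      have hnn : (0:ℝ) ≤ (9/8:ℝ)^m := by positivity
      have h10 : ((9/8:ℝ)^m)^10 ≤ 16*((k n:ℝ)+1)^4 := by
        have h2 : ((9/8:ℝ)^m)^10 = (((9/8:ℝ)^m)^5)^2 := by ring
        rw [h2]
        have h3 : (((9/8:ℝ)^m)^5)^2 ≤ ((2:ℝ)^m)^2 := pow_le_pow_left₀ (by positivity) h98 2
        have h4 : ((2:ℝ)^m)^2 ≤ (4*((k n:ℝ)+1)^2)^2 := pow_le_pow_left₀ (by positivity) hubR 2
        have h5 : (4*((k n:ℝ)+1)^2)^2 = 16*((k n:ℝ)+1)^4 := by ring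
        linarith
      have hk4 : ((k n:ℝ)+1)^4 ≤ 16*(k n:ℝ)^4 := by
        calc ((k n:ℝ)+1)^4 ≤ (2*(k n:ℝ))^4 := pow_le_pow_left₀ (by linarith) (by linarith) 4
          _ = 16*(k n:ℝ)^4 := by ring
      have hfinal : (32*M*(9/8:ℝ)^m)^10 ≤ (Real.sqrt (k n))^10 := by
        have hs2 : (Real.sqrt (k n))^2 = (k n:ℝ) := Real.sq_sqrt hkr.le
        have hs10 : (Real.sqrt (k n))^10 = (k n:ℝ)^5 := by
          rw [show (10:ℕ) = 2*5 by norm_num, pow_mul, hs2]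
        rw [hs10]
        have hexp : (32*M*(9/8:ℝ)^m)^10 = (32*M)^10 * ((9/8:ℝ)^m)^10 := by
          rw [mul_pow]
        rw [hexp]
        have hM10 : (0:ℝ) ≤ (32*M)^10 := by positivity
        calc (32*M)^10 * ((9/8:ℝ)^m)^10 ≤ (32*M)^10 * (16*((k n:ℝ)+1)^4) := by
              exact mul_le_mul_of_nonneg_left h10 hM10
          _ ≤ (32*M)^10 * (16*(16*(k n:ℝ)^4)) :=
              mul_le_mul_of_nonneg_left (by linarith) hM10
          _ = ((32*M)^10 * 256) * (k n:ℝ)^4 := by ring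
          _ ≤ (k n:ℝ) * (k n:ℝ)^4 := by
              have h4 : (0:ℝ) ≤ (k n:ℝ)^4 := by positivity
              exact mul_le_mul_of_nonneg_right hklarge' h4
          _ = (k n:ℝ)^5 := by ring
      exact le_of_pow_le_pow_left₀ (by norm_num) (Real.sqrt_nonneg _) hfinal
    -- upper quantile dominated by u n
    have hq_le_u : q (1 - ((k n:ℝ)/(n:ℝ))/2^m) ≤ u n := by
      have hg := hgrow ((k n:ℝ)/(n:ℝ)) htpos ht2 m
      have hcoef : 16*(9/8:ℝ)^m ≤ Real.sqrt (k n)/(2*M) := by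
        rw [le_div_iff₀ (by linarith)]
        calc 16*(9/8:ℝ)^m * (2*M) = 32*M*(9/8:ℝ)^m := by ring
          _ ≤ Real.sqrt (k n) := hpowM
      have h2 : 16 * (9/8:ℝ)^m * a ((k n:ℝ)/(n:ℝ))
          ≤ (Real.sqrt (k n)/(2*M)) * a ((k n:ℝ)/(n:ℝ)) :=
        mul_le_mul_of_nonneg_right hcoef hapos.le
      rw [hudef]
      simp only [hvdef]
      linarith
    -- bound for the max-event
    have hPD : P (D n) ≤ ENNReal.ofReal δ := by
      have hp0 : 0 < 1 - ((k n:ℝ)/(n:ℝ))/2^m := by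
        have h1 : ((k n:ℝ)/(n:ℝ))/2^m ≤ (k n:ℝ)/(n:ℝ) :=
          div_le_self htpos.le (one_le_pow₀ (by norm_num))
        linarith
      have hp1 : 1 - ((k n:ℝ)/(n:ℝ))/2^m < 1 := by
        have : 0 < ((k n:ℝ)/(n:ℝ))/2^m := by positivity
        linarith
      have step1 := aux_max P X hX_meas hX_ident Xord hord_perm n hn1' (u n)
      have step2 : μ (Ioi (u n)) ≤ μ (Ioi (q (1 - ((k n:ℝ)/(n:ℝ))/2^m))) :=
        measure_mono (Ioi_subset_Ioi hq_le_u)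
      have step3 := hIoiQ _ hp0 hp1
      have step4 : μ (Ioi (u n)) ≤ ENNReal.ofReal (((k n:ℝ)/(n:ℝ))/2^m) := by
        refine le_trans (le_trans step2 step3) (le_of_eq ?_)
        congr 1
        ring
      calc P (D n) ≤ (n : ENNReal) * μ (Ioi (u n)) := step1
        _ ≤ (n : ENNReal) * ENNReal.ofReal (((k n:ℝ)/(n:ℝ))/2^m) := by
            exact mul_le_mul_right step4 _
        _ = ENNReal.ofReal ((n:ℝ) * (((k n:ℝ)/(n:ℝ))/2^m)) := by
            rw [ENNReal.ofReal_mul (by positivity), ENNReal.ofReal_natCast]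
        _ = ENNReal.ofReal ((k n:ℝ)/2^m) := by
            congr 1
            field_simp
        _ ≤ ENNReal.ofReal δ := by
            apply ENNReal.ofReal_le_ofReal
            have h2m : (k n:ℝ)*(k n:ℝ) ≤ (2:ℝ)^m := by nlinarith [hlbR]
            have h1k : (k n:ℝ)/2^m ≤ 1/(k n:ℝ) := by
              rw [div_le_div_iff₀ (by positivity) hkr]
              nlinarith
            have h2 : 1/(k n:ℝ) ≤ δ := by
              rw [div_le_iff₀ hkr]
              have h3 : 2/δ ≤ (k n:ℝ) := hkdelta'
              rw [div_le_iff₀ hδ] at h3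
              nlinarith
            linarith
    -- bound for the intermediate order statistic event
    have hPE : P (E n) ≤ ENNReal.ofReal δ := by
      have hp0 : 0 < 1 - 2*((k n:ℝ)/(n:ℝ)) := by linarith
      have hp1 : 1 - 2*((k n:ℝ)/(n:ℝ)) < 1 := by linarith
      have hIci := hIciQ _ hp0 hp1
      have hp : ENNReal.ofReal (2*(k n:ℝ)/(n:ℝ)) ≤ μ (Ici (v n)) := by
        rw [hvdef]
        refine le_trans (le_of_eq ?_) hIci
        congr 1
        ring
      have step := aux_count P X hX_meas hX_indep hX_ident n (k n) hk1
        (by omega) (v n) hp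
      have hsubE : E n ⊆ {ω | (((Finset.Icc 1 n).filter (fun i => v n ≤ X i ω)).card : ℝ)
          ≤ (k n:ℝ)} := by
        intro ω hω
        exact aux_ord_count X Xord hord_mono hord_perm n (k n) hk1 hkn ω (v n) hω
      calc P (E n) ≤ _ := measure_mono hsubE
        _ ≤ ENNReal.ofReal (2/(k n:ℝ)) := step
        _ ≤ ENNReal.ofReal δ := by
            apply ENNReal.ofReal_le_ofReal
            have h3 : 2/δ ≤ (k n:ℝ) := hkdelta'
            rw [div_le_iff₀ hδ] at h3
            rw [div_le_iff₀ hkr]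
            nlinarith
    -- inclusion of the bad event
    have hincl : (C n ∪ D n ∪ E n)ᶜ ⊆ A n := by
      intro ω hω
      simp only [mem_compl_iff, mem_union, not_or] at hω
      obtain ⟨⟨hCω, hDω⟩, hEω⟩ := hω
      rw [hCdef] at hCω
      rw [hDdef] at hDω
      rw [hEdef] at hEω
      simp only [mem_setOf_eq, not_lt] at hCω hDω hEω
      rw [hAdef]
      intro t ht
      set j : ℕ := ⌊(k n:ℝ)*t⌋₊ with hjdef
      have hj : j ≤ k n := by
        have h1 : (k n:ℝ)*t ≤ (k n:ℝ) := by nlinarith [ht.2]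
        calc j ≤ ⌊(k n:ℝ)⌋₊ := Nat.floor_le_floor h1
          _ = k n := Nat.floor_natCast _
      have d1 : Xord n (n - k n) ω ≤ Xord n (n - j) ω :=
        hord_mono n ω (n - k n) (n - j) (by omega) (by omega) (by omega)
      have d2 : Xord n (n - j) ω ≤ Xord n n ω :=
        hord_mono n ω (n - j) n (by omega) (by omega) (le_refl n)
      have hnum0 : 0 ≤ Xord n (n - j) ω - Xord n (n - k n) ω := by linarith
      have hnumub : Xord n (n - j) ω - Xord n (n - k n) ω
          ≤ (Real.sqrt (k n)/(2*M)) * a ((k n:ℝ)/(n:ℝ)) := by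
        rw [hudef] at hDω
        have := hDω
        linarith
      set Dq : ℝ := (Xord n (n - j) ω - Xord n (n - k n) ω) / a ((k n:ℝ)/(n:ℝ)) with hDqdef
      have hDq0 : 0 ≤ Dq := div_nonneg hnum0 hapos.le
      have hDqub : Dq ≤ Real.sqrt (k n)/(2*M) := by
        rw [hDqdef, div_le_iff₀ hapos]
        exact hnumub
      have hrabs : |r n ω| ≤ M / Real.sqrt (k n) := by
        rw [le_div_iff₀ hsq]
        calc |r n ω| * Real.sqrt (k n) = Real.sqrt (k n) * |r n ω| := by ring
          _ ≤ M := hCω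
      have hbound : |r n ω| * Dq ≤ (M / Real.sqrt (k n)) * (Real.sqrt (k n)/(2*M)) :=
        mul_le_mul hrabs hDqub hDq0 (by positivity)
      have heq : (M / Real.sqrt (k n)) * (Real.sqrt (k n)/(2*M)) = 1/2 := by
        field_simp
      have habs : |r n ω * Dq| = |r n ω| * Dq := by
        rw [abs_mul, abs_of_nonneg hDq0]
      have hge : -(1/2 : ℝ) ≤ r n ω * Dq := by
        have h1 : -(|r n ω * Dq|) ≤ r n ω * Dq := neg_abs_le _
        rw [habs] at h1
        rw [heq] at hbound
        linarith
      have hgoal : r n ω * (Xord n (n - j) ω - Xord n (n - k n) ω) / a ((k n:ℝ)/(n:ℝ))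
          = r n ω * Dq := by
        rw [hDqdef, mul_div_assoc]
      rw [hgoal]
      linarith
    have hsub : (A n)ᶜ ⊆ C n ∪ D n ∪ E n := by
      rw [← compl_compl (C n ∪ D n ∪ E n)]
      exact compl_subset_compl.2 hincl
    calc P ((A n)ᶜ) ≤ P (C n ∪ D n ∪ E n) := measure_mono hsub
      _ ≤ P (C n ∪ D n) + P (E n) := measure_union_le _ _
      _ ≤ (P (C n) + P (D n)) + P (E n) := by
          exact add_le_add_left (measure_union_le _ _) _
      _ ≤ (ENNReal.ofReal (2*δ) + ENNReal.ofReal δ) + ENNReal.ofReal δ := by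
          exact add_le_add (add_le_add hCev'.le hPD) hPE
      _ = ENNReal.ofReal (4*δ) := by
          rw [← ENNReal.ofReal_add (by linarith) hδ.le, ← ENNReal.ofReal_add
            (by linarith) hδ.le]
          congr 1
          ring
  filter_upwards [hmain] with n h
  exact le_trans h hδε
end
end

section
/- Let γ > −1/2 and ρ < 0 with γ + ρ ≠ 0. Then ((γ+1)²/γ) ∫₀¹ (t^γ − (2γ+1) t^{2γ}) · (t^{−(γ+ρ)} − 1)/(γ+ρ) dt = ρ(γ+1) / ((1−ρ)(γ−ρ+1)), where for γ ≠ 0 both sides are as written (the integral is a convergent improper Riemann/Lebesgue integral on (0,1)). -/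
open MeasureTheory Set

lemma rpow_integrableOn_Ioo (r : ℝ) (h : -1 < r) :
    IntegrableOn (fun t : ℝ => t ^ r) (Ioo (0 : ℝ) 1) := by
  have := (intervalIntegral.intervalIntegrable_rpow' (a := 0) (b := 1) h)
  rw [intervalIntegrable_iff_integrableOn_Ioc_of_le (by norm_num)] at this
  exact this.mono_set Ioo_subset_Ioc_self

lemma rpow_integral_Ioo (r : ℝ) (h : -1 < r) :
    ∫ t in Ioo (0 : ℝ) 1, t ^ r = 1 / (r + 1) := by
  rw [← MeasureTheory.integral_Ioc_eq_integral_Ioo,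
    ← intervalIntegral.integral_of_le (by norm_num : (0:ℝ) ≤ 1),
    integral_rpow (Or.inl h)]
  rw [Real.zero_rpow (by linarith), Real.one_rpow]
  ring

/-- First component of the asymptotic bias vector `μ` of the m.l.e. of the extreme
value index in the case `ρ < 0`:
`((γ+1)²/γ) ∫₀¹ (t^γ - (2γ+1)t^{2γ}) (t^{-(γ+ρ)} - 1)/(γ+ρ) dt = ρ(γ+1)/((1-ρ)(γ-ρ+1))`. -/
theorem mle_bias_index_rho_neg (γ ρ : ℝ) (hγ : -(1 / 2) < γ) (hγ0 : γ ≠ 0)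
    (hρ : ρ < 0) (hγρ : γ + ρ ≠ 0) :
    IntegrableOn
      (fun t : ℝ => ((γ + 1) ^ 2 / γ) * (t ^ γ - (2 * γ + 1) * t ^ (2 * γ)) *
        ((t ^ (-(γ + ρ)) - 1) / (γ + ρ))) (Ioo (0 : ℝ) 1) ∧
    ∫ t in Ioo (0 : ℝ) 1, ((γ + 1) ^ 2 / γ) * (t ^ γ - (2 * γ + 1) * t ^ (2 * γ)) *
        ((t ^ (-(γ + ρ)) - 1) / (γ + ρ)) =
      ρ * (γ + 1) / ((1 - ρ) * (γ - ρ + 1)) := by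
  have hγ1 : (0:ℝ) < γ + 1 := by linarith
  have h2γ1 : (0:ℝ) < 2 * γ + 1 := by linarith
  have hρ1 : (0:ℝ) < 1 - ρ := by linarith
  have hγρ1 : (0:ℝ) < γ - ρ + 1 := by linarith
  set C := (γ + 1) ^ 2 / γ with hC
  set g : ℝ → ℝ := fun t =>
    (C / (γ + ρ)) * t ^ (-ρ) - (C / (γ + ρ)) * t ^ γ
      - (C * (2 * γ + 1) / (γ + ρ)) * t ^ (γ - ρ)
      + (C * (2 * γ + 1) / (γ + ρ)) * t ^ (2 * γ) with hg
  have key : ∀ t ∈ Ioo (0:ℝ) 1,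
      C * (t ^ γ - (2 * γ + 1) * t ^ (2 * γ)) * ((t ^ (-(γ + ρ)) - 1) / (γ + ρ)) = g t := by
    intro t ht
    have ht0 : 0 < t := ht.1
    have h1 : t ^ γ * t ^ (-(γ + ρ)) = t ^ (-ρ) := by
      rw [← Real.rpow_add ht0]; ring_nf
    have h2 : t ^ (2 * γ) * t ^ (-(γ + ρ)) = t ^ (γ - ρ) := by
      rw [← Real.rpow_add ht0]; ring_nf
    have hprod : (t ^ γ - (2 * γ + 1) * t ^ (2 * γ)) * (t ^ (-(γ + ρ)) - 1) =
        t ^ (-ρ) - t ^ γ - (2 * γ + 1) * t ^ (γ - ρ) + (2 * γ + 1) * t ^ (2 * γ) := by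
      rw [← h1, ← h2]; ring
    calc C * (t ^ γ - (2 * γ + 1) * t ^ (2 * γ)) * ((t ^ (-(γ + ρ)) - 1) / (γ + ρ))
        = ((t ^ γ - (2 * γ + 1) * t ^ (2 * γ)) * (t ^ (-(γ + ρ)) - 1)) * (C / (γ + ρ)) := by
          ring
      _ = (t ^ (-ρ) - t ^ γ - (2 * γ + 1) * t ^ (γ - ρ) + (2 * γ + 1) * t ^ (2 * γ))
            * (C / (γ + ρ)) := by rw [hprod]
      _ = g t := by simp only [hg]; ring
  have hiρ := rpow_integrableOn_Ioo (-ρ) (by linarith)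
  have hiγ := rpow_integrableOn_Ioo γ (by linarith)
  have hiγρ := rpow_integrableOn_Ioo (γ - ρ) (by linarith)
  have hi2γ := rpow_integrableOn_Ioo (2 * γ) (by linarith)
  have hgint : IntegrableOn g (Ioo (0:ℝ) 1) := by
    apply Integrable.add
    apply Integrable.sub
    apply Integrable.sub
    · exact hiρ.const_mul _
    · exact hiγ.const_mul _
    · exact hiγρ.const_mul _
    · exact hi2γ.const_mul _
  have hfint : IntegrableOn
      (fun t : ℝ => C * (t ^ γ - (2 * γ + 1) * t ^ (2 * γ)) *
        ((t ^ (-(γ + ρ)) - 1) / (γ + ρ))) (Ioo (0 : ℝ) 1) :=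
    hgint.congr_fun (fun t ht => (key t ht).symm) measurableSet_Ioo
  refine ⟨hfint, ?_⟩
  rw [setIntegral_congr_fun measurableSet_Ioo key]
  have e1 := rpow_integral_Ioo (-ρ) (by linarith)
  have e2 := rpow_integral_Ioo γ (by linarith)
  have e3 := rpow_integral_Ioo (γ - ρ) (by linarith)
  have e4 := rpow_integral_Ioo (2 * γ) (by linarith)
  have ha : Integrable (fun t : ℝ => (C / (γ + ρ)) * t ^ (-ρ) - (C / (γ + ρ)) * t ^ γ
      - (C * (2 * γ + 1) / (γ + ρ)) * t ^ (γ - ρ)) (volume.restrict (Ioo (0:ℝ) 1)) :=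
    ((hiρ.const_mul _).sub (hiγ.const_mul _)).sub (hiγρ.const_mul _)
  have hb : Integrable (fun t : ℝ => (C / (γ + ρ)) * t ^ (-ρ) - (C / (γ + ρ)) * t ^ γ)
      (volume.restrict (Ioo (0:ℝ) 1)) := (hiρ.const_mul _).sub (hiγ.const_mul _)
  rw [hg]
  rw [integral_add ha (hi2γ.const_mul _),
    integral_sub hb (hiγρ.const_mul _),
    integral_sub (hiρ.const_mul _) (hiγ.const_mul _),
    integral_const_mul, integral_const_mul, integral_const_mul, integral_const_mul,
    e1, e2, e3, e4, hC]
  have h1ρ : (1:ℝ) - ρ ≠ 0 := ne_of_gt hρ1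
  have hγ1' : γ + 1 ≠ 0 := ne_of_gt hγ1
  have h2γ1' : 2 * γ + 1 ≠ 0 := ne_of_gt h2γ1
  have hγρ1' : γ - ρ + 1 ≠ 0 := ne_of_gt hγρ1
  have hmρ : -ρ + 1 ≠ 0 := by intro h; apply h1ρ; linarith
  have h2c : (γ + 1) ^ 2 / γ * (2 * γ + 1) / (γ + ρ) * (1 / (2 * γ + 1)) = (γ + 1) ^ 2 / γ / (γ + ρ) := by
    rw [mul_one_div, div_right_comm, mul_div_assoc, div_self h2γ1', mul_one]
  rw [h2c]
  field_simp
  ring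
end

section
/- Let γ > −1/2, γ ≠ 0, and ρ < 0 with γ + ρ ≠ 0. Then ((γ+1)/γ) ∫₀¹ ((γ+1)(2γ+1) t^{2γ} − t^γ) · (t^{−(γ+ρ)} − 1)/(γ+ρ) dt = (1 − 2ρ + γ − ργ) / ((1−ρ)(γ−ρ+1)), where the integral is a convergent improper Riemann/Lebesgue integral on (0,1). -/
open MeasureTheory Set

lemma rpow_base (a : ℝ) (ha : -1 < a) :
    IntegrableOn (fun t : ℝ => t ^ a) (Ioo (0 : ℝ) 1) ∧
      ∫ t in Ioo (0 : ℝ) 1, t ^ a = 1 / (a + 1) := by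
  have h01 : (0 : ℝ) ≤ 1 := by norm_num
  have hii : IntervalIntegrable (fun t : ℝ => t ^ a) volume 0 1 :=
    intervalIntegral.intervalIntegrable_rpow' ha
  have hIoc : IntegrableOn (fun t : ℝ => t ^ a) (Ioc (0 : ℝ) 1) := by
    rwa [intervalIntegrable_iff_integrableOn_Ioc_of_le h01] at hii
  constructor
  · exact hIoc.mono_set Ioo_subset_Ioc_self
  · have ha1 : a + 1 ≠ 0 := by linarith
    rw [← MeasureTheory.integral_Ioc_eq_integral_Ioo,
      ← intervalIntegral.integral_of_le h01, integral_rpow (Or.inl ha),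
      Real.one_rpow, Real.zero_rpow ha1]
    ring

/-- Second component of the asymptotic bias vector `μ` of the m.l.e. of the
generalized Pareto scale in the case `ρ < 0`. -/
theorem mle_bias_scale_rho_neg (γ ρ : ℝ) (hγ : -(1 / 2) < γ) (hγ0 : γ ≠ 0)
    (hρ : ρ < 0) (hγρ : γ + ρ ≠ 0) :
    IntegrableOn
      (fun t : ℝ => ((γ + 1) / γ) * ((γ + 1) * (2 * γ + 1) * t ^ (2 * γ) - t ^ γ) *
        ((t ^ (-(γ + ρ)) - 1) / (γ + ρ))) (Ioo (0 : ℝ) 1) ∧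
    ∫ t in Ioo (0 : ℝ) 1, ((γ + 1) / γ) * ((γ + 1) * (2 * γ + 1) * t ^ (2 * γ) - t ^ γ) *
        ((t ^ (-(γ + ρ)) - 1) / (γ + ρ)) =
      (1 - 2 * ρ + γ - ρ * γ) / ((1 - ρ) * (γ - ρ + 1)) := by
  set c : ℝ := ((γ + 1) / γ) / (γ + ρ) with hc
  set k : ℝ := (γ + 1) * (2 * γ + 1) with hk
  -- exponents
  have e1 : (-1 : ℝ) < γ - ρ := by linarith
  have e2 : (-1 : ℝ) < 2 * γ := by linarith
  have e3 : (-1 : ℝ) < -ρ := by linarith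
  have e4 : (-1 : ℝ) < γ := by linarith
  obtain ⟨i1, v1⟩ := rpow_base (γ - ρ) e1
  obtain ⟨i2, v2⟩ := rpow_base (2 * γ) e2
  obtain ⟨i3, v3⟩ := rpow_base (-ρ) e3
  obtain ⟨i4, v4⟩ := rpow_base γ e4
  -- the simplified function
  set g : ℝ → ℝ := fun t => c * (k * (t ^ (γ - ρ) - t ^ (2 * γ)) - (t ^ (-ρ) - t ^ γ))
    with hg
  have hgi : IntegrableOn g (Ioo (0 : ℝ) 1) := by
    apply ((((i1.sub i2).const_mul k).sub (i3.sub i4)).const_mul c)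
  have heq : ∀ t ∈ Ioo (0 : ℝ) 1,
      ((γ + 1) / γ) * ((γ + 1) * (2 * γ + 1) * t ^ (2 * γ) - t ^ γ) *
        ((t ^ (-(γ + ρ)) - 1) / (γ + ρ)) = g t := by
    intro t ht
    have ht0 : 0 < t := ht.1
    have h1 : t ^ (γ - ρ) = t ^ (2 * γ) * t ^ (-(γ + ρ)) := by
      rw [← Real.rpow_add ht0]; ring_nf
    have h2 : t ^ (-ρ) = t ^ γ * t ^ (-(γ + ρ)) := by
      rw [← Real.rpow_add ht0]; ring_nf
    simp only [hg, hc, hk, h1, h2]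
    field_simp
  constructor
  · exact (integrableOn_congr_fun heq measurableSet_Ioo).mpr hgi
  · rw [setIntegral_congr_fun measurableSet_Ioo heq]
    have : ∫ t in Ioo (0 : ℝ) 1, g t =
        c * (k * ((∫ t in Ioo (0 : ℝ) 1, t ^ (γ - ρ)) - ∫ t in Ioo (0 : ℝ) 1, t ^ (2 * γ))
          - ((∫ t in Ioo (0 : ℝ) 1, t ^ (-ρ)) - ∫ t in Ioo (0 : ℝ) 1, t ^ γ)) := by
      have j1 : IntegrableOn (fun t : ℝ => k * (t ^ (γ - ρ) - t ^ (2 * γ)))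
          (Ioo (0 : ℝ) 1) := (i1.sub i2).const_mul k
      have j2 : IntegrableOn (fun t : ℝ => t ^ (-ρ) - t ^ γ)
          (Ioo (0 : ℝ) 1) := i3.sub i4
      rw [integral_const_mul, integral_sub j1 j2,
        integral_const_mul, integral_sub i1 i2, integral_sub i3 i4]
    rw [this, v1, v2, v3, v4, hc, hk]
    have d1 : γ - ρ + 1 ≠ 0 := by linarith
    have d2 : 2 * γ + 1 ≠ 0 := by linarith
    have d3 : -ρ + 1 ≠ 0 := by linarith
    have d4 : γ + 1 ≠ 0 := by linarith
    have d5 : (1 : ℝ) - ρ ≠ 0 := by linarith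
    have d6 : γ * 2 + 1 ≠ 0 := by linarith
    field_simp
    ring
end

section
/- Let γ > −1/2 with γ ≠ 0, and define f(t) = ((γ+1)²/γ)(t^γ − (2γ+1)t^{2γ}) for t ∈ (0,1] and K(s,t) = 1 − s^{−γ} − t^{−γ} + min(s,t)·(st)^{−(γ+1)} for s, t ∈ (0,1]. Then ∫₀¹∫₀¹ f(s) f(t) K(s,t) ds dt = (1+γ)², where the double integral converges absolutely. -/
open MeasureTheory Set

/-! ### Auxiliary integration lemmas for power functions on `(0,1]` -/

lemma mle_intOn_rpow {a : ℝ} (ha : -1 < a) (s : ℝ) :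
    IntegrableOn (fun x : ℝ => x ^ a) (Ioc 0 s) := by
  rcases le_or_gt s 0 with h | h
  · rw [Ioc_eq_empty (by simpa using h)]; exact integrableOn_empty
  · exact (intervalIntegral.intervalIntegrable_rpow' ha (a := 0) (b := s)).1

lemma mle_int_rpow {a : ℝ} (ha : -1 < a) {s : ℝ} (hs : 0 < s) :
    ∫ x in Ioc (0:ℝ) s, x ^ a = s ^ (a + 1) / (a + 1) := by
  rw [← intervalIntegral.integral_of_le hs.le, integral_rpow (Or.inl ha),
    Real.zero_rpow (by linarith), sub_zero]

lemma mle_intOn_affine (C₀ C₁ a : ℝ) (ha : -1 < a) (s : ℝ) :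
    IntegrableOn (fun t : ℝ => C₀ + C₁ * t ^ a) (Ioc 0 s) := by
  refine Integrable.add ?_ ((mle_intOn_rpow ha s).const_mul C₁)
  exact integrableOn_const measure_Ioc_lt_top.ne

lemma mle_int_affine (C₀ C₁ a : ℝ) (ha : -1 < a) {s : ℝ} (hs : 0 < s) :
    ∫ t in Ioc (0:ℝ) s, (C₀ + C₁ * t ^ a) = C₀ * s + C₁ * (s ^ (a + 1) / (a + 1)) := by
  rw [integral_add (integrableOn_const (μ := volume) (s := Ioc (0:ℝ) s) (C := C₀) measure_Ioc_lt_top.ne)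
      ((mle_intOn_rpow ha s).const_mul C₁), setIntegral_const, integral_const_mul,
    mle_int_rpow ha hs]
  simp [Real.volume_Ioc, ENNReal.toReal_ofReal hs.le, mul_comm, hs.le]

lemma mle_intOn_poly (c₀ c₁ c₂ a b : ℝ) (ha : -1 < a) (hb : -1 < b) (s : ℝ) :
    IntegrableOn (fun x : ℝ => c₀ + c₁ * x ^ a + c₂ * x ^ b) (Ioc 0 s) :=
  (mle_intOn_affine c₀ c₁ a ha s).add ((mle_intOn_rpow hb s).const_mul c₂)

lemma mle_int_poly (c₀ c₁ c₂ a b : ℝ) (ha : -1 < a) (hb : -1 < b) :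
    ∫ x in Ioc (0:ℝ) 1, (c₀ + c₁ * x ^ a + c₂ * x ^ b)
      = c₀ + c₁ / (a + 1) + c₂ / (b + 1) := by
  rw [integral_add (mle_intOn_affine c₀ c₁ a ha 1) ((mle_intOn_rpow hb 1).const_mul c₂),
    integral_const_mul, mle_int_rpow hb one_pos, mle_int_affine c₀ c₁ a ha one_pos]
  simp [Real.one_rpow]
  ring

/-! ### The integrand and dominating functions -/

noncomputable def mleF (γ : ℝ) (x : ℝ) : ℝ :=
  ((γ + 1) ^ 2 / γ) * (x ^ γ - (2 * γ + 1) * x ^ (2 * γ))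

noncomputable def mleA₁ (γ : ℝ) (x : ℝ) : ℝ :=
  |(γ + 1) ^ 2 / γ| * x ^ γ + (|(γ + 1) ^ 2 / γ| * (2 * γ + 1)) * x ^ (2 * γ)

noncomputable def mleA₂ (γ : ℝ) (x : ℝ) : ℝ :=
  |(γ + 1) ^ 2 / γ| + (|(γ + 1) ^ 2 / γ| * (2 * γ + 1)) * x ^ γ

noncomputable def mleA₃ (γ : ℝ) (x : ℝ) : ℝ :=
  |(γ + 1) ^ 2 / γ| * x ^ (-2⁻¹ : ℝ) + (|(γ + 1) ^ 2 / γ| * (2 * γ + 1)) * x ^ (γ - 2⁻¹)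

section
variable {γ : ℝ} (hγ : -(1 / 2) < γ)
include hγ

lemma mle_exp1 : (-1 : ℝ) < γ := by linarith
lemma mle_exp2 : (-1 : ℝ) < 2 * γ := by linarith
lemma mle_exp3 : (-1 : ℝ) < γ - 2⁻¹ := by linarith
lemma mle_d_pos : (0 : ℝ) < 2 * γ + 1 := by linarith

lemma mleA₁_int : IntegrableOn (mleA₁ γ) (Ioc 0 1) :=
  ((mle_intOn_rpow (mle_exp1 hγ) 1).const_mul _).add
    ((mle_intOn_rpow (mle_exp2 hγ) 1).const_mul _)

lemma mleA₂_int : IntegrableOn (mleA₂ γ) (Ioc 0 1) :=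
  mle_intOn_affine _ _ _ (mle_exp1 hγ) 1

lemma mleA₃_int : IntegrableOn (mleA₃ γ) (Ioc 0 1) :=
  ((mle_intOn_rpow (by norm_num) 1).const_mul _).add
    ((mle_intOn_rpow (mle_exp3 hγ) 1).const_mul _)

lemma mleA₁_nonneg {x : ℝ} (hx : 0 ≤ x) : 0 ≤ mleA₁ γ x := by
  have := mle_d_pos hγ
  unfold mleA₁
  have h1 := Real.rpow_nonneg hx γ
  have h2 := Real.rpow_nonneg hx (2 * γ)
  positivity

lemma mleA₂_nonneg {x : ℝ} (hx : 0 ≤ x) : 0 ≤ mleA₂ γ x := by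
  have := mle_d_pos hγ
  unfold mleA₂
  have h1 := Real.rpow_nonneg hx γ
  positivity

lemma mleA₃_nonneg {x : ℝ} (hx : 0 ≤ x) : 0 ≤ mleA₃ γ x := by
  have := mle_d_pos hγ
  unfold mleA₃
  have h1 := Real.rpow_nonneg hx (-2⁻¹ : ℝ)
  have h2 := Real.rpow_nonneg hx (γ - 2⁻¹)
  positivity

lemma mleF_abs_le {x : ℝ} (hx : 0 ≤ x) : |mleF γ x| ≤ mleA₁ γ x := by
  have hd := mle_d_pos hγ
  have h1 := Real.rpow_nonneg hx γ
  have h2 := Real.rpow_nonneg hx (2 * γ)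
  unfold mleF mleA₁
  rw [abs_mul]
  have h3 : |x ^ γ - (2 * γ + 1) * x ^ (2 * γ)| ≤ x ^ γ + (2 * γ + 1) * x ^ (2 * γ) :=
    abs_le.2 ⟨by nlinarith, by nlinarith⟩
  calc |(γ + 1) ^ 2 / γ| * |x ^ γ - (2 * γ + 1) * x ^ (2 * γ)|
      ≤ |(γ + 1) ^ 2 / γ| * (x ^ γ + (2 * γ + 1) * x ^ (2 * γ)) :=
        mul_le_mul_of_nonneg_left h3 (abs_nonneg _)
    _ = _ := by ring

end

lemma mleA₁_mul₂ {γ x : ℝ} (hx : 0 < x) : mleA₁ γ x * x ^ (-γ) = mleA₂ γ x := by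
  unfold mleA₁ mleA₂
  have e1 : x ^ γ * x ^ (-γ) = 1 := by rw [← Real.rpow_add hx]; simp
  have e2 : x ^ (2 * γ) * x ^ (-γ) = x ^ γ := by
    rw [← Real.rpow_add hx]; congr 1; ring
  linear_combination |(γ + 1) ^ 2 / γ| * e1 + (|(γ + 1) ^ 2 / γ| * (2 * γ + 1)) * e2

lemma mleA₁_mul₃ {γ x : ℝ} (hx : 0 < x) : mleA₁ γ x * x ^ (-γ - 2⁻¹) = mleA₃ γ x := by
  unfold mleA₁ mleA₃
  have e1 : x ^ γ * x ^ (-γ - 2⁻¹) = x ^ (-2⁻¹ : ℝ) := by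
    rw [← Real.rpow_add hx]; congr 1; ring
  have e2 : x ^ (2 * γ) * x ^ (-γ - 2⁻¹) = x ^ (γ - 2⁻¹) := by
    rw [← Real.rpow_add hx]; congr 1; ring
  linear_combination |(γ + 1) ^ 2 / γ| * e1 + (|(γ + 1) ^ 2 / γ| * (2 * γ + 1)) * e2

lemma mle_min_le {γ s t : ℝ} (hs : 0 < s) (ht : 0 < t) :
    min s t * (s * t) ^ (-(γ + 1)) ≤ s ^ (-γ - 2⁻¹) * t ^ (-γ - 2⁻¹) := by
  have hmin : min s t ≤ s ^ (2⁻¹ : ℝ) * t ^ (2⁻¹ : ℝ) := by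
    rcases le_total s t with h | h
    · calc min s t = s := min_eq_left h
        _ = s ^ (2⁻¹ : ℝ) * s ^ (2⁻¹ : ℝ) := by rw [← Real.rpow_add hs]; norm_num
        _ ≤ s ^ (2⁻¹ : ℝ) * t ^ (2⁻¹ : ℝ) :=
            mul_le_mul_of_nonneg_left (Real.rpow_le_rpow hs.le h (by norm_num))
              (Real.rpow_nonneg hs.le _)
    · calc min s t = t := min_eq_right h
        _ = t ^ (2⁻¹ : ℝ) * t ^ (2⁻¹ : ℝ) := by rw [← Real.rpow_add ht]; norm_num
        _ ≤ s ^ (2⁻¹ : ℝ) * t ^ (2⁻¹ : ℝ) :=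
            mul_le_mul_of_nonneg_right (Real.rpow_le_rpow ht.le h (by norm_num))
              (Real.rpow_nonneg ht.le _)
  calc min s t * (s * t) ^ (-(γ + 1))
      ≤ (s ^ (2⁻¹ : ℝ) * t ^ (2⁻¹ : ℝ)) * (s ^ (-(γ + 1)) * t ^ (-(γ + 1))) := by
        rw [Real.mul_rpow hs.le ht.le]
        exact mul_le_mul_of_nonneg_right hmin
          (mul_nonneg (Real.rpow_nonneg hs.le _) (Real.rpow_nonneg ht.le _))
    _ = (s ^ (2⁻¹ : ℝ) * s ^ (-(γ + 1))) * (t ^ (2⁻¹ : ℝ) * t ^ (-(γ + 1))) := by ring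
    _ = s ^ (-γ - 2⁻¹) * t ^ (-γ - 2⁻¹) := by
        rw [← Real.rpow_add hs, ← Real.rpow_add ht]
        congr 1 <;> · congr 1; ring

lemma mle_inner_eq {γ s t : ℝ} (hs : 0 < s) (ht : 0 < t) (hts : t ≤ s) :
    mleF γ s * mleF γ t * (min s t * (s * t) ^ (-(γ + 1)))
      = mleF γ s * s ^ (-(γ + 1)) * ((γ + 1) ^ 2 / γ)
        + (mleF γ s * s ^ (-(γ + 1)) * ((γ + 1) ^ 2 / γ) * (-(2 * γ + 1))) * t ^ γ := by
  rw [min_eq_right hts, Real.mul_rpow hs.le ht.le]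
  have e0 : t * t ^ (-(γ + 1)) = t ^ (-γ) := by
    rw [mul_comm, ← Real.rpow_add_one ht.ne']; congr 1; ring
  have e1 : t ^ γ * (t * t ^ (-(γ + 1))) = 1 := by
    rw [e0, ← Real.rpow_add ht]; simp
  have e2 : t ^ (2 * γ) * (t * t ^ (-(γ + 1))) = t ^ γ := by
    rw [e0, ← Real.rpow_add ht]; congr 1; ring
  simp only [mleF]
  linear_combination
    ((((γ:ℝ) + 1) ^ 2 / γ) * (s ^ γ - (2 * γ + 1) * s ^ (2 * γ)) * s ^ (-(γ + 1))
        * ((γ + 1) ^ 2 / γ)) * e1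
      - ((((γ:ℝ) + 1) ^ 2 / γ) * (s ^ γ - (2 * γ + 1) * s ^ (2 * γ)) * s ^ (-(γ + 1))
        * ((γ + 1) ^ 2 / γ) * (2 * γ + 1)) * e2

lemma mle_outer_eq {γ s : ℝ} (hs : 0 < s) :
    mleF γ s * s ^ (-(γ + 1)) * ((γ + 1) ^ 2 / γ) * s
      + mleF γ s * s ^ (-(γ + 1)) * ((γ + 1) ^ 2 / γ) * (-(2 * γ + 1))
        * (s ^ (γ + 1) / (γ + 1))
      = ((γ + 1) ^ 2 / γ) ^ 2
        + (-(((γ + 1) ^ 2 / γ) ^ 2 * ((2 * γ + 1) + (2 * γ + 1) / (γ + 1)))) * s ^ γ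
        + (((γ + 1) ^ 2 / γ) ^ 2 * (2 * γ + 1) ^ 2 / (γ + 1)) * s ^ (2 * γ) := by
  have i0 : s ^ (-(γ + 1)) * s = s ^ (-γ) := by
    rw [← Real.rpow_add_one hs.ne']; congr 1; ring
  have j1 : s ^ γ * (s ^ (-(γ + 1)) * s) = 1 := by
    rw [i0, ← Real.rpow_add hs]; simp
  have j2 : s ^ (2 * γ) * (s ^ (-(γ + 1)) * s) = s ^ γ := by
    rw [i0, ← Real.rpow_add hs]; congr 1; ring
  have j3 : s ^ (-(γ + 1)) * s ^ (γ + 1) = 1 := by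
    rw [← Real.rpow_add hs, show -(γ + 1) + (γ + 1) = 0 by ring, Real.rpow_zero]
  simp only [mleF]
  linear_combination
    ((((γ:ℝ) + 1) ^ 2 / γ) ^ 2) * j1
      - ((((γ:ℝ) + 1) ^ 2 / γ) ^ 2 * (2 * γ + 1)) * j2
      + ((((γ:ℝ) + 1) ^ 2 / γ) ^ 2 * (2 * γ + 1) / (γ + 1)
          * (-(s ^ γ) + (2 * γ + 1) * s ^ (2 * γ))) * j3

/-! ### 1-D integral values -/

section
variable {γ : ℝ} (hγ : -(1 / 2) < γ) (hγ0 : γ ≠ 0)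
include hγ hγ0

lemma mleF_integral : ∫ x in Ioc (0:ℝ) 1, mleF γ x = -(γ + 1) := by
  have h1 : γ + 1 ≠ 0 := by have := mle_exp1 hγ; intro h; linarith
  have h2 : 2 * γ + 1 ≠ 0 := (mle_d_pos hγ).ne'
  rw [show mleF γ = fun x : ℝ => 0 + ((γ + 1) ^ 2 / γ) * x ^ γ
        + (-(((γ + 1) ^ 2 / γ) * (2 * γ + 1))) * x ^ (2 * γ) from
      funext fun x => by unfold mleF; ring,
    mle_int_poly _ _ _ _ _ (mle_exp1 hγ) (mle_exp2 hγ)]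
  rw [neg_div, mul_div_assoc, div_self h2, mul_one]
  field_simp
  ring

lemma mleG_integral : ∫ x in Ioc (0:ℝ) 1, mleF γ x * x ^ (-γ) = -(γ + 1) := by
  have h1 : γ + 1 ≠ 0 := by have := mle_exp1 hγ; intro h; linarith
  rw [setIntegral_congr_fun measurableSet_Ioc
      (show EqOn (fun x : ℝ => mleF γ x * x ^ (-γ))
        (fun x : ℝ => ((γ + 1) ^ 2 / γ) + (-(((γ + 1) ^ 2 / γ) * (2 * γ + 1))) * x ^ γ
          + 0 * x ^ γ) (Ioc 0 1) from fun x hx => by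
        have hx0 : (0:ℝ) < x := hx.1
        have e1 : x ^ γ * x ^ (-γ) = 1 := by rw [← Real.rpow_add hx0]; simp
        have e2 : x ^ (2 * γ) * x ^ (-γ) = x ^ γ := by
          rw [← Real.rpow_add hx0]; congr 1; ring
        simp only [mleF]
        linear_combination (((γ:ℝ) + 1) ^ 2 / γ) * e1
          - (((γ:ℝ) + 1) ^ 2 / γ) * (2 * γ + 1) * e2),
    mle_int_poly _ _ _ _ _ (mle_exp1 hγ) (mle_exp1 hγ)]
  field_simp
  ring

omit hγ0

lemma mle_inner_int {s : ℝ} (hs0 : 0 < s) :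
    ∫ t in Ioc (0:ℝ) s, mleF γ s * mleF γ t * (min s t * (s * t) ^ (-(γ + 1)))
      = ((γ + 1) ^ 2 / γ) ^ 2
        + (-(((γ + 1) ^ 2 / γ) ^ 2 * ((2 * γ + 1) + (2 * γ + 1) / (γ + 1)))) * s ^ γ
        + (((γ + 1) ^ 2 / γ) ^ 2 * (2 * γ + 1) ^ 2 / (γ + 1)) * s ^ (2 * γ) := by
  rw [setIntegral_congr_fun measurableSet_Ioc
      (fun t ht => mle_inner_eq hs0 ht.1 ht.2),
    mle_int_affine _ _ _ (mle_exp1 hγ) hs0]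
  exact mle_outer_eq hs0

include hγ0

lemma mle_outer_int :
    ∫ s in Ioc (0:ℝ) 1,
        (((γ + 1) ^ 2 / γ) ^ 2
          + (-(((γ + 1) ^ 2 / γ) ^ 2 * ((2 * γ + 1) + (2 * γ + 1) / (γ + 1)))) * s ^ γ
          + (((γ + 1) ^ 2 / γ) ^ 2 * (2 * γ + 1) ^ 2 / (γ + 1)) * s ^ (2 * γ))
      = (γ + 1) ^ 2 := by
  have h1 : γ + 1 ≠ 0 := by have := mle_exp1 hγ; intro h; linarith
  have h2 : 2 * γ + 1 ≠ 0 := (mle_d_pos hγ).ne'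
  rw [mle_int_poly _ _ _ _ _ (mle_exp1 hγ) (mle_exp2 hγ)]
  field_simp
  ring

end

/-! ### Product-space integrability -/

lemma mle_prodInt {g h : ℝ → ℝ} (hg : IntegrableOn g (Ioc 0 1))
    (hh : IntegrableOn h (Ioc 0 1)) :
    IntegrableOn (fun p : ℝ × ℝ => g p.1 * h p.2) (Ioc (0:ℝ) 1 ×ˢ Ioc (0:ℝ) 1) := by
  rw [IntegrableOn, Measure.volume_eq_prod, ← Measure.prod_restrict]
  exact hg.mul_prod hh

section
variable {γ : ℝ} (hγ : -(1 / 2) < γ)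
include hγ

lemma mleF_int : IntegrableOn (mleF γ) (Ioc 0 1) := by
  refine (mleA₁_int hγ).mono' ?_ ?_
  · exact (by unfold mleF; fun_prop : Measurable (mleF γ)).aestronglyMeasurable
  · exact (ae_restrict_iff' measurableSet_Ioc).2 (ae_of_all _ fun x hx => by
      simpa [Real.norm_eq_abs] using mleF_abs_le hγ hx.1.le)

lemma mleF_abs_le₂ {x : ℝ} (hx : 0 < x) : |mleF γ x * x ^ (-γ)| ≤ mleA₂ γ x := by
  rw [abs_mul, abs_of_nonneg (Real.rpow_nonneg hx.le _), ← mleA₁_mul₂ hx]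
  exact mul_le_mul_of_nonneg_right (mleF_abs_le hγ hx.le) (Real.rpow_nonneg hx.le _)

lemma mleF_abs_le₃ {x : ℝ} (hx : 0 < x) : |mleF γ x| * x ^ (-γ - 2⁻¹) ≤ mleA₃ γ x := by
  rw [← mleA₁_mul₃ hx]
  exact mul_le_mul_of_nonneg_right (mleF_abs_le hγ hx.le) (Real.rpow_nonneg hx.le _)

lemma mleG_int : IntegrableOn (fun x : ℝ => mleF γ x * x ^ (-γ)) (Ioc 0 1) := by
  refine (mleA₂_int hγ).mono' ?_ ?_
  · exact (by unfold mleF; fun_prop :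
      Measurable (fun x : ℝ => mleF γ x * x ^ (-γ))).aestronglyMeasurable
  · exact (ae_restrict_iff' measurableSet_Ioc).2 (ae_of_all _ fun x hx => by
      simpa [Real.norm_eq_abs, abs_mul] using mleF_abs_le₂ hγ hx.1)

/-- bound for the `min` part of the integrand -/
lemma mleM_abs_le {s t : ℝ} (hs : 0 < s) (ht : 0 < t) :
    |mleF γ s * mleF γ t * (min s t * (s * t) ^ (-(γ + 1)))|
      ≤ mleA₃ γ s * mleA₃ γ t := by
  have hm0 : 0 ≤ min s t * (s * t) ^ (-(γ + 1)) :=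
    mul_nonneg (le_min hs.le ht.le) (Real.rpow_nonneg (by positivity) _)
  rw [abs_mul, abs_of_nonneg hm0]
  calc |mleF γ s * mleF γ t| * (min s t * (s * t) ^ (-(γ + 1)))
      ≤ |mleF γ s * mleF γ t| * (s ^ (-γ - 2⁻¹) * t ^ (-γ - 2⁻¹)) :=
        mul_le_mul_of_nonneg_left (mle_min_le hs ht) (abs_nonneg _)
    _ = (|mleF γ s| * s ^ (-γ - 2⁻¹)) * (|mleF γ t| * t ^ (-γ - 2⁻¹)) := by
        rw [abs_mul]; ring
    _ ≤ mleA₃ γ s * mleA₃ γ t := by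
        refine mul_le_mul (mleF_abs_le₃ hγ hs) (mleF_abs_le₃ hγ ht) (by positivity) ?_
        exact le_trans (by positivity) (mleF_abs_le₃ hγ hs)

/-- the main pointwise bound -/
lemma mle_main_bound {s t : ℝ} (hs : s ∈ Ioc (0:ℝ) 1) (ht : t ∈ Ioc (0:ℝ) 1) :
    |mleF γ s * mleF γ t *
        (1 - s ^ (-γ) - t ^ (-γ) + min s t * (s * t) ^ (-(γ + 1)))|
      ≤ mleA₁ γ s * mleA₁ γ t + mleA₂ γ s * mleA₁ γ t + mleA₁ γ s * mleA₂ γ t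
        + mleA₃ γ s * mleA₃ γ t := by
  have hs0 : 0 < s := hs.1
  have ht0 : 0 < t := ht.1
  have ha : (0:ℝ) ≤ s ^ (-γ) := Real.rpow_nonneg hs0.le _
  have hb : (0:ℝ) ≤ t ^ (-γ) := Real.rpow_nonneg ht0.le _
  have hm0 : 0 ≤ min s t * (s * t) ^ (-(γ + 1)) :=
    mul_nonneg (le_min hs0.le ht0.le) (Real.rpow_nonneg (by positivity) _)
  have hK : |1 - s ^ (-γ) - t ^ (-γ) + min s t * (s * t) ^ (-(γ + 1))|
      ≤ 1 + s ^ (-γ) + t ^ (-γ) + min s t * (s * t) ^ (-(γ + 1)) :=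
    abs_le.2 ⟨by linarith, by linarith⟩
  have t1 : |mleF γ s| * |mleF γ t| ≤ mleA₁ γ s * mleA₁ γ t :=
    mul_le_mul (mleF_abs_le hγ hs0.le) (mleF_abs_le hγ ht0.le) (abs_nonneg _)
      (mleA₁_nonneg hγ hs0.le)
  have t2 : (|mleF γ s| * s ^ (-γ)) * |mleF γ t| ≤ mleA₂ γ s * mleA₁ γ t := by
    refine mul_le_mul ?_ (mleF_abs_le hγ ht0.le) (abs_nonneg _) (mleA₂_nonneg hγ hs0.le)
    rw [← abs_of_nonneg ha, ← abs_mul]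
    exact mleF_abs_le₂ hγ hs0
  have t3 : |mleF γ s| * (|mleF γ t| * t ^ (-γ)) ≤ mleA₁ γ s * mleA₂ γ t := by
    refine mul_le_mul (mleF_abs_le hγ hs0.le) ?_ (by positivity) (mleA₁_nonneg hγ hs0.le)
    rw [← abs_of_nonneg hb, ← abs_mul]
    exact mleF_abs_le₂ hγ ht0
  have t4 : (|mleF γ s| * |mleF γ t|) * (min s t * (s * t) ^ (-(γ + 1)))
      ≤ mleA₃ γ s * mleA₃ γ t := by
    rw [← abs_mul]
    have := mleM_abs_le hγ hs0 ht0
    rwa [abs_mul (mleF γ s * mleF γ t), abs_of_nonneg hm0] at this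
  calc |mleF γ s * mleF γ t *
        (1 - s ^ (-γ) - t ^ (-γ) + min s t * (s * t) ^ (-(γ + 1)))|
      = (|mleF γ s| * |mleF γ t|) *
          |1 - s ^ (-γ) - t ^ (-γ) + min s t * (s * t) ^ (-(γ + 1))| := by
        rw [abs_mul, abs_mul]
    _ ≤ (|mleF γ s| * |mleF γ t|) *
          (1 + s ^ (-γ) + t ^ (-γ) + min s t * (s * t) ^ (-(γ + 1))) :=
        mul_le_mul_of_nonneg_left hK (by positivity)
    _ = |mleF γ s| * |mleF γ t| + (|mleF γ s| * s ^ (-γ)) * |mleF γ t|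
          + |mleF γ s| * (|mleF γ t| * t ^ (-γ))
          + (|mleF γ s| * |mleF γ t|) * (min s t * (s * t) ^ (-(γ + 1))) := by ring
    _ ≤ _ := by linarith

end

lemma mle_integral_decomp {α : Type*} [MeasurableSpace α] {μ : MeasureTheory.Measure α}
    {f1 f2 f3 f4 f5 : α → ℝ} (h1 : Integrable f1 μ) (h2 : Integrable f2 μ)
    (h3 : Integrable f3 μ) (h4 : Integrable f4 μ) (h5 : Integrable f5 μ) :
    ∫ a, (f1 a - f2 a - f3 a + (f4 a + f5 a)) ∂μ
      = (∫ a, f1 a ∂μ) - (∫ a, f2 a ∂μ) - (∫ a, f3 a ∂μ)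
        + ((∫ a, f4 a ∂μ) + (∫ a, f5 a ∂μ)) := by
  have h12 : Integrable (fun a => f1 a - f2 a) μ := h1.sub h2
  have h123 : Integrable (fun a => f1 a - f2 a - f3 a) μ := h12.sub h3
  have h45 : Integrable (fun a => f4 a + f5 a) μ := h4.add h5
  calc ∫ a, (f1 a - f2 a - f3 a + (f4 a + f5 a)) ∂μ
      = (∫ a, (f1 a - f2 a - f3 a) ∂μ) + ∫ a, (f4 a + f5 a) ∂μ :=
        integral_add h123 h45
    _ = ((∫ a, (f1 a - f2 a) ∂μ) - ∫ a, f3 a ∂μ) + ∫ a, (f4 a + f5 a) ∂μ := by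
        rw [integral_sub h12 h3]
    _ = ((∫ a, f1 a ∂μ) - (∫ a, f2 a ∂μ) - ∫ a, f3 a ∂μ)
          + ((∫ a, f4 a ∂μ) + ∫ a, f5 a ∂μ) := by
        rw [integral_sub h1 h2, integral_add h4 h5]

/-- The asymptotic variance `(1+γ)²` of the m.l.e. of the extreme value index as a
deterministic double integral against the covariance kernel
`K(s,t) = 1 - s^{-γ} - t^{-γ} + min(s,t)(st)^{-(γ+1)}`. -/
theorem mle_index_asymptotic_variance (γ : ℝ) (hγ : -(1 / 2) < γ) (hγ0 : γ ≠ 0) :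
    IntegrableOn
      (fun p : ℝ × ℝ =>
        (((γ + 1) ^ 2 / γ) * (p.1 ^ γ - (2 * γ + 1) * p.1 ^ (2 * γ))) *
        (((γ + 1) ^ 2 / γ) * (p.2 ^ γ - (2 * γ + 1) * p.2 ^ (2 * γ))) *
        (1 - p.1 ^ (-γ) - p.2 ^ (-γ) + min p.1 p.2 * (p.1 * p.2) ^ (-(γ + 1))))
      (Ioc (0 : ℝ) 1 ×ˢ Ioc (0 : ℝ) 1) ∧
    ∫ p in Ioc (0 : ℝ) 1 ×ˢ Ioc (0 : ℝ) 1,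
        (((γ + 1) ^ 2 / γ) * (p.1 ^ γ - (2 * γ + 1) * p.1 ^ (2 * γ))) *
        (((γ + 1) ^ 2 / γ) * (p.2 ^ γ - (2 * γ + 1) * p.2 ^ (2 * γ))) *
        (1 - p.1 ^ (-γ) - p.2 ^ (-γ) + min p.1 p.2 * (p.1 * p.2) ^ (-(γ + 1))) =
      (1 + γ) ^ 2 := by
  have hRmeas : MeasurableSet (Ioc (0:ℝ) 1 ×ˢ Ioc (0:ℝ) 1) :=
    measurableSet_Ioc.prod measurableSet_Ioc
  -- measurability
  have hmeasF : Measurable (fun p : ℝ × ℝ => mleF γ p.1 * mleF γ p.2 *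
      (1 - p.1 ^ (-γ) - p.2 ^ (-γ) + min p.1 p.2 * (p.1 * p.2) ^ (-(γ + 1)))) := by
    unfold mleF; fun_prop
  have hmeasM : Measurable (fun p : ℝ × ℝ => mleF γ p.1 * mleF γ p.2 *
      (min p.1 p.2 * (p.1 * p.2) ^ (-(γ + 1)))) := by
    unfold mleF; fun_prop
  -- integrability of the dominating function
  have hQint : IntegrableOn
      (fun p : ℝ × ℝ => mleA₁ γ p.1 * mleA₁ γ p.2 + mleA₂ γ p.1 * mleA₁ γ p.2
        + mleA₁ γ p.1 * mleA₂ γ p.2 + mleA₃ γ p.1 * mleA₃ γ p.2)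
      (Ioc (0:ℝ) 1 ×ˢ Ioc (0:ℝ) 1) :=
    (((mle_prodInt (mleA₁_int hγ) (mleA₁_int hγ)).add
        (mle_prodInt (mleA₂_int hγ) (mleA₁_int hγ))).add
      (mle_prodInt (mleA₁_int hγ) (mleA₂_int hγ))).add
      (mle_prodInt (mleA₃_int hγ) (mleA₃_int hγ))
  -- integrability of the full integrand
  have hFFint : IntegrableOn (fun p : ℝ × ℝ => mleF γ p.1 * mleF γ p.2 *
      (1 - p.1 ^ (-γ) - p.2 ^ (-γ) + min p.1 p.2 * (p.1 * p.2) ^ (-(γ + 1))))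
      (Ioc (0:ℝ) 1 ×ˢ Ioc (0:ℝ) 1) := by
    refine hQint.mono' hmeasF.aestronglyMeasurable ?_
    exact (ae_restrict_iff' hRmeas).2 (ae_of_all _ fun p hp => by
      rw [Real.norm_eq_abs]; exact mle_main_bound hγ hp.1 hp.2)
  -- integrability of the two halves of the `min` term
  have hA3A3 := mle_prodInt (mleA₃_int hγ) (mleA₃_int hγ)
  have hN1int : IntegrableOn
      (fun p : ℝ × ℝ => if p.1 ≤ p.2 then mleF γ p.1 * mleF γ p.2 *
        (min p.1 p.2 * (p.1 * p.2) ^ (-(γ + 1))) else 0)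
      (Ioc (0:ℝ) 1 ×ˢ Ioc (0:ℝ) 1) := by
    refine hA3A3.mono' ((hmeasM.ite
      (measurableSet_le measurable_fst measurable_snd)
      measurable_const).aestronglyMeasurable) ?_
    refine (ae_restrict_iff' hRmeas).2 (ae_of_all _ fun p hp => ?_)
    rcases le_or_gt p.1 p.2 with h | h
    · rw [if_pos h, Real.norm_eq_abs]; exact mleM_abs_le hγ hp.1.1 hp.2.1
    · rw [if_neg (not_le.2 h), norm_zero]
      exact mul_nonneg (mleA₃_nonneg hγ hp.1.1.le) (mleA₃_nonneg hγ hp.2.1.le)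
  have hN2int : IntegrableOn
      (fun p : ℝ × ℝ => if p.2 < p.1 then mleF γ p.1 * mleF γ p.2 *
        (min p.1 p.2 * (p.1 * p.2) ^ (-(γ + 1))) else 0)
      (Ioc (0:ℝ) 1 ×ˢ Ioc (0:ℝ) 1) := by
    refine hA3A3.mono' ((hmeasM.ite
      (measurableSet_lt measurable_snd measurable_fst)
      measurable_const).aestronglyMeasurable) ?_
    refine (ae_restrict_iff' hRmeas).2 (ae_of_all _ fun p hp => ?_)
    rcases lt_or_ge p.2 p.1 with h | h
    · rw [if_pos h, Real.norm_eq_abs]; exact mleM_abs_le hγ hp.1.1 hp.2.1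
    · rw [if_neg (not_lt.2 h), norm_zero]
      exact mul_nonneg (mleA₃_nonneg hγ hp.1.1.le) (mleA₃_nonneg hγ hp.2.1.le)
  -- the three product terms
  have hT1int := mle_prodInt (mleF_int hγ) (mleF_int hγ)
  have hT2int := mle_prodInt (mleG_int hγ) (mleF_int hγ)
  have hT3int := mle_prodInt (mleF_int hγ) (mleG_int hγ)
  refine ⟨hFFint, ?_⟩
  -- pointwise decomposition
  have hdecomp : EqOn
      (fun p : ℝ × ℝ => mleF γ p.1 * mleF γ p.2 *
        (1 - p.1 ^ (-γ) - p.2 ^ (-γ) + min p.1 p.2 * (p.1 * p.2) ^ (-(γ + 1))))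
      (fun p : ℝ × ℝ => mleF γ p.1 * mleF γ p.2
        - (mleF γ p.1 * p.1 ^ (-γ)) * mleF γ p.2
        - mleF γ p.1 * (mleF γ p.2 * p.2 ^ (-γ))
        + ((if p.1 ≤ p.2 then mleF γ p.1 * mleF γ p.2 *
              (min p.1 p.2 * (p.1 * p.2) ^ (-(γ + 1))) else 0)
          + (if p.2 < p.1 then mleF γ p.1 * mleF γ p.2 *
              (min p.1 p.2 * (p.1 * p.2) ^ (-(γ + 1))) else 0)))
      (Ioc (0:ℝ) 1 ×ˢ Ioc (0:ℝ) 1) := by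
    intro p _
    rcases le_or_gt p.1 p.2 with h | h
    · simp only [if_pos h, if_neg (not_lt.2 h)]; ring
    · simp only [if_neg (not_le.2 h), if_pos h]; ring
  show (∫ p in Ioc (0:ℝ) 1 ×ˢ Ioc (0:ℝ) 1,
      mleF γ p.1 * mleF γ p.2 *
        (1 - p.1 ^ (-γ) - p.2 ^ (-γ) + min p.1 p.2 * (p.1 * p.2) ^ (-(γ + 1))))
    = (1 + γ) ^ 2
  rw [setIntegral_congr_fun hRmeas hdecomp,
    mle_integral_decomp hT1int hT2int hT3int hN1int hN2int]
  -- values of the three product terms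
  have hT1 : (∫ p in Ioc (0:ℝ) 1 ×ˢ Ioc (0:ℝ) 1, mleF γ p.1 * mleF γ p.2)
      = (-(γ + 1)) * (-(γ + 1)) := by
    rw [Measure.volume_eq_prod, setIntegral_prod_mul (mleF γ) (mleF γ),
      mleF_integral hγ hγ0]
  have hT2 : (∫ p in Ioc (0:ℝ) 1 ×ˢ Ioc (0:ℝ) 1,
        (mleF γ p.1 * p.1 ^ (-γ)) * mleF γ p.2) = (-(γ + 1)) * (-(γ + 1)) := by
    rw [Measure.volume_eq_prod,
      setIntegral_prod_mul (fun x : ℝ => mleF γ x * x ^ (-γ)) (mleF γ),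
      mleF_integral hγ hγ0, mleG_integral hγ hγ0]
  have hT3 : (∫ p in Ioc (0:ℝ) 1 ×ˢ Ioc (0:ℝ) 1,
        mleF γ p.1 * (mleF γ p.2 * p.2 ^ (-γ))) = (-(γ + 1)) * (-(γ + 1)) := by
    rw [Measure.volume_eq_prod,
      setIntegral_prod_mul (mleF γ) (fun x : ℝ => mleF γ x * x ^ (-γ)),
      mleF_integral hγ hγ0, mleG_integral hγ hγ0]
  -- value of the `t ≤ s` half
  have hN2 : (∫ p in Ioc (0:ℝ) 1 ×ˢ Ioc (0:ℝ) 1,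
        (if p.2 < p.1 then mleF γ p.1 * mleF γ p.2 *
          (min p.1 p.2 * (p.1 * p.2) ^ (-(γ + 1))) else 0)) = (γ + 1) ^ 2 := by
    rw [Measure.volume_eq_prod, setIntegral_prod _ hN2int]
    rw [setIntegral_congr_fun measurableSet_Ioc
      (show EqOn
        (fun s : ℝ => ∫ t in Ioc (0:ℝ) 1, (if t < s then mleF γ s * mleF γ t *
          (min s t * (s * t) ^ (-(γ + 1))) else 0))
        (fun s : ℝ => ((γ + 1) ^ 2 / γ) ^ 2
          + (-(((γ + 1) ^ 2 / γ) ^ 2 * ((2 * γ + 1) + (2 * γ + 1) / (γ + 1)))) * s ^ γ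
          + (((γ + 1) ^ 2 / γ) ^ 2 * (2 * γ + 1) ^ 2 / (γ + 1)) * s ^ (2 * γ))
        (Ioc 0 1) from fun s hs => by
          beta_reduce
          rw [show (fun t : ℝ => if t < s then mleF γ s * mleF γ t *
                (min s t * (s * t) ^ (-(γ + 1))) else 0)
              = (Iio s).indicator (fun t : ℝ => mleF γ s * mleF γ t *
                (min s t * (s * t) ^ (-(γ + 1)))) from
            funext fun t => by simp [Set.indicator_apply],
            setIntegral_indicator measurableSet_Iio,
            show Ioc (0:ℝ) 1 ∩ Iio s = Ioo 0 s from by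
              ext x
              simp only [mem_inter_iff, mem_Ioc, mem_Iio, mem_Ioo]
              exact ⟨fun h => ⟨h.1.1, h.2⟩, fun h => ⟨⟨h.1, h.2.le.trans hs.2⟩, h.2⟩⟩,
            ← integral_Ioc_eq_integral_Ioo]
          exact mle_inner_int hγ hs.1)]
    exact mle_outer_int hγ hγ0
  -- value of the `s ≤ t` half, by the symmetry `swap`
  have hN1 : (∫ p in Ioc (0:ℝ) 1 ×ˢ Ioc (0:ℝ) 1,
        (if p.1 ≤ p.2 then mleF γ p.1 * mleF γ p.2 *
          (min p.1 p.2 * (p.1 * p.2) ^ (-(γ + 1))) else 0)) = (γ + 1) ^ 2 := by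
    have hswap : (∫ p in Ioc (0:ℝ) 1 ×ˢ Ioc (0:ℝ) 1,
          (if p.1 ≤ p.2 then mleF γ p.1 * mleF γ p.2 *
            (min p.1 p.2 * (p.1 * p.2) ^ (-(γ + 1))) else 0))
        = ∫ p in Ioc (0:ℝ) 1 ×ˢ Ioc (0:ℝ) 1,
          (if p.2 ≤ p.1 then mleF γ p.1 * mleF γ p.2 *
            (min p.1 p.2 * (p.1 * p.2) ^ (-(γ + 1))) else 0) := by
      rw [Measure.volume_eq_prod, ← Measure.prod_restrict]
      rw [show (fun p : ℝ × ℝ => if p.1 ≤ p.2 then mleF γ p.1 * mleF γ p.2 *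
            (min p.1 p.2 * (p.1 * p.2) ^ (-(γ + 1))) else 0)
          = (fun p : ℝ × ℝ => (fun q : ℝ × ℝ => if q.2 ≤ q.1 then
              mleF γ q.1 * mleF γ q.2 *
                (min q.1 q.2 * (q.1 * q.2) ^ (-(γ + 1))) else 0) p.swap) from
        funext fun p => by
          simp only [Prod.fst_swap, Prod.snd_swap]
          rcases le_or_gt p.1 p.2 with h | h
          · rw [if_pos h, if_pos h, min_comm p.2 p.1, mul_comm p.2 p.1]; ring
          · rw [if_neg (not_le.2 h), if_neg (not_le.2 h)]]
      exact MeasureTheory.integral_prod_swap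
        (μ := volume.restrict (Ioc (0:ℝ) 1)) (ν := volume.restrict (Ioc (0:ℝ) 1))
        (fun q : ℝ × ℝ => if q.2 ≤ q.1 then mleF γ q.1 * mleF γ q.2 *
          (min q.1 q.2 * (q.1 * q.2) ^ (-(γ + 1))) else 0)
    rw [hswap, Measure.volume_eq_prod, setIntegral_prod]
    · rw [setIntegral_congr_fun measurableSet_Ioc
        (show EqOn
          (fun s : ℝ => ∫ t in Ioc (0:ℝ) 1, (if t ≤ s then mleF γ s * mleF γ t *
            (min s t * (s * t) ^ (-(γ + 1))) else 0))
          (fun s : ℝ => ((γ + 1) ^ 2 / γ) ^ 2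
            + (-(((γ + 1) ^ 2 / γ) ^ 2 * ((2 * γ + 1) + (2 * γ + 1) / (γ + 1)))) * s ^ γ
            + (((γ + 1) ^ 2 / γ) ^ 2 * (2 * γ + 1) ^ 2 / (γ + 1)) * s ^ (2 * γ))
          (Ioc 0 1) from fun s hs => by
            beta_reduce
            rw [show (fun t : ℝ => if t ≤ s then mleF γ s * mleF γ t *
                  (min s t * (s * t) ^ (-(γ + 1))) else 0)
                = (Iic s).indicator (fun t : ℝ => mleF γ s * mleF γ t *
                  (min s t * (s * t) ^ (-(γ + 1)))) from
              funext fun t => by simp [Set.indicator_apply],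
              setIntegral_indicator measurableSet_Iic,
              show Ioc (0:ℝ) 1 ∩ Iic s = Ioc 0 s from by
                ext x
                simp only [mem_inter_iff, mem_Ioc, mem_Iic]
                exact ⟨fun h => ⟨h.1.1, h.2⟩, fun h => ⟨⟨h.1, h.2.trans hs.2⟩, h.2⟩⟩]
            exact mle_inner_int hγ hs.1)]
      exact mle_outer_int hγ hγ0
    · -- integrability after swap
      have : IntegrableOn
          (fun p : ℝ × ℝ => if p.2 ≤ p.1 then mleF γ p.1 * mleF γ p.2 *
            (min p.1 p.2 * (p.1 * p.2) ^ (-(γ + 1))) else 0)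
          (Ioc (0:ℝ) 1 ×ˢ Ioc (0:ℝ) 1) := by
        refine hA3A3.mono' ((hmeasM.ite
          (measurableSet_le measurable_snd measurable_fst)
          measurable_const).aestronglyMeasurable) ?_
        refine (ae_restrict_iff' hRmeas).2 (ae_of_all _ fun p hp => ?_)
        rcases le_or_gt p.2 p.1 with h | h
        · rw [if_pos h, Real.norm_eq_abs]; exact mleM_abs_le hγ hp.1.1 hp.2.1
        · rw [if_neg (not_le.2 h), norm_zero]
          exact mul_nonneg (mleA₃_nonneg hγ hp.1.1.le) (mleA₃_nonneg hγ hp.2.1.le)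
      exact this
  rw [hT1, hT2, hT3, hN1, hN2]
  ring
end

section
/- Let γ > −1/2 with γ ≠ 0, and define f(t) = ((γ+1)²/γ)(t^γ − (2γ+1)t^{2γ}), g(t) = ((γ+1)/γ)((γ+1)(2γ+1)t^{2γ} − t^γ) for t ∈ (0,1], and K(s,t) = 1 − s^{−γ} − t^{−γ} + min(s,t)·(st)^{−(γ+1)} for s, t ∈ (0,1]. Then ∫₀¹∫₀¹ f(s) g(t) K(s,t) ds dt = −(1+γ), where the double integral converges absolutely. -/
open MeasureTheory Set

namespace MLECovAux

open Real Filter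


lemma integrableOn_rpow {c : ℝ} (hc : -1 < c) :
    IntegrableOn (fun t : ℝ => t ^ c) (Ioc (0:ℝ) 1) :=
  (intervalIntegral.intervalIntegrable_rpow' hc).1

lemma integrableOn_rpow_sub {c : ℝ} {s : ℝ} (hs : 0 < s) (hs1 : s ≤ 1) :
    IntegrableOn (fun t : ℝ => t ^ c) (Ioc s 1) :=
  (intervalIntegral.intervalIntegrable_rpow
    (μ := volume) (a := s) (b := 1)
    (Or.inr (by rw [Set.uIcc_of_le hs1]; exact fun h => absurd h.1 (not_le.2 hs)))).1

lemma setIntegral_rpow {c : ℝ} (hc : -1 < c) {s : ℝ} (hs : 0 < s) :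
    ∫ t in Ioc (0:ℝ) s, t ^ c = s ^ (c+1) / (c+1) := by
  rw [← intervalIntegral.integral_of_le hs.le, integral_rpow (Or.inl hc),
    Real.zero_rpow (by linarith : c + 1 ≠ 0)]
  ring

lemma setIntegral_rpow_sub {c : ℝ} (hc : c ≠ -1) {s : ℝ} (hs : 0 < s) (hs1 : s ≤ 1) :
    ∫ t in Ioc s 1, t ^ c = (1 - s ^ (c+1)) / (c+1) := by
  rw [← intervalIntegral.integral_of_le hs1, integral_rpow
    (Or.inr ⟨hc, by rw [Set.uIcc_of_le hs1]; exact fun h => absurd h.1 (not_le.2 hs)⟩),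
    Real.one_rpow]

lemma setIntegral_inv_sub {s : ℝ} (hs : 0 < s) (hs1 : s ≤ 1) :
    ∫ t in Ioc s 1, t ^ (-1:ℝ) = -Real.log s := by
  rw [← intervalIntegral.integral_of_le hs1]
  have : ∀ t : ℝ, t ^ (-1:ℝ) = t⁻¹ := fun t => Real.rpow_neg_one t
  simp_rw [this]
  rw [integral_inv
    (by rw [Set.uIcc_of_le hs1]; exact fun h => absurd h.1 (not_le.2 hs))]
  rw [Real.log_div one_ne_zero hs.ne']
  simp

lemma integrableOn_rpow_mul_log {c : ℝ} (hc : -1 < c) :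
    IntegrableOn (fun t : ℝ => t ^ c * Real.log t) (Ioc (0:ℝ) 1) := by
  have hq : (0:ℝ) < (c+1)/2 := by linarith
  have hdom : IntegrableOn (fun t : ℝ => t ^ ((c-1)/2) / ((c+1)/2)) (Ioc (0:ℝ) 1) := by
    have h := integrableOn_rpow (c := (c-1)/2) (by linarith)
    exact h.div_const _
  refine Integrable.mono hdom ?_ ?_
  · refine ContinuousOn.aestronglyMeasurable ?_ measurableSet_Ioc
    exact (continuousOn_id.rpow_const (fun x hx => Or.inl hx.1.ne')).mul
      (Real.continuousOn_log.mono (fun x hx => hx.1.ne'))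
  · rw [ae_restrict_iff' measurableSet_Ioc]
    filter_upwards with t ht
    have ht0 := ht.1
    have h1 : |Real.log t| = Real.log t⁻¹ := by
      rw [Real.log_inv, abs_of_nonpos (Real.log_nonpos ht0.le ht.2)]
    have h2 : Real.log t⁻¹ ≤ (t⁻¹) ^ ((c+1)/2) / ((c+1)/2) :=
      Real.log_le_rpow_div (inv_nonneg.2 ht0.le) hq
    have h3 : (t⁻¹) ^ ((c+1)/2) = t ^ (-((c+1)/2)) := by
      rw [← Real.rpow_neg_one t, ← Real.rpow_mul ht0.le]
      norm_num
    have habs : ‖t ^ c * Real.log t‖ = t ^ c * |Real.log t| := by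
      rw [norm_mul, Real.norm_eq_abs, Real.norm_eq_abs,
        abs_of_nonneg (Real.rpow_nonneg ht0.le c)]
    rw [habs, h1]
    have hle : t ^ c * Real.log t⁻¹ ≤ t ^ c * (t ^ (-((c+1)/2)) / ((c+1)/2)) := by
      refine mul_le_mul_of_nonneg_left ?_ (Real.rpow_nonneg ht0.le c)
      rw [← h3]; exact h2
    refine hle.trans ?_
    have : t ^ c * (t ^ (-((c+1)/2)) / ((c+1)/2)) = t ^ ((c-1)/2) / ((c+1)/2) := by
      rw [mul_div_assoc', ← Real.rpow_add ht0, show c + -((c+1)/2) = (c-1)/2 by ring]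
    rw [this, Real.norm_eq_abs, abs_of_nonneg]
    positivity

lemma setIntegral_rpow_mul_log {c : ℝ} (hc : -1 < c) :
    ∫ t in Ioc (0:ℝ) 1, t ^ c * Real.log t = -(1/(c+1)^2) := by
  have h1 : (0:ℝ) < c + 1 := by linarith
  set F : ℝ → ℝ := fun t => ((c+1) * (Real.log t * t ^ (c+1)) - t ^ (c+1)) / (c+1)^2 with hF
  have hF0 : F 0 = 0 := by simp [hF, Real.zero_rpow h1.ne']
  have hcont : ContinuousOn F (Icc (0:ℝ) 1) := by
    intro x hx
    rcases eq_or_lt_of_le hx.1 with h | h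
    · subst h
      refine ContinuousWithinAt.mono ?_ (Icc_subset_Ici_self)
      rw [← continuousWithinAt_Ioi_iff_Ici]
      have hP : Tendsto (fun t : ℝ => t ^ (c+1)) (nhdsWithin 0 (Ioi 0)) (nhds 0) := by
        have := (Real.continuousAt_rpow_const 0 (c+1) (Or.inr h1.le)).tendsto
        rw [Real.zero_rpow h1.ne'] at this
        exact this.mono_left nhdsWithin_le_nhds
      have hL : Tendsto (fun t : ℝ => Real.log t * t ^ (c+1)) (nhdsWithin 0 (Ioi 0)) (nhds 0) :=
        tendsto_log_mul_rpow_nhdsGT_zero h1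
      have : Tendsto F (nhdsWithin 0 (Ioi 0)) (nhds (((c+1) * 0 - 0) / (c+1)^2)) :=
        ((hL.const_mul (c+1)).sub hP).div_const _
      simpa [ContinuousWithinAt, hF0] using this
    · refine ContinuousAt.continuousWithinAt ?_
      have hlog : ContinuousAt Real.log x := Real.continuousAt_log h.ne'
      have hpow : ContinuousAt (fun t : ℝ => t ^ (c+1)) x :=
        Real.continuousAt_rpow_const x (c+1) (Or.inl h.ne')
      exact (((hlog.mul hpow).const_mul (c+1)).sub hpow).div_const _
  have hderiv : ∀ x ∈ Ioo (0:ℝ) 1, HasDerivWithinAt F (x ^ c * Real.log x) (Ioi x) x := by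
    intro x hx
    have hx0 : (0:ℝ) < x := hx.1
    have hdp : HasDerivAt (fun t : ℝ => t ^ (c+1)) ((c+1) * x ^ c) x := by
      have := Real.hasDerivAt_rpow_const (x := x) (p := c+1) (Or.inl hx0.ne')
      simpa [add_sub_cancel_right] using this
    have hdl : HasDerivAt Real.log x⁻¹ x := Real.hasDerivAt_log hx0.ne'
    have hd : HasDerivAt F
        (((c+1) * (x⁻¹ * x ^ (c+1) + Real.log x * ((c+1) * x ^ c)) - (c+1) * x ^ c) / (c+1)^2)
        x := (((hdl.mul hdp).const_mul (c+1)).sub hdp).div_const _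
    refine (hd.congr_deriv ?_).hasDerivWithinAt
    have e1 : x⁻¹ * x ^ (c+1) = x ^ c := by
      rw [← Real.rpow_neg_one x, ← Real.rpow_add hx0]
      norm_num
    rw [e1]
    field_simp
    ring
  have hint : IntervalIntegrable (fun t : ℝ => t ^ c * Real.log t) volume 0 1 := by
    rw [intervalIntegrable_iff_integrableOn_Ioc_of_le zero_le_one]
    exact integrableOn_rpow_mul_log hc
  rw [← intervalIntegral.integral_of_le zero_le_one,
    intervalIntegral.integral_eq_sub_of_hasDeriv_right_of_le zero_le_one hcont hderiv hint,
    hF0]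
  simp [hF]
  ring

lemma integrableOn_log : IntegrableOn Real.log (Ioc (0:ℝ) 1) := by
  refine (integrableOn_rpow_mul_log (c := 0) (by norm_num)).congr_fun ?_ measurableSet_Ioc
  intro t ht
  simp [Real.rpow_zero]

lemma setIntegral_log : ∫ t in Ioc (0:ℝ) 1, Real.log t = -1 := by
  have h := setIntegral_rpow_mul_log (c := 0) (by norm_num)
  have hEq : EqOn (fun t : ℝ => t ^ (0:ℝ) * Real.log t) Real.log (Ioc (0:ℝ) 1) := by
    intro t ht; simp [Real.rpow_zero]
  calc ∫ t in Ioc (0:ℝ) 1, Real.log t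
      = ∫ t in Ioc (0:ℝ) 1, t ^ (0:ℝ) * Real.log t :=
        (setIntegral_congr_fun measurableSet_Ioc hEq).symm
    _ = -1 := by rw [h]; norm_num


end MLECovAux

open MLECovAux

set_option maxHeartbeats 1000000 in
/-- The asymptotic covariance `-(1+γ)` between the m.l.e.'s of the extreme value
index and of the generalized Pareto scale as a deterministic double integral
against the covariance kernel `K(s,t) = 1 - s^{-γ} - t^{-γ} + min(s,t)(st)^{-(γ+1)}`. -/
theorem mle_index_scale_asymptotic_covariance (γ : ℝ) (hγ : -(1 / 2) < γ) (hγ0 : γ ≠ 0) :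
    IntegrableOn
      (fun p : ℝ × ℝ =>
        (((γ + 1) ^ 2 / γ) * (p.1 ^ γ - (2 * γ + 1) * p.1 ^ (2 * γ))) *
        (((γ + 1) / γ) * ((γ + 1) * (2 * γ + 1) * p.2 ^ (2 * γ) - p.2 ^ γ)) *
        (1 - p.1 ^ (-γ) - p.2 ^ (-γ) + min p.1 p.2 * (p.1 * p.2) ^ (-(γ + 1))))
      (Ioc (0 : ℝ) 1 ×ˢ Ioc (0 : ℝ) 1) ∧
    ∫ p in Ioc (0 : ℝ) 1 ×ˢ Ioc (0 : ℝ) 1,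
        (((γ + 1) ^ 2 / γ) * (p.1 ^ γ - (2 * γ + 1) * p.1 ^ (2 * γ))) *
        (((γ + 1) / γ) * ((γ + 1) * (2 * γ + 1) * p.2 ^ (2 * γ) - p.2 ^ γ)) *
        (1 - p.1 ^ (-γ) - p.2 ^ (-γ) + min p.1 p.2 * (p.1 * p.2) ^ (-(γ + 1))) =
      -(1 + γ) := by
  have hγ' : (-1:ℝ) < γ := by linarith
  have h2γ' : (-1:ℝ) < 2*γ := by linarith
  have hγ1 : (0:ℝ) < γ + 1 := by linarith
  have h2γ1 : (0:ℝ) < 2*γ + 1 := by linarith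
  have hγm : (-1:ℝ) < γ - 1/2 := by linarith
  set A := (γ+1)^2/γ with hA
  set B := (γ+1)/γ with hB
  set F : ℝ → ℝ := fun s => A * (s ^ γ - (2*γ+1) * s ^ (2*γ)) with hF
  set G : ℝ → ℝ := fun t => B * ((γ+1)*(2*γ+1)*t^(2*γ) - t^γ) with hG
  set Fa : ℝ → ℝ := fun s => A * (1 - (2*γ+1) * s ^ γ) with hFa
  set Ga : ℝ → ℝ := fun t => B * ((γ+1)*(2*γ+1)*t^γ - 1) with hGa
  set φ : ℝ → ℝ := fun s => A * (s ^ (-1:ℝ) - (2*γ+1) * s ^ (γ-1)) with hφ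
  set ψ : ℝ → ℝ := fun t => B * ((γ+1)*(2*γ+1)*t^(γ-1) - t^(-1:ℝ)) with hψ
  have hS : MeasurableSet (Ioc (0:ℝ) 1 ×ˢ Ioc (0:ℝ) 1) :=
    measurableSet_Ioc.prod measurableSet_Ioc
  have hμprod : (volume.restrict (Ioc (0:ℝ) 1)).prod (volume.restrict (Ioc (0:ℝ) 1))
      = volume.restrict (Ioc (0:ℝ) 1 ×ˢ Ioc (0:ℝ) 1) := by
    rw [Measure.prod_restrict, ← Measure.volume_eq_prod]
  -- pointwise identity
  have hEq : EqOn
      (fun p : ℝ × ℝ =>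
        (((γ + 1) ^ 2 / γ) * (p.1 ^ γ - (2 * γ + 1) * p.1 ^ (2 * γ))) *
        (((γ + 1) / γ) * ((γ + 1) * (2 * γ + 1) * p.2 ^ (2 * γ) - p.2 ^ γ)) *
        (1 - p.1 ^ (-γ) - p.2 ^ (-γ) + min p.1 p.2 * (p.1 * p.2) ^ (-(γ + 1))))
      (fun p : ℝ × ℝ =>
        F p.1 * G p.2 - Fa p.1 * G p.2 - F p.1 * Ga p.2 + min p.1 p.2 * (φ p.1 * ψ p.2))
      (Ioc (0:ℝ) 1 ×ˢ Ioc (0:ℝ) 1) := by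
    rintro ⟨s, t⟩ ⟨hs, ht⟩
    have hs0 : (0:ℝ) < s := hs.1
    have ht0 : (0:ℝ) < t := ht.1
    have hsγ : (0:ℝ) < s ^ γ := Real.rpow_pos_of_pos hs0 γ
    have htγ : (0:ℝ) < t ^ γ := Real.rpow_pos_of_pos ht0 γ
    simp only [hF, hG, hFa, hGa, hφ, hψ, hA, hB]
    have hs2 : s ^ (2*γ) = s^γ * s^γ := by rw [two_mul, Real.rpow_add hs0]
    have ht2 : t ^ (2*γ) = t^γ * t^γ := by rw [two_mul, Real.rpow_add ht0]
    have hsn : s ^ (-γ) = (s^γ)⁻¹ := Real.rpow_neg hs0.le γ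
    have htn : t ^ (-γ) = (t^γ)⁻¹ := Real.rpow_neg ht0.le γ
    have hsm : s ^ (γ-1) = s^γ * s⁻¹ := by
      rw [show γ-1 = γ + (-1) by ring, Real.rpow_add hs0, Real.rpow_neg_one]
    have htm : t ^ (γ-1) = t^γ * t⁻¹ := by
      rw [show γ-1 = γ + (-1) by ring, Real.rpow_add ht0, Real.rpow_neg_one]
    have hst : (s*t) ^ (-(γ+1)) = (s^γ*s)⁻¹ * (t^γ*t)⁻¹ := by
      rw [Real.mul_rpow hs0.le ht0.le, Real.rpow_neg hs0.le, Real.rpow_neg ht0.le,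
        Real.rpow_add hs0, Real.rpow_add ht0, Real.rpow_one, Real.rpow_one]
    rw [hs2, ht2, hsn, htn, Real.rpow_neg_one, Real.rpow_neg_one, hsm, htm, hst]
    field_simp
  -- one-variable integrability
  have iγ : IntegrableOn (fun s : ℝ => s ^ γ) (Ioc (0:ℝ) 1) := integrableOn_rpow hγ'
  have i2γ : IntegrableOn (fun s : ℝ => s ^ (2*γ)) (Ioc (0:ℝ) 1) := integrableOn_rpow h2γ'
  have ic : IntegrableOn (fun _ : ℝ => (1:ℝ)) (Ioc (0:ℝ) 1) :=
    integrableOn_const measure_Ioc_lt_top.ne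
  have iF : Integrable F (volume.restrict (Ioc (0:ℝ) 1)) :=
    ((iγ.sub (i2γ.const_mul _)).const_mul _)
  have iG : Integrable G (volume.restrict (Ioc (0:ℝ) 1)) :=
    (((i2γ.const_mul _).sub iγ).const_mul _)
  have iFa : Integrable Fa (volume.restrict (Ioc (0:ℝ) 1)) :=
    ((ic.sub (iγ.const_mul _)).const_mul _)
  have iGa : Integrable Ga (volume.restrict (Ioc (0:ℝ) 1)) :=
    (((iγ.const_mul _).sub ic).const_mul _)
  -- continuity of φ, ψ on (0,1]
  have cφ : ContinuousOn φ (Ioc (0:ℝ) 1) := by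
    rw [hφ]
    exact continuousOn_const.mul
      ((continuousOn_id.rpow_const (fun x hx => Or.inl hx.1.ne')).sub
        (continuousOn_const.mul (continuousOn_id.rpow_const (fun x hx => Or.inl hx.1.ne'))))
  have cψ : ContinuousOn ψ (Ioc (0:ℝ) 1) := by
    rw [hψ]
    exact continuousOn_const.mul
      ((continuousOn_const.mul (continuousOn_id.rpow_const (fun x hx => Or.inl hx.1.ne'))).sub
        (continuousOn_id.rpow_const (fun x hx => Or.inl hx.1.ne')))
  -- dominating functions for the min-part
  have ig1 : Integrable (fun s : ℝ => s ^ ((1:ℝ)/2) * |φ s|)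
      (volume.restrict (Ioc (0:ℝ) 1)) := by
    refine Integrable.mono
      (g := fun s : ℝ => |A| * (s ^ (-(1/2):ℝ) + (2*γ+1) * s ^ (γ-1/2))) ?_ ?_ ?_
    · exact ((integrableOn_rpow (by norm_num)).add
        ((integrableOn_rpow hγm).const_mul _)).const_mul _
    · exact ((continuousOn_id.rpow_const (fun x hx => Or.inl hx.1.ne')).mul
        cφ.abs).aestronglyMeasurable measurableSet_Ioc
    · rw [ae_restrict_iff' measurableSet_Ioc]
      filter_upwards with s hs
      have hs0 : (0:ℝ) < s := hs.1
      have e1 : s ^ ((1:ℝ)/2) * s ^ (-1:ℝ) = s ^ (-(1/2):ℝ) := by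
        rw [← Real.rpow_add hs0]; norm_num
      have e2 : s ^ ((1:ℝ)/2) * s ^ (γ-1) = s ^ (γ-1/2) := by
        rw [← Real.rpow_add hs0, show (1:ℝ)/2 + (γ-1) = γ-1/2 by ring]
      have habs : |φ s| ≤ |A| * (s ^ (-1:ℝ) + (2*γ+1) * s ^ (γ-1)) := by
        rw [hφ, abs_mul]
        refine mul_le_mul_of_nonneg_left ?_ (abs_nonneg A)
        refine (abs_sub _ _).trans ?_
        rw [abs_of_nonneg (Real.rpow_nonneg hs0.le _), abs_mul,
          abs_of_nonneg h2γ1.le, abs_of_nonneg (Real.rpow_nonneg hs0.le _)]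
      have hnn : (0:ℝ) ≤ s ^ ((1:ℝ)/2) := Real.rpow_nonneg hs0.le _
      calc ‖s ^ ((1:ℝ)/2) * |φ s|‖ = s ^ ((1:ℝ)/2) * |φ s| := by
            rw [Real.norm_eq_abs]; exact abs_of_nonneg (mul_nonneg hnn (abs_nonneg _))
        _ ≤ s ^ ((1:ℝ)/2) * (|A| * (s ^ (-1:ℝ) + (2*γ+1) * s ^ (γ-1))) :=
            mul_le_mul_of_nonneg_left habs hnn
        _ = |A| * (s ^ ((1:ℝ)/2) * s ^ (-1:ℝ) + (2*γ+1) * (s ^ ((1:ℝ)/2) * s ^ (γ-1))) := by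
            ring
        _ = |A| * (s ^ (-(1/2):ℝ) + (2*γ+1) * s ^ (γ-1/2)) := by rw [e1, e2]
        _ ≤ ‖|A| * (s ^ (-(1/2):ℝ) + (2*γ+1) * s ^ (γ-1/2))‖ := by
            rw [Real.norm_eq_abs]; exact le_abs_self _
  have ig2 : Integrable (fun t : ℝ => t ^ ((1:ℝ)/2) * |ψ t|)
      (volume.restrict (Ioc (0:ℝ) 1)) := by
    refine Integrable.mono
      (g := fun t : ℝ => |B| * ((γ+1)*(2*γ+1) * t ^ (γ-1/2) + t ^ (-(1/2):ℝ))) ?_ ?_ ?_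
    · exact (((integrableOn_rpow hγm).const_mul _).add
        (integrableOn_rpow (by norm_num))).const_mul _
    · exact ((continuousOn_id.rpow_const (fun x hx => Or.inl hx.1.ne')).mul
        cψ.abs).aestronglyMeasurable measurableSet_Ioc
    · rw [ae_restrict_iff' measurableSet_Ioc]
      filter_upwards with t ht
      have ht0 : (0:ℝ) < t := ht.1
      have e1 : t ^ ((1:ℝ)/2) * t ^ (-1:ℝ) = t ^ (-(1/2):ℝ) := by
        rw [← Real.rpow_add ht0]; norm_num
      have e2 : t ^ ((1:ℝ)/2) * t ^ (γ-1) = t ^ (γ-1/2) := by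
        rw [← Real.rpow_add ht0, show (1:ℝ)/2 + (γ-1) = γ-1/2 by ring]
      have habs : |ψ t| ≤ |B| * ((γ+1)*(2*γ+1) * t ^ (γ-1) + t ^ (-1:ℝ)) := by
        rw [hψ, abs_mul]
        refine mul_le_mul_of_nonneg_left ?_ (abs_nonneg B)
        refine (abs_sub _ _).trans ?_
        rw [abs_of_nonneg (Real.rpow_nonneg ht0.le _), abs_mul,
          abs_of_nonneg (by positivity : (0:ℝ) ≤ (γ+1)*(2*γ+1)),
          abs_of_nonneg (Real.rpow_nonneg ht0.le _)]
      have hnn : (0:ℝ) ≤ t ^ ((1:ℝ)/2) := Real.rpow_nonneg ht0.le _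
      calc ‖t ^ ((1:ℝ)/2) * |ψ t|‖ = t ^ ((1:ℝ)/2) * |ψ t| := by
            rw [Real.norm_eq_abs]; exact abs_of_nonneg (mul_nonneg hnn (abs_nonneg _))
        _ ≤ t ^ ((1:ℝ)/2) * (|B| * ((γ+1)*(2*γ+1) * t ^ (γ-1) + t ^ (-1:ℝ))) :=
            mul_le_mul_of_nonneg_left habs hnn
        _ = |B| * ((γ+1)*(2*γ+1) * (t ^ ((1:ℝ)/2) * t ^ (γ-1)) + t ^ ((1:ℝ)/2) * t ^ (-1:ℝ)) := by
            ring
        _ = |B| * ((γ+1)*(2*γ+1) * t ^ (γ-1/2) + t ^ (-(1/2):ℝ)) := by rw [e1, e2]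
        _ ≤ ‖|B| * ((γ+1)*(2*γ+1) * t ^ (γ-1/2) + t ^ (-(1/2):ℝ))‖ := by
            rw [Real.norm_eq_abs]; exact le_abs_self _
  -- integrability of the min-part
  have iM : Integrable (fun p : ℝ × ℝ => min p.1 p.2 * (φ p.1 * ψ p.2))
      ((volume.restrict (Ioc (0:ℝ) 1)).prod (volume.restrict (Ioc (0:ℝ) 1))) := by
    refine Integrable.mono (ig1.mul_prod ig2) ?_ ?_
    · rw [hμprod]
      refine ContinuousOn.aestronglyMeasurable ?_ hS
      refine ((continuous_fst.min continuous_snd).continuousOn).mul ?_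
      exact (cφ.comp continuous_fst.continuousOn (fun p hp => hp.1)).mul
        (cψ.comp continuous_snd.continuousOn (fun p hp => hp.2))
    · rw [hμprod, ae_restrict_iff' hS]
      filter_upwards with p hp
      obtain ⟨hs, ht⟩ := hp
      have hs0 : (0:ℝ) < p.1 := hs.1
      have ht0 : (0:ℝ) < p.2 := ht.1
      have hmin0 : (0:ℝ) ≤ min p.1 p.2 := le_min hs0.le ht0.le
      have hmin : min p.1 p.2 ≤ p.1 ^ ((1:ℝ)/2) * p.2 ^ ((1:ℝ)/2) := by
        have h1 : min p.1 p.2 * min p.1 p.2 ≤ p.1 * p.2 :=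
          mul_le_mul (min_le_left _ _) (min_le_right _ _) hmin0 hs0.le
        calc min p.1 p.2 = Real.sqrt (min p.1 p.2 * min p.1 p.2) :=
              (Real.sqrt_mul_self hmin0).symm
          _ ≤ Real.sqrt (p.1 * p.2) := Real.sqrt_le_sqrt h1
          _ = Real.sqrt p.1 * Real.sqrt p.2 := Real.sqrt_mul hs0.le _
          _ = p.1 ^ ((1:ℝ)/2) * p.2 ^ ((1:ℝ)/2) := by
              rw [Real.sqrt_eq_rpow, Real.sqrt_eq_rpow]
      calc ‖min p.1 p.2 * (φ p.1 * ψ p.2)‖ = min p.1 p.2 * |φ p.1 * ψ p.2| := by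
            rw [Real.norm_eq_abs, abs_mul, abs_of_nonneg hmin0]
        _ ≤ (p.1 ^ ((1:ℝ)/2) * p.2 ^ ((1:ℝ)/2)) * |φ p.1 * ψ p.2| :=
            mul_le_mul_of_nonneg_right hmin (abs_nonneg _)
        _ = p.1 ^ ((1:ℝ)/2) * |φ p.1| * (p.2 ^ ((1:ℝ)/2) * |ψ p.2|) := by
            rw [abs_mul]; ring
        _ ≤ ‖p.1 ^ ((1:ℝ)/2) * |φ p.1| * (p.2 ^ ((1:ℝ)/2) * |ψ p.2|)‖ := by
            rw [Real.norm_eq_abs]; exact le_abs_self _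
  -- integrability of the full decomposed integrand
  have iT : Integrable
      (fun p : ℝ × ℝ =>
        F p.1 * G p.2 - Fa p.1 * G p.2 - F p.1 * Ga p.2 + min p.1 p.2 * (φ p.1 * ψ p.2))
      ((volume.restrict (Ioc (0:ℝ) 1)).prod (volume.restrict (Ioc (0:ℝ) 1))) :=
    (((iF.mul_prod iG).sub (iFa.mul_prod iG)).sub (iF.mul_prod iGa)).add iM
  constructor
  · refine IntegrableOn.congr_fun ?_ hEq.symm hS
    rw [IntegrableOn, ← hμprod]
    exact iT
  -- the integral computation
  have iFG : Integrable (fun p : ℝ × ℝ => F p.1 * G p.2)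
      ((volume.restrict (Ioc (0:ℝ) 1)).prod (volume.restrict (Ioc (0:ℝ) 1))) := iF.mul_prod iG
  have iFaG : Integrable (fun p : ℝ × ℝ => Fa p.1 * G p.2)
      ((volume.restrict (Ioc (0:ℝ) 1)).prod (volume.restrict (Ioc (0:ℝ) 1))) := iFa.mul_prod iG
  have iFGa : Integrable (fun p : ℝ × ℝ => F p.1 * Ga p.2)
      ((volume.restrict (Ioc (0:ℝ) 1)).prod (volume.restrict (Ioc (0:ℝ) 1))) := iF.mul_prod iGa
  have iT12 : Integrable (fun p : ℝ × ℝ => F p.1 * G p.2 - Fa p.1 * G p.2)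
      ((volume.restrict (Ioc (0:ℝ) 1)).prod (volume.restrict (Ioc (0:ℝ) 1))) := iFG.sub iFaG
  have iT123 : Integrable (fun p : ℝ × ℝ => F p.1 * G p.2 - Fa p.1 * G p.2 - F p.1 * Ga p.2)
      ((volume.restrict (Ioc (0:ℝ) 1)).prod (volume.restrict (Ioc (0:ℝ) 1))) := iT12.sub iFGa
  rw [setIntegral_congr_fun hS hEq, ← hμprod,
    integral_add iT123 iM, integral_sub iT12 iFGa, integral_sub iFG iFaG,
    integral_prod_mul, integral_prod_mul, integral_prod_mul,
    integral_prod _ iM]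
  -- values of the 1-d integrals
  have Jγ1 : ∫ s in Ioc (0:ℝ) 1, s ^ γ = 1/(γ+1) := by
    rw [MLECovAux.setIntegral_rpow hγ' one_pos, Real.one_rpow]
  have J2γ1 : ∫ s in Ioc (0:ℝ) 1, s ^ (2*γ) = 1/(2*γ+1) := by
    rw [MLECovAux.setIntegral_rpow h2γ' one_pos, Real.one_rpow]
  have Jc1 : ∫ _ in Ioc (0:ℝ) 1, (1:ℝ) = 1 := by simp
  have vF : ∫ s, F s ∂(volume.restrict (Ioc (0:ℝ) 1))
      = A * (1/(γ+1) - (2*γ+1) * (1/(2*γ+1))) := by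
    have h2 : Integrable (fun s : ℝ => (2*γ+1) * s ^ (2*γ))
        (volume.restrict (Ioc (0:ℝ) 1)) := i2γ.const_mul _
    simp only [hF]
    rw [integral_const_mul, integral_sub iγ h2, integral_const_mul, Jγ1, J2γ1]
  have vG : ∫ t, G t ∂(volume.restrict (Ioc (0:ℝ) 1))
      = B * ((γ+1)*(2*γ+1) * (1/(2*γ+1)) - 1/(γ+1)) := by
    have h2 : Integrable (fun t : ℝ => (γ+1)*(2*γ+1) * t ^ (2*γ))
        (volume.restrict (Ioc (0:ℝ) 1)) := i2γ.const_mul _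
    simp only [hG]
    rw [integral_const_mul, integral_sub h2 iγ, integral_const_mul, Jγ1, J2γ1]
  have vFa : ∫ s, Fa s ∂(volume.restrict (Ioc (0:ℝ) 1))
      = A * (1 - (2*γ+1) * (1/(γ+1))) := by
    have h2 : Integrable (fun s : ℝ => (2*γ+1) * s ^ γ)
        (volume.restrict (Ioc (0:ℝ) 1)) := iγ.const_mul _
    simp only [hFa]
    rw [integral_const_mul, integral_sub ic h2, integral_const_mul, Jγ1, Jc1]
  have vGa : ∫ t, Ga t ∂(volume.restrict (Ioc (0:ℝ) 1))
      = B * ((γ+1)*(2*γ+1) * (1/(γ+1)) - 1) := by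
    have h2 : Integrable (fun t : ℝ => (γ+1)*(2*γ+1) * t ^ γ)
        (volume.restrict (Ioc (0:ℝ) 1)) := iγ.const_mul _
    simp only [hGa]
    rw [integral_const_mul, integral_sub h2 ic, integral_const_mul, Jγ1, Jc1]
  -- the inner integral of the min part
  have hInner : EqOn
      (fun s : ℝ => ∫ t, min s t * (φ s * ψ t) ∂(volume.restrict (Ioc (0:ℝ) 1)))
      (fun s : ℝ =>
        A*B*(2*(2*γ+1) - (γ+1)*(2*γ+1)/γ - (2*γ+1)*((γ+1)*(2*γ+1)/γ)) * s ^ γ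
        + A*B*((2*γ+1)*((γ+1)*(2*γ+1)/γ - (2*γ+1))) * s ^ (2*γ)
        + A*B*((γ+1)*(2*γ+1)/γ - 1)
        + A*B * Real.log s
        + (-(A*B*(2*γ+1))) * (s ^ γ * Real.log s)) (Ioc (0:ℝ) 1) := by
    intro s hs
    have hs0 : (0:ℝ) < s := hs.1
    dsimp only
    have hre : (fun t : ℝ => min s t * (φ s * ψ t)) = fun t => φ s * (min s t * ψ t) := by
      funext t; ring
    rw [hre, integral_const_mul]
    have e1 : EqOn (fun t : ℝ => min s t * ψ t)
        (fun t : ℝ => B*((γ+1)*(2*γ+1)*t^γ - 1)) (Ioc (0:ℝ) s) := by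
      intro t ht
      have ht0 : (0:ℝ) < t := ht.1
      dsimp only
      rw [min_eq_right ht.2]; simp only [hψ]
      have htm : t ^ (γ-1) = t^γ * t⁻¹ := by
        rw [show γ-1 = γ + (-1) by ring, Real.rpow_add ht0, Real.rpow_neg_one]
      rw [htm, Real.rpow_neg_one]
      field_simp
    have w1 : IntegrableOn (fun t : ℝ => B*((γ+1)*(2*γ+1)*t^γ - 1)) (Ioc (0:ℝ) s) := by
      refine IntegrableOn.mono_set ?_ (Ioc_subset_Ioc_right hs.2)
      exact ((iγ.const_mul _).sub ic).const_mul _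
    have i1 : IntegrableOn (fun t : ℝ => min s t * ψ t) (Ioc (0:ℝ) s) :=
      w1.congr_fun e1.symm measurableSet_Ioc
    have val1 : ∫ t in Ioc (0:ℝ) s, min s t * ψ t
        = B*((γ+1)*(2*γ+1)*(s^(γ+1)/(γ+1)) - s) := by
      rw [setIntegral_congr_fun measurableSet_Ioc e1]
      have hγint : IntegrableOn (fun t : ℝ => (γ+1)*(2*γ+1)*t^γ) (Ioc (0:ℝ) s) := by
        refine IntegrableOn.mono_set ?_ (Ioc_subset_Ioc_right hs.2)
        exact iγ.const_mul _
      have hcint : IntegrableOn (fun _ : ℝ => (1:ℝ)) (Ioc (0:ℝ) s) :=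
        integrableOn_const measure_Ioc_lt_top.ne
      rw [integral_const_mul, integral_sub hγint hcint, integral_const_mul,
        MLECovAux.setIntegral_rpow hγ' hs0, setIntegral_const]
      simp [Real.volume_Ioc, ENNReal.toReal_ofReal hs0.le, hs0.le]
    have e2 : EqOn (fun t : ℝ => min s t * ψ t) (fun t : ℝ => s * ψ t) (Ioc s 1) := by
      intro t ht
      dsimp only
      rw [min_eq_left ht.1.le]
    have iψ2 : IntegrableOn ψ (Ioc s 1) := by
      rw [hψ]
      exact (((MLECovAux.integrableOn_rpow_sub hs0 hs.2).const_mul _).sub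
        (MLECovAux.integrableOn_rpow_sub hs0 hs.2)).const_mul _
    have i2 : IntegrableOn (fun t : ℝ => min s t * ψ t) (Ioc s 1) :=
      IntegrableOn.congr_fun (iψ2.const_mul s) e2.symm measurableSet_Ioc
    have val2 : ∫ t in Ioc s 1, min s t * ψ t
        = s * (B*((γ+1)*(2*γ+1)*((1 - s^γ)/γ) + Real.log s)) := by
      rw [setIntegral_congr_fun measurableSet_Ioc e2, integral_const_mul]
      have h1 : IntegrableOn (fun t : ℝ => (γ+1)*(2*γ+1)*t^(γ-1)) (Ioc s 1) :=
        (MLECovAux.integrableOn_rpow_sub hs0 hs.2).const_mul _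
      have h2 : IntegrableOn (fun t : ℝ => t^(-1:ℝ)) (Ioc s 1) :=
        MLECovAux.integrableOn_rpow_sub hs0 hs.2
      simp only [hψ]
      rw [integral_const_mul, integral_sub h1 h2, integral_const_mul,
        MLECovAux.setIntegral_rpow_sub (by intro h; apply hγ0; linarith) hs0 hs.2,
        MLECovAux.setIntegral_inv_sub hs0 hs.2,
        show γ - 1 + 1 = γ by ring]
      ring
    rw [show Ioc (0:ℝ) 1 = Ioc (0:ℝ) s ∪ Ioc s 1 from (Ioc_union_Ioc_eq_Ioc hs0.le hs.2).symm,
      setIntegral_union (Ioc_disjoint_Ioc_of_le le_rfl) measurableSet_Ioc i1 i2, val1, val2]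
    simp only [hφ]
    have hs2 : s ^ (2*γ) = s^γ * s^γ := by rw [two_mul, Real.rpow_add hs0]
    have hsp : s ^ (γ+1) = s^γ * s := by rw [Real.rpow_add hs0, Real.rpow_one]
    have hsm : s ^ (γ-1) = s^γ * s⁻¹ := by
      rw [show γ-1 = γ + (-1) by ring, Real.rpow_add hs0, Real.rpow_neg_one]
    rw [hs2, hsp, hsm, Real.rpow_neg_one]
    have hsγ0 : s ^ γ ≠ 0 := (Real.rpow_pos_of_pos hs0 γ).ne'
    field_simp [hs0.ne', hsγ0, hγ0, hγ1.ne', h2γ1.ne']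
    ring
  rw [setIntegral_congr_fun measurableSet_Ioc hInner]
  -- integrate the explicit outer integrand
  have iγlog : IntegrableOn (fun s : ℝ => s ^ γ * Real.log s) (Ioc (0:ℝ) 1) :=
    MLECovAux.integrableOn_rpow_mul_log hγ'
  have ilog : IntegrableOn Real.log (Ioc (0:ℝ) 1) := MLECovAux.integrableOn_log
  have Jlog : ∫ s in Ioc (0:ℝ) 1, Real.log s = -1 := MLECovAux.setIntegral_log
  have Jγlog : ∫ s in Ioc (0:ℝ) 1, s ^ γ * Real.log s = -(1/(γ+1)^2) :=
    MLECovAux.setIntegral_rpow_mul_log hγ'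
  have k1 : Integrable (fun s : ℝ =>
      A*B*(2*(2*γ+1) - (γ+1)*(2*γ+1)/γ - (2*γ+1)*((γ+1)*(2*γ+1)/γ)) * s ^ γ)
      (volume.restrict (Ioc (0:ℝ) 1)) := iγ.const_mul _
  have k2 : Integrable (fun s : ℝ => A*B*((2*γ+1)*((γ+1)*(2*γ+1)/γ - (2*γ+1))) * s ^ (2*γ))
      (volume.restrict (Ioc (0:ℝ) 1)) := i2γ.const_mul _
  have k3 : Integrable (fun _ : ℝ => A*B*((γ+1)*(2*γ+1)/γ - 1))
      (volume.restrict (Ioc (0:ℝ) 1)) := integrableOn_const measure_Ioc_lt_top.ne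
  have k4 : Integrable (fun s : ℝ => A*B * Real.log s)
      (volume.restrict (Ioc (0:ℝ) 1)) := ilog.const_mul _
  have k5 : Integrable (fun s : ℝ => (-(A*B*(2*γ+1))) * (s ^ γ * Real.log s))
      (volume.restrict (Ioc (0:ℝ) 1)) := iγlog.const_mul _
  have k12 : Integrable (fun s : ℝ =>
      A*B*(2*(2*γ+1) - (γ+1)*(2*γ+1)/γ - (2*γ+1)*((γ+1)*(2*γ+1)/γ)) * s ^ γ
      + A*B*((2*γ+1)*((γ+1)*(2*γ+1)/γ - (2*γ+1))) * s ^ (2*γ))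
      (volume.restrict (Ioc (0:ℝ) 1)) := k1.add k2
  have k123 : Integrable (fun s : ℝ =>
      A*B*(2*(2*γ+1) - (γ+1)*(2*γ+1)/γ - (2*γ+1)*((γ+1)*(2*γ+1)/γ)) * s ^ γ
      + A*B*((2*γ+1)*((γ+1)*(2*γ+1)/γ - (2*γ+1))) * s ^ (2*γ)
      + A*B*((γ+1)*(2*γ+1)/γ - 1))
      (volume.restrict (Ioc (0:ℝ) 1)) := k12.add k3
  have k1234 : Integrable (fun s : ℝ =>
      A*B*(2*(2*γ+1) - (γ+1)*(2*γ+1)/γ - (2*γ+1)*((γ+1)*(2*γ+1)/γ)) * s ^ γ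
      + A*B*((2*γ+1)*((γ+1)*(2*γ+1)/γ - (2*γ+1))) * s ^ (2*γ)
      + A*B*((γ+1)*(2*γ+1)/γ - 1)
      + A*B * Real.log s)
      (volume.restrict (Ioc (0:ℝ) 1)) := k123.add k4
  have v1 : ∫ s in Ioc (0:ℝ) 1,
      A*B*(2*(2*γ+1) - (γ+1)*(2*γ+1)/γ - (2*γ+1)*((γ+1)*(2*γ+1)/γ)) * s ^ γ
      = A*B*(2*(2*γ+1) - (γ+1)*(2*γ+1)/γ - (2*γ+1)*((γ+1)*(2*γ+1)/γ)) * (1/(γ+1)) := by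
    rw [integral_const_mul, Jγ1]
  have v2 : ∫ s in Ioc (0:ℝ) 1, A*B*((2*γ+1)*((γ+1)*(2*γ+1)/γ - (2*γ+1))) * s ^ (2*γ)
      = A*B*((2*γ+1)*((γ+1)*(2*γ+1)/γ - (2*γ+1))) * (1/(2*γ+1)) := by
    rw [integral_const_mul, J2γ1]
  have v3 : ∫ _ in Ioc (0:ℝ) 1, A*B*((γ+1)*(2*γ+1)/γ - 1)
      = A*B*((γ+1)*(2*γ+1)/γ - 1) := by
    rw [setIntegral_const]
    simp [Real.volume_Ioc]
  have v4 : ∫ s in Ioc (0:ℝ) 1, A*B * Real.log s = A*B * (-1) := by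
    rw [integral_const_mul, Jlog]
  have v5 : ∫ s in Ioc (0:ℝ) 1, (-(A*B*(2*γ+1))) * (s ^ γ * Real.log s)
      = (-(A*B*(2*γ+1))) * (-(1/(γ+1)^2)) := by
    rw [integral_const_mul, Jγlog]
  rw [vF, vG, vFa, vGa, integral_add k1234 k5, integral_add k123 k4, integral_add k12 k3,
    integral_add k1 k2, v1, v2, v3, v4, v5]
  simp only [hA, hB]
  field_simp [hγ0, hγ1.ne', h2γ1.ne', show γ*2+1 ≠ 0 by linarith]
  ring
end

section
/- Let γ > −1/2 with γ ≠ 0, and define g(t) = ((γ+1)/γ)((γ+1)(2γ+1)t^{2γ} − t^γ) for t ∈ (0,1] and K(s,t) = 1 − s^{−γ} − t^{−γ} + min(s,t)·(st)^{−(γ+1)} for s, t ∈ (0,1]. Then ∫₀¹∫₀¹ g(s) g(t) K(s,t) ds dt = 2 + 2γ + γ², where the double integral converges absolutely. -/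
open MeasureTheory Set


lemma L1i (a : ℝ) (ha : -1 < a) : IntegrableOn (fun x : ℝ => x ^ a) (Ioc 0 1) := by
  rw [← intervalIntegrable_iff_integrableOn_Ioc_of_le zero_le_one]
  exact intervalIntegral.intervalIntegrable_rpow' ha

lemma L1v (a x : ℝ) (ha : -1 < a) (hx : 0 < x) :
    ∫ t in Ioc (0:ℝ) x, t ^ a = x ^ (a + 1) / (a + 1) := by
  rw [← intervalIntegral.integral_of_le hx.le, integral_rpow (Or.inl ha),
    Real.zero_rpow (by linarith), sub_zero]

lemma sq_meas : (volume : Measure (ℝ × ℝ)).restrict (Ioc 0 1 ×ˢ Ioc 0 1)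
    = (volume.restrict (Ioc 0 1)).prod (volume.restrict (Ioc 0 1)) := by
  rw [Measure.volume_eq_prod, Measure.prod_restrict]

lemma sep {F G : ℝ → ℝ} (hF : IntegrableOn F (Ioc 0 1)) (hG : IntegrableOn G (Ioc 0 1)) :
    IntegrableOn (fun z : ℝ × ℝ => F z.1 * G z.2) (Ioc 0 1 ×ˢ Ioc 0 1) ∧
      ∫ z in Ioc (0:ℝ) 1 ×ˢ Ioc (0:ℝ) 1, F z.1 * G z.2
        = (∫ x in Ioc (0:ℝ) 1, F x) * (∫ x in Ioc (0:ℝ) 1, G x) := by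
  rw [IntegrableOn, sq_meas]
  exact ⟨hF.mul_prod hG, integral_prod_mul F G⟩

lemma pt_bound {x y a b m : ℝ} (hx : 0 < x) (hy : 0 < y) (hyx : y ≤ x)
    (hm : m = (a + b) / 2) (hba : b ≤ a) :
    y ^ a * x ^ b ≤ x ^ m * y ^ m := by
  set d : ℝ := (a - b) / 2 with hd
  have hd0 : 0 ≤ d := by rw [hd]; linarith
  have e1 : y ^ a = y ^ m * y ^ d := by
    rw [← Real.rpow_add hy, show m + d = a by rw [hm, hd]; ring]
  have e2 : x ^ b = x ^ m * x ^ (-d) := by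
    rw [← Real.rpow_add hx, show m + -d = b by rw [hm, hd]; ring]
  have h3 : y ^ d ≤ x ^ d := Real.rpow_le_rpow hy.le hyx hd0
  have p1 : (0:ℝ) < x ^ d := Real.rpow_pos_of_pos hx d
  calc y ^ a * x ^ b = (x ^ m * y ^ m) * (y ^ d * (x ^ d)⁻¹) := by
        rw [e1, e2, Real.rpow_neg hx.le]; ring
    _ ≤ (x ^ m * y ^ m) * 1 := by
        apply mul_le_mul_of_nonneg_left _ (by positivity)
        rw [← div_eq_mul_inv, div_le_one p1]; exact h3
    _ = x ^ m * y ^ m := by ring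

lemma tri_le (a b : ℝ) (ha : -1 < a) (hab : -2 < a + b) :
    IntegrableOn (fun z : ℝ × ℝ => if z.2 ≤ z.1 then z.2 ^ a * z.1 ^ b else 0)
      (Ioc 0 1 ×ˢ Ioc 0 1) ∧
    ∫ z in Ioc (0:ℝ) 1 ×ˢ Ioc (0:ℝ) 1, (if z.2 ≤ z.1 then z.2 ^ a * z.1 ^ b else 0)
      = 1 / ((a + 1) * (a + b + 2)) := by
  have hsq : MeasurableSet (Ioc (0:ℝ) 1 ×ˢ Ioc (0:ℝ) 1) :=
    measurableSet_Ioc.prod measurableSet_Ioc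
  have hra : Measurable fun x : ℝ => x ^ a := by measurability
  have hrb : Measurable fun x : ℝ => x ^ b := by measurability
  have hmeas : Measurable (fun z : ℝ × ℝ => if z.2 ≤ z.1 then z.2 ^ a * z.1 ^ b else 0) :=
    Measurable.ite (measurableSet_le measurable_snd measurable_fst)
      ((hra.comp measurable_snd).mul (hrb.comp measurable_fst)) measurable_const
  have hint : IntegrableOn (fun z : ℝ × ℝ => if z.2 ≤ z.1 then z.2 ^ a * z.1 ^ b else 0)
      (Ioc 0 1 ×ˢ Ioc 0 1) := by
    rcases le_or_gt b (-1) with hb | hb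
    · set m : ℝ := (a + b) / 2 with hm
      have hm1 : -1 < m := by rw [hm]; linarith
      refine Integrable.mono ((sep (L1i m hm1) (L1i m hm1)).1)
        (hmeas.aestronglyMeasurable.restrict) ?_
      rw [ae_restrict_iff' hsq]
      refine ae_of_all _ fun z hz => ?_
      obtain ⟨hz1, hz2⟩ := hz
      have h01 : 0 < z.1 := hz1.1
      have h02 : 0 < z.2 := hz2.1
      simp only [Real.norm_eq_abs]
      by_cases h : z.2 ≤ z.1
      · rw [if_pos h]
        have hb1 : z.2 ^ a * z.1 ^ b ≤ z.1 ^ m * z.2 ^ m :=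
          pt_bound hz1.1 hz2.1 h hm (by linarith)
        rw [abs_of_pos (by positivity), abs_of_pos (by positivity)]
        exact hb1
      · rw [if_neg h, abs_zero]; exact abs_nonneg _
    · refine Integrable.mono ((sep (L1i b hb) (L1i a ha)).1)
        (hmeas.aestronglyMeasurable.restrict) ?_
      rw [ae_restrict_iff' hsq]
      refine ae_of_all _ fun z hz => ?_
      obtain ⟨hz1, hz2⟩ := hz
      have h01 : 0 < z.1 := hz1.1
      have h02 : 0 < z.2 := hz2.1
      simp only [Real.norm_eq_abs]
      by_cases h : z.2 ≤ z.1
      · rw [if_pos h, abs_of_pos (by positivity), abs_of_pos (by positivity)]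
        exact le_of_eq (mul_comm _ _)
      · rw [if_neg h, abs_zero]; exact abs_nonneg _
  refine ⟨hint, ?_⟩
  have hint' : Integrable (fun z : ℝ × ℝ => if z.2 ≤ z.1 then z.2 ^ a * z.1 ^ b else 0)
      ((volume.restrict (Ioc 0 1)).prod (volume.restrict (Ioc 0 1))) := by
    rw [← sq_meas]; exact hint
  rw [show (∫ z in Ioc (0:ℝ) 1 ×ˢ Ioc (0:ℝ) 1, (if z.2 ≤ z.1 then z.2 ^ a * z.1 ^ b else 0))
      = ∫ z, (if z.2 ≤ z.1 then z.2 ^ a * z.1 ^ b else 0)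
          ∂((volume.restrict (Ioc 0 1)).prod (volume.restrict (Ioc 0 1))) from by rw [← sq_meas]]
  rw [integral_prod _ hint']
  have inner : ∀ x ∈ Ioc (0:ℝ) 1,
      (∫ y in Ioc (0:ℝ) 1, (if y ≤ x then y ^ a * x ^ b else 0))
        = x ^ (a + b + 1) / (a + 1) := by
    intro x hx
    have e0 : (fun y : ℝ => if y ≤ x then y ^ a * x ^ b else 0)
        = (Iic x).indicator (fun y => y ^ a * x ^ b) := by
      ext y; simp [indicator_apply, mem_Iic]
    rw [e0, setIntegral_indicator measurableSet_Iic,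
      show Ioc (0:ℝ) 1 ∩ Iic x = Ioc 0 x by rw [Ioc_inter_Iic, min_eq_right hx.2],
      integral_mul_const, L1v a x ha hx.1, div_mul_eq_mul_div, ← Real.rpow_add hx.1,
      show a + 1 + b = a + b + 1 by ring]
  rw [setIntegral_congr_fun measurableSet_Ioc (fun x hx => inner x hx)]
  rw [integral_div, L1v (a + b + 1) 1 (by linarith) one_pos, Real.one_rpow, div_div,
    show (a + b + 1 + 1) * (a + 1) = (a + 1) * (a + b + 2) by ring]


lemma tri_lt (a b : ℝ) (ha : -1 < a) (hab : -2 < a + b) :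
    IntegrableOn (fun z : ℝ × ℝ => if z.1 < z.2 then z.1 ^ a * z.2 ^ b else 0)
      (Ioc 0 1 ×ˢ Ioc 0 1) ∧
    ∫ z in Ioc (0:ℝ) 1 ×ˢ Ioc (0:ℝ) 1, (if z.1 < z.2 then z.1 ^ a * z.2 ^ b else 0)
      = 1 / ((a + 1) * (a + b + 2)) := by
  have hsq : MeasurableSet (Ioc (0:ℝ) 1 ×ˢ Ioc (0:ℝ) 1) :=
    measurableSet_Ioc.prod measurableSet_Ioc
  have hra : Measurable fun x : ℝ => x ^ a := by measurability
  have hrb : Measurable fun x : ℝ => x ^ b := by measurability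
  have hmeas : Measurable (fun z : ℝ × ℝ => if z.1 < z.2 then z.1 ^ a * z.2 ^ b else 0) :=
    Measurable.ite (measurableSet_lt measurable_fst measurable_snd)
      ((hra.comp measurable_fst).mul (hrb.comp measurable_snd)) measurable_const
  have hint : IntegrableOn (fun z : ℝ × ℝ => if z.1 < z.2 then z.1 ^ a * z.2 ^ b else 0)
      (Ioc 0 1 ×ˢ Ioc 0 1) := by
    rcases le_or_gt b (-1) with hb | hb
    · set m : ℝ := (a + b) / 2 with hm
      have hm1 : -1 < m := by rw [hm]; linarith
      refine Integrable.mono ((sep (L1i m hm1) (L1i m hm1)).1)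
        (hmeas.aestronglyMeasurable.restrict) ?_
      rw [ae_restrict_iff' hsq]
      refine ae_of_all _ fun z hz => ?_
      obtain ⟨hz1, hz2⟩ := hz
      have h01 : 0 < z.1 := hz1.1
      have h02 : 0 < z.2 := hz2.1
      simp only [Real.norm_eq_abs]
      by_cases h : z.1 < z.2
      · rw [if_pos h]
        have hb1 : z.1 ^ a * z.2 ^ b ≤ z.2 ^ m * z.1 ^ m :=
          pt_bound h02 h01 h.le hm (by linarith)
        rw [abs_of_pos (by positivity), abs_of_pos (by positivity)]
        calc z.1 ^ a * z.2 ^ b ≤ z.2 ^ m * z.1 ^ m := hb1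
          _ = z.1 ^ m * z.2 ^ m := mul_comm _ _
      · rw [if_neg h, abs_zero]; exact abs_nonneg _
    · refine Integrable.mono ((sep (L1i a ha) (L1i b hb)).1)
        (hmeas.aestronglyMeasurable.restrict) ?_
      rw [ae_restrict_iff' hsq]
      refine ae_of_all _ fun z hz => ?_
      obtain ⟨hz1, hz2⟩ := hz
      have h01 : 0 < z.1 := hz1.1
      have h02 : 0 < z.2 := hz2.1
      simp only [Real.norm_eq_abs]
      by_cases h : z.1 < z.2
      · rw [if_pos h, abs_of_pos (by positivity)]
      · rw [if_neg h, abs_zero]; exact abs_nonneg _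
  refine ⟨hint, ?_⟩
  have hint' : Integrable (fun z : ℝ × ℝ => if z.1 < z.2 then z.1 ^ a * z.2 ^ b else 0)
      ((volume.restrict (Ioc 0 1)).prod (volume.restrict (Ioc 0 1))) := by
    rw [← sq_meas]; exact hint
  rw [show (∫ z in Ioc (0:ℝ) 1 ×ˢ Ioc (0:ℝ) 1, (if z.1 < z.2 then z.1 ^ a * z.2 ^ b else 0))
      = ∫ z, (if z.1 < z.2 then z.1 ^ a * z.2 ^ b else 0)
          ∂((volume.restrict (Ioc 0 1)).prod (volume.restrict (Ioc 0 1))) from by rw [← sq_meas]]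
  rw [integral_prod _ hint']
  rw [integral_integral_swap (f := fun x y : ℝ => if x < y then x ^ a * y ^ b else 0) hint']
  have inner : ∀ y ∈ Ioc (0:ℝ) 1,
      (∫ x in Ioc (0:ℝ) 1, (if x < y then x ^ a * y ^ b else 0))
        = y ^ (a + b + 1) / (a + 1) := by
    intro y hy
    have e0 : (fun x : ℝ => if x < y then x ^ a * y ^ b else 0)
        = (Iio y).indicator (fun x => x ^ a * y ^ b) := by
      ext x; simp [indicator_apply, mem_Iio]
    have e1 : Ioc (0:ℝ) 1 ∩ Iio y = Ioo 0 y := by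
      ext t
      simp only [mem_inter_iff, mem_Ioc, mem_Iio, mem_Ioo]
      constructor
      · rintro ⟨⟨h1, _⟩, h3⟩; exact ⟨h1, h3⟩
      · rintro ⟨h1, h3⟩; exact ⟨⟨h1, le_trans h3.le hy.2⟩, h3⟩
    rw [e0, setIntegral_indicator measurableSet_Iio, e1, ← integral_Ioc_eq_integral_Ioo,
      integral_mul_const, L1v a y ha hy.1, div_mul_eq_mul_div, ← Real.rpow_add hy.1,
      show a + 1 + b = a + b + 1 by ring]
  rw [setIntegral_congr_fun measurableSet_Ioc (fun y hy => inner y hy)]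
  rw [integral_div, L1v (a + b + 1) 1 (by linarith) one_pos, Real.one_rpow, div_div,
    show (a + b + 1 + 1) * (a + 1) = (a + 1) * (a + b + 2) by ring]


lemma Lmin (p q : ℝ) (hp : -2 < p) (hq : -2 < q) (hpq : -3 < p + q) :
    IntegrableOn (fun z : ℝ × ℝ => min z.1 z.2 * z.1 ^ p * z.2 ^ q)
      (Ioc 0 1 ×ˢ Ioc 0 1) ∧
    ∫ z in Ioc (0:ℝ) 1 ×ˢ Ioc (0:ℝ) 1, min z.1 z.2 * z.1 ^ p * z.2 ^ q
      = 1 / ((q + 2) * (p + q + 3)) + 1 / ((p + 2) * (p + q + 3)) := by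
  have hsq : MeasurableSet (Ioc (0:ℝ) 1 ×ˢ Ioc (0:ℝ) 1) :=
    measurableSet_Ioc.prod measurableSet_Ioc
  have t1 := tri_le (q + 1) p (by linarith) (by linarith)
  have t2 := tri_lt (p + 1) q (by linarith) (by linarith)
  have hEq : EqOn
      (fun z : ℝ × ℝ => (if z.2 ≤ z.1 then z.2 ^ (q + 1) * z.1 ^ p else 0)
        + (if z.1 < z.2 then z.1 ^ (p + 1) * z.2 ^ q else 0))
      (fun z : ℝ × ℝ => min z.1 z.2 * z.1 ^ p * z.2 ^ q)
      (Ioc (0:ℝ) 1 ×ˢ Ioc (0:ℝ) 1) := by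
    intro z hz
    have h01 : 0 < z.1 := hz.1.1
    have h02 : 0 < z.2 := hz.2.1
    by_cases h : z.2 ≤ z.1
    · simp only [if_pos h, if_neg (not_lt.2 h), add_zero, min_eq_right h,
        Real.rpow_add_one h02.ne']
      ring
    · push_neg at h
      simp only [if_neg (not_le.2 h), if_pos h, zero_add, min_eq_left h.le,
        Real.rpow_add_one h01.ne']
      ring
  have hsum : IntegrableOn
      (fun z : ℝ × ℝ => (if z.2 ≤ z.1 then z.2 ^ (q + 1) * z.1 ^ p else 0)
        + (if z.1 < z.2 then z.1 ^ (p + 1) * z.2 ^ q else 0))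
      (Ioc (0:ℝ) 1 ×ˢ Ioc (0:ℝ) 1) := t1.1.add t2.1
  constructor
  · exact hsum.congr_fun hEq hsq
  · rw [← setIntegral_congr_fun hsq hEq, integral_add t1.1 t2.1, t1.2, t2.2,
      show q + 1 + 1 = q + 2 by ring, show q + 1 + p + 2 = p + q + 3 by ring,
      show p + 1 + 1 = p + 2 by ring, show p + 1 + q + 2 = p + q + 3 by ring]


set_option maxHeartbeats 1000000 in
/-- The asymptotic variance `2 + 2γ + γ²` of the m.l.e. of the generalized Pareto
scale as a deterministic double integral against the covariance kernel
`K(s,t) = 1 - s^{-γ} - t^{-γ} + min(s,t)(st)^{-(γ+1)}`. -/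
theorem mle_scale_asymptotic_variance (γ : ℝ) (hγ : -(1 / 2) < γ) (hγ0 : γ ≠ 0) :
    IntegrableOn
      (fun p : ℝ × ℝ =>
        (((γ + 1) / γ) * ((γ + 1) * (2 * γ + 1) * p.1 ^ (2 * γ) - p.1 ^ γ)) *
        (((γ + 1) / γ) * ((γ + 1) * (2 * γ + 1) * p.2 ^ (2 * γ) - p.2 ^ γ)) *
        (1 - p.1 ^ (-γ) - p.2 ^ (-γ) + min p.1 p.2 * (p.1 * p.2) ^ (-(γ + 1))))
      (Ioc (0 : ℝ) 1 ×ˢ Ioc (0 : ℝ) 1) ∧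
    ∫ p in Ioc (0 : ℝ) 1 ×ˢ Ioc (0 : ℝ) 1,
        (((γ + 1) / γ) * ((γ + 1) * (2 * γ + 1) * p.1 ^ (2 * γ) - p.1 ^ γ)) *
        (((γ + 1) / γ) * ((γ + 1) * (2 * γ + 1) * p.2 ^ (2 * γ) - p.2 ^ γ)) *
        (1 - p.1 ^ (-γ) - p.2 ^ (-γ) + min p.1 p.2 * (p.1 * p.2) ^ (-(γ + 1))) =
      2 + 2 * γ + γ ^ 2 := by
  have hg1 : (0:ℝ) < γ + 1 := by linarith
  have hg2 : (0:ℝ) < 2 * γ + 1 := by linarith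
  have hsq : MeasurableSet (Ioc (0:ℝ) 1 ×ˢ Ioc (0:ℝ) 1) :=
    measurableSet_Ioc.prod measurableSet_Ioc
  -- 1D pieces
  have hu_int : IntegrableOn
      (fun x : ℝ => ((γ + 1) / γ) * ((γ + 1) * (2 * γ + 1) * x ^ (2 * γ) - x ^ γ))
      (Ioc 0 1) :=
    (((L1i (2 * γ) (by linarith)).const_mul _).sub (L1i γ (by linarith))).const_mul _
  have hv_int : IntegrableOn
      (fun x : ℝ => ((γ + 1) / γ) * ((γ + 1) * (2 * γ + 1) * x ^ γ - 1))
      (Ioc 0 1) := by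
    refine Integrable.const_mul ?_ _
    refine Integrable.sub ((L1i γ (by linarith)).const_mul _) ?_
    exact integrableOn_const measure_Ioc_lt_top.ne
  have hone : ∫ _x in Ioc (0:ℝ) 1, (1:ℝ) = 1 := by
    simp [Real.volume_Ioc]
  have hu_val : ∫ x in Ioc (0:ℝ) 1,
      ((γ + 1) / γ) * ((γ + 1) * (2 * γ + 1) * x ^ (2 * γ) - x ^ γ) = γ + 2 := by
    rw [integral_const_mul,
      integral_sub ((L1i (2 * γ) (by linarith)).const_mul _) (L1i γ (by linarith)),
      integral_const_mul, L1v (2 * γ) 1 (by linarith) one_pos,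
      L1v γ 1 (by linarith) one_pos, Real.one_rpow, Real.one_rpow]
    rw [mul_assoc (γ + 1), mul_one_div_cancel hg2.ne', mul_one]
    field_simp
    ring
  have hv_val : ∫ x in Ioc (0:ℝ) 1,
      ((γ + 1) / γ) * ((γ + 1) * (2 * γ + 1) * x ^ γ - 1) = 2 * (γ + 1) := by
    rw [integral_const_mul,
      integral_sub ((L1i γ (by linarith)).const_mul _)
        (integrableOn_const measure_Ioc_lt_top.ne),
      integral_const_mul, L1v γ 1 (by linarith) one_pos, Real.one_rpow, hone]
    field_simp
    ring
  -- 2D pieces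
  have i1 := sep hu_int hu_int
  have i2 := sep hv_int hu_int
  have i3 := sep hu_int hv_int
  have m1 := Lmin (γ - 1) (γ - 1) (by linarith) (by linarith) (by linarith)
  have m2 := Lmin (γ - 1) (-1) (by linarith) (by linarith) (by linarith)
  have m3 := Lmin (-1) (γ - 1) (by linarith) (by linarith) (by linarith)
  have m4 := Lmin (-1) (-1) (by linarith) (by linarith) (by linarith)
  -- the comparison function
  have hEq : EqOn
      (fun p : ℝ × ℝ =>
        (((γ + 1) / γ) * ((γ + 1) * (2 * γ + 1) * p.1 ^ (2 * γ) - p.1 ^ γ)) *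
        (((γ + 1) / γ) * ((γ + 1) * (2 * γ + 1) * p.2 ^ (2 * γ) - p.2 ^ γ)) *
        (1 - p.1 ^ (-γ) - p.2 ^ (-γ) + min p.1 p.2 * (p.1 * p.2) ^ (-(γ + 1))))
      (fun z : ℝ × ℝ =>
        ((((γ + 1) / γ) * ((γ + 1) * (2 * γ + 1) * z.1 ^ (2 * γ) - z.1 ^ γ)) *
            (((γ + 1) / γ) * ((γ + 1) * (2 * γ + 1) * z.2 ^ (2 * γ) - z.2 ^ γ))
          - (((γ + 1) / γ) * ((γ + 1) * (2 * γ + 1) * z.1 ^ γ - 1)) *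
            (((γ + 1) / γ) * ((γ + 1) * (2 * γ + 1) * z.2 ^ (2 * γ) - z.2 ^ γ))
          - (((γ + 1) / γ) * ((γ + 1) * (2 * γ + 1) * z.1 ^ (2 * γ) - z.1 ^ γ)) *
            (((γ + 1) / γ) * ((γ + 1) * (2 * γ + 1) * z.2 ^ γ - 1)))
        + ((((γ + 1) / γ) ^ 2 * ((γ + 1) * (2 * γ + 1)) ^ 2) *
              (min z.1 z.2 * z.1 ^ (γ - 1) * z.2 ^ (γ - 1))
            - (((γ + 1) / γ) ^ 2 * ((γ + 1) * (2 * γ + 1))) *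
              (min z.1 z.2 * z.1 ^ (γ - 1) * z.2 ^ (-1 : ℝ))
            - (((γ + 1) / γ) ^ 2 * ((γ + 1) * (2 * γ + 1))) *
              (min z.1 z.2 * z.1 ^ (-1 : ℝ) * z.2 ^ (γ - 1))
            + (((γ + 1) / γ) ^ 2) *
              (min z.1 z.2 * z.1 ^ (-1 : ℝ) * z.2 ^ (-1 : ℝ))))
      (Ioc (0:ℝ) 1 ×ˢ Ioc (0:ℝ) 1) := by
    intro z hz
    have h01 : 0 < z.1 := hz.1.1
    have h02 : 0 < z.2 := hz.2.1
    have ha1 : (0:ℝ) < z.1 ^ γ := Real.rpow_pos_of_pos h01 γ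
    have ha2 : (0:ℝ) < z.2 ^ γ := Real.rpow_pos_of_pos h02 γ
    have e1 : (z.1 * z.2) ^ (-(γ + 1)) = z.1 ^ (-(γ + 1)) * z.2 ^ (-(γ + 1)) :=
      Real.mul_rpow h01.le h02.le
    have ex2 : ∀ x : ℝ, 0 < x → x ^ (2 * γ) = x ^ γ * x ^ γ := fun x hx => by
      rw [show (2:ℝ) * γ = γ + γ by ring, Real.rpow_add hx]
    have exn : ∀ x : ℝ, 0 < x → x ^ (-γ) = (x ^ γ)⁻¹ := fun x hx =>
      Real.rpow_neg hx.le γ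
    have exm : ∀ x : ℝ, 0 < x → x ^ (-(γ + 1)) = (x ^ γ)⁻¹ * x⁻¹ := fun x hx => by
      rw [show -(γ + 1) = -γ + (-1) by ring, Real.rpow_add hx, Real.rpow_neg hx.le,
        Real.rpow_neg_one]
    have exg : ∀ x : ℝ, 0 < x → x ^ (γ - 1) = x ^ γ * x⁻¹ := fun x hx => by
      rw [show γ - 1 = γ + (-1) by ring, Real.rpow_add hx, Real.rpow_neg_one]
    simp only [e1, ex2 z.1 h01, ex2 z.2 h02, exn z.1 h01, exn z.2 h02,
      exm z.1 h01, exm z.2 h02, exg z.1 h01, exg z.2 h02, Real.rpow_neg_one]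
    field_simp
    ring
  constructor
  · refine IntegrableOn.congr_fun ?_ hEq.symm hsq
    refine Integrable.add ((i1.1.sub i2.1).sub i3.1) ?_
    exact (((m1.1.const_mul _).sub (m2.1.const_mul _)).sub (m3.1.const_mul _)).add
      (m4.1.const_mul _)
  · have hT1 : IntegrableOn (fun z : ℝ × ℝ =>
        (((γ + 1) / γ) * ((γ + 1) * (2 * γ + 1) * z.1 ^ (2 * γ) - z.1 ^ γ)) *
        (((γ + 1) / γ) * ((γ + 1) * (2 * γ + 1) * z.2 ^ (2 * γ) - z.2 ^ γ)))
        (Ioc (0:ℝ) 1 ×ˢ Ioc (0:ℝ) 1) := i1.1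
    have hT2 : IntegrableOn (fun z : ℝ × ℝ =>
        (((γ + 1) / γ) * ((γ + 1) * (2 * γ + 1) * z.1 ^ γ - 1)) *
        (((γ + 1) / γ) * ((γ + 1) * (2 * γ + 1) * z.2 ^ (2 * γ) - z.2 ^ γ)))
        (Ioc (0:ℝ) 1 ×ˢ Ioc (0:ℝ) 1) := i2.1
    have hT3 : IntegrableOn (fun z : ℝ × ℝ =>
        (((γ + 1) / γ) * ((γ + 1) * (2 * γ + 1) * z.1 ^ (2 * γ) - z.1 ^ γ)) *
        (((γ + 1) / γ) * ((γ + 1) * (2 * γ + 1) * z.2 ^ γ - 1)))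
        (Ioc (0:ℝ) 1 ×ˢ Ioc (0:ℝ) 1) := i3.1
    have hB1 : IntegrableOn (fun z : ℝ × ℝ =>
        (((γ + 1) / γ) ^ 2 * ((γ + 1) * (2 * γ + 1)) ^ 2) *
          (min z.1 z.2 * z.1 ^ (γ - 1) * z.2 ^ (γ - 1)))
        (Ioc (0:ℝ) 1 ×ˢ Ioc (0:ℝ) 1) := m1.1.const_mul _
    have hB2 : IntegrableOn (fun z : ℝ × ℝ =>
        (((γ + 1) / γ) ^ 2 * ((γ + 1) * (2 * γ + 1))) *
          (min z.1 z.2 * z.1 ^ (γ - 1) * z.2 ^ (-1 : ℝ)))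
        (Ioc (0:ℝ) 1 ×ˢ Ioc (0:ℝ) 1) := m2.1.const_mul _
    have hB3 : IntegrableOn (fun z : ℝ × ℝ =>
        (((γ + 1) / γ) ^ 2 * ((γ + 1) * (2 * γ + 1))) *
          (min z.1 z.2 * z.1 ^ (-1 : ℝ) * z.2 ^ (γ - 1)))
        (Ioc (0:ℝ) 1 ×ˢ Ioc (0:ℝ) 1) := m3.1.const_mul _
    have hB4 : IntegrableOn (fun z : ℝ × ℝ =>
        (((γ + 1) / γ) ^ 2) * (min z.1 z.2 * z.1 ^ (-1 : ℝ) * z.2 ^ (-1 : ℝ)))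
        (Ioc (0:ℝ) 1 ×ˢ Ioc (0:ℝ) 1) := m4.1.const_mul _
    have hT12 : IntegrableOn (fun z : ℝ × ℝ =>
        (((γ + 1) / γ) * ((γ + 1) * (2 * γ + 1) * z.1 ^ (2 * γ) - z.1 ^ γ)) *
            (((γ + 1) / γ) * ((γ + 1) * (2 * γ + 1) * z.2 ^ (2 * γ) - z.2 ^ γ))
          - (((γ + 1) / γ) * ((γ + 1) * (2 * γ + 1) * z.1 ^ γ - 1)) *
            (((γ + 1) / γ) * ((γ + 1) * (2 * γ + 1) * z.2 ^ (2 * γ) - z.2 ^ γ)))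
        (Ioc (0:ℝ) 1 ×ˢ Ioc (0:ℝ) 1) := hT1.sub hT2
    have hT123 : IntegrableOn (fun z : ℝ × ℝ =>
        ((((γ + 1) / γ) * ((γ + 1) * (2 * γ + 1) * z.1 ^ (2 * γ) - z.1 ^ γ)) *
            (((γ + 1) / γ) * ((γ + 1) * (2 * γ + 1) * z.2 ^ (2 * γ) - z.2 ^ γ))
          - (((γ + 1) / γ) * ((γ + 1) * (2 * γ + 1) * z.1 ^ γ - 1)) *
            (((γ + 1) / γ) * ((γ + 1) * (2 * γ + 1) * z.2 ^ (2 * γ) - z.2 ^ γ)))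
          - (((γ + 1) / γ) * ((γ + 1) * (2 * γ + 1) * z.1 ^ (2 * γ) - z.1 ^ γ)) *
            (((γ + 1) / γ) * ((γ + 1) * (2 * γ + 1) * z.2 ^ γ - 1)))
        (Ioc (0:ℝ) 1 ×ˢ Ioc (0:ℝ) 1) := hT12.sub hT3
    have hB12 : IntegrableOn (fun z : ℝ × ℝ =>
        (((γ + 1) / γ) ^ 2 * ((γ + 1) * (2 * γ + 1)) ^ 2) *
          (min z.1 z.2 * z.1 ^ (γ - 1) * z.2 ^ (γ - 1))
        - (((γ + 1) / γ) ^ 2 * ((γ + 1) * (2 * γ + 1))) *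
          (min z.1 z.2 * z.1 ^ (γ - 1) * z.2 ^ (-1 : ℝ)))
        (Ioc (0:ℝ) 1 ×ˢ Ioc (0:ℝ) 1) := hB1.sub hB2
    have hB123 : IntegrableOn (fun z : ℝ × ℝ =>
        ((((γ + 1) / γ) ^ 2 * ((γ + 1) * (2 * γ + 1)) ^ 2) *
          (min z.1 z.2 * z.1 ^ (γ - 1) * z.2 ^ (γ - 1))
        - (((γ + 1) / γ) ^ 2 * ((γ + 1) * (2 * γ + 1))) *
          (min z.1 z.2 * z.1 ^ (γ - 1) * z.2 ^ (-1 : ℝ)))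
        - (((γ + 1) / γ) ^ 2 * ((γ + 1) * (2 * γ + 1))) *
          (min z.1 z.2 * z.1 ^ (-1 : ℝ) * z.2 ^ (γ - 1)))
        (Ioc (0:ℝ) 1 ×ˢ Ioc (0:ℝ) 1) := hB12.sub hB3
    have hB1234 : IntegrableOn (fun z : ℝ × ℝ =>
        (((((γ + 1) / γ) ^ 2 * ((γ + 1) * (2 * γ + 1)) ^ 2) *
          (min z.1 z.2 * z.1 ^ (γ - 1) * z.2 ^ (γ - 1))
        - (((γ + 1) / γ) ^ 2 * ((γ + 1) * (2 * γ + 1))) *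
          (min z.1 z.2 * z.1 ^ (γ - 1) * z.2 ^ (-1 : ℝ)))
        - (((γ + 1) / γ) ^ 2 * ((γ + 1) * (2 * γ + 1))) *
          (min z.1 z.2 * z.1 ^ (-1 : ℝ) * z.2 ^ (γ - 1)))
        + (((γ + 1) / γ) ^ 2) * (min z.1 z.2 * z.1 ^ (-1 : ℝ) * z.2 ^ (-1 : ℝ)))
        (Ioc (0:ℝ) 1 ×ˢ Ioc (0:ℝ) 1) := hB123.add hB4
    rw [setIntegral_congr_fun hsq hEq, integral_add hT123 hB1234,
      integral_sub hT12 hT3, integral_sub hT1 hT2,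
      integral_add hB123 hB4, integral_sub hB12 hB3, integral_sub hB1 hB2,
      integral_const_mul, integral_const_mul, integral_const_mul, integral_const_mul,
      i1.2, i2.2, i3.2, m1.2, m2.2, m3.2, m4.2, hu_val, hv_val]
    have d1 : γ - 1 + 2 = γ + 1 := by ring
    have d2 : γ - 1 + (γ - 1) + 3 = 2 * γ + 1 := by ring
    have d3 : γ - 1 + -1 + 3 = γ + 1 := by ring
    have d4 : (-1:ℝ) + (γ - 1) + 3 = γ + 1 := by ring
    have d5 : (-1:ℝ) + 2 = 1 := by ring
    have d6 : (-1:ℝ) + -1 + 3 = 1 := by ring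
    rw [d1, d2, d3, d4, d5, d6]
    field_simp
    ring
end

section
/- Define K₀(s,t) = min(s,t)/(st) − 1 for s, t ∈ (0,1]. Then the following three identities hold, all double integrals converging absolutely: ∫₀¹∫₀¹ (2 + log s)(2 + log t) K₀(s,t) ds dt = 1; ∫₀¹∫₀¹ (−(2 + log s))·(3 + log t)·K₀(s,t) ds dt = −1; and ∫₀¹∫₀¹ (3 + log s)(3 + log t) K₀(s,t) ds dt = 2. -/
open MeasureTheory Set

section MleAux

open Filter Real

lemma aux_neg_log_le {r x : ℝ} (hr : 0 < r) (hx : 0 < x) :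
    -Real.log x ≤ r⁻¹ * x ^ (-r) := by
  have h1 : Real.log (x ^ (-r)) = (-r) * Real.log x := Real.log_rpow hx _
  have h2 : Real.log (x ^ (-r)) ≤ x ^ (-r) - 1 :=
    Real.log_le_sub_one_of_pos (Real.rpow_pos_of_pos hx _)
  have h3 : (0:ℝ) < x ^ (-r) := Real.rpow_pos_of_pos hx _
  have h4 : -Real.log x = r⁻¹ * Real.log (x ^ (-r)) := by
    rw [h1]; field_simp
  rw [h4]
  have : Real.log (x ^ (-r)) ≤ x ^ (-r) := by linarith
  calc r⁻¹ * Real.log (x ^ (-r)) ≤ r⁻¹ * x ^ (-r) := by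
        apply mul_le_mul_of_nonneg_left this (by positivity)

lemma aux_int_rpow {r : ℝ} (h : -1 < r) :
    IntegrableOn (fun x : ℝ => x ^ r) (Ioc 0 1) := by
  have := intervalIntegral.intervalIntegrable_rpow' (a := 0) (b := 1) h
  rwa [intervalIntegrable_iff, uIoc_of_le zero_le_one] at this

lemma aux_int_log_pow (n : ℕ) :
    IntegrableOn (fun x : ℝ => Real.log x ^ n) (Ioc 0 1) := by
  apply Integrable.mono' (((aux_int_rpow (r := -(1/2)) (by norm_num))).const_mul ((2*(n:ℝ))^n))
  · exact (Real.measurable_log.pow_const n).aestronglyMeasurable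
  · rw [ae_restrict_iff' measurableSet_Ioc]
    filter_upwards with x hx
    have hx0 := hx.1
    have hx1 := hx.2
    have hlog : Real.log x ≤ 0 := Real.log_nonpos hx0.le hx1
    rcases Nat.eq_zero_or_pos n with hn | hn
    · subst hn
      simp only [pow_zero, norm_one, Nat.cast_zero, mul_zero, one_mul]
      calc (1:ℝ) = x ^ (0:ℝ) := (Real.rpow_zero x).symm
        _ ≤ x ^ (-(1/2):ℝ) :=
            Real.rpow_le_rpow_of_exponent_ge hx0 hx1 (by norm_num)
    · have hb : -Real.log x ≤ (2*(n:ℝ)) * x ^ (-(1/(2*(n:ℝ)))) := by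
        have hn' : (0:ℝ) < 1/(2*(n:ℝ)) := by positivity
        have := aux_neg_log_le hn' hx0
        rw [show ((1:ℝ)/(2*(n:ℝ)))⁻¹ = 2*(n:ℝ) by field_simp] at this
        exact this
      have hnorm : ‖Real.log x ^ n‖ = (-Real.log x) ^ n := by
        rw [norm_pow, Real.norm_eq_abs, abs_of_nonpos hlog]
      rw [hnorm]
      calc (-Real.log x) ^ n ≤ ((2*(n:ℝ)) * x ^ (-(1/(2*(n:ℝ))))) ^ n := by
            apply pow_le_pow_left₀ (by linarith) hb
        _ = (2*(n:ℝ))^n * x ^ (-(1/2):ℝ) := by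
            rw [mul_pow, ← Real.rpow_natCast (x ^ (-(1/(2*(n:ℝ))))) n,
              ← Real.rpow_mul hx0.le]
            congr 2
            field_simp

open MeasureTheory Set Filter Real

lemma aux_tendsto (n : ℕ) :
    Tendsto (fun x : ℝ => x * Real.log x ^ n) (nhdsWithin 0 (Ioi 0)) (nhds 0) := by
  rcases Nat.eq_zero_or_pos n with hn | hn
  · subst hn
    simp only [pow_zero, mul_one]
    exact (tendsto_id.mono_left nhdsWithin_le_nhds :
      Tendsto (fun x : ℝ => x) (nhdsWithin 0 (Ioi 0)) (nhds 0))
  · have hn0 : (0:ℝ) < (n:ℝ) := by exact_mod_cast hn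
    have hr : (-(1/(n:ℝ))) < 0 := by
      have : (0:ℝ) < 1/(n:ℝ) := by positivity
      linarith
    have h := (tendsto_log_div_rpow_nhdsGT_zero hr).pow n
    rw [zero_pow hn.ne'] at h
    apply h.congr'
    filter_upwards [self_mem_nhdsWithin] with x hx
    have hx0 : (0:ℝ) < x := hx
    rw [Real.rpow_neg hx0.le, div_eq_mul_inv, inv_inv, mul_pow,
      ← Real.rpow_natCast (x ^ ((1:ℝ)/(n:ℝ))) n, ← Real.rpow_mul hx0.le]
    rw [show (1:ℝ)/(n:ℝ) * (n:ℕ) = 1 by field_simp]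
    rw [Real.rpow_one]
    ring

lemma aux_contOn (n : ℕ) :
    ContinuousOn (fun x : ℝ => x * Real.log x ^ n) (Icc 0 1) := by
  intro x hx
  rcases eq_or_lt_of_le hx.1 with h0 | h0
  · rw [← h0]
    have hsub : Icc (0:ℝ) 1 ⊆ Ioi 0 ∪ {0} := by
      intro y hy
      rcases eq_or_lt_of_le hy.1 with h | h
      · exact Or.inr (by simp [← h])
      · exact Or.inl h
    unfold ContinuousWithinAt
    have hval : (fun x : ℝ => x * Real.log x ^ n) 0 = 0 := by simp
    rw [hval]
    apply Tendsto.mono_left _ (nhdsWithin_mono 0 hsub)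
    rw [nhdsWithin_union]
    apply Tendsto.sup (aux_tendsto n)
    rw [nhdsWithin_singleton]
    simpa using tendsto_pure_nhds (fun x : ℝ => x * Real.log x ^ n) 0
  · exact (continuousAt_id.mul ((Real.continuousAt_log h0.ne').pow n)).continuousWithinAt

lemma integral_log_poly (c0 c1 c2 c3 : ℝ) :
    ∫ x in Ioc (0:ℝ) 1,
        (c0 + c1 * Real.log x + c2 * Real.log x ^ 2 + c3 * Real.log x ^ 3)
      = c0 - c1 + 2*c2 - 6*c3 := by
  have hint : IntervalIntegrable
      (fun x : ℝ => c0 + c1 * Real.log x + c2 * Real.log x ^ 2 + c3 * Real.log x ^ 3)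
      volume 0 1 := by
    rw [intervalIntegrable_iff, uIoc_of_le zero_le_one]
    have h0 : IntegrableOn (fun x : ℝ => c0) (Ioc 0 1) := by
      apply integrableOn_const measure_Ioc_lt_top.ne
    have h1 := (aux_int_log_pow 1).const_mul c1
    have h2 := (aux_int_log_pow 2).const_mul c2
    have h3 := (aux_int_log_pow 3).const_mul c3
    simp only [pow_one] at h1
    exact ((h0.add h1).add h2).add h3
  have key := intervalIntegral.integral_eq_sub_of_hasDerivAt_of_le zero_le_one
    (f := fun x : ℝ => c0 * x + c1 * (x * Real.log x ^ 1 - x)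
      + c2 * (x * Real.log x ^ 2 - 2 * (x * Real.log x ^ 1) + 2 * x)
      + c3 * (x * Real.log x ^ 3 - 3 * (x * Real.log x ^ 2) + 6 * (x * Real.log x ^ 1) - 6 * x))
    (f' := fun x : ℝ => c0 + c1 * Real.log x + c2 * Real.log x ^ 2 + c3 * Real.log x ^ 3)
    ?_ ?_ hint
  · rw [← intervalIntegral.integral_of_le zero_le_one]
    rw [key]
    simp only [Real.log_one, Real.log_zero]
    ring
  · -- continuity
    apply ContinuousOn.add
    apply ContinuousOn.add
    apply ContinuousOn.add
    · exact (continuous_const.mul continuous_id).continuousOn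
    · exact continuousOn_const.mul ((aux_contOn 1).sub continuous_id.continuousOn)
    · exact continuousOn_const.mul (((aux_contOn 2).sub
        (continuousOn_const.mul (aux_contOn 1))).add
        (continuous_const.mul continuous_id).continuousOn)
    · exact continuousOn_const.mul ((((aux_contOn 3).sub
        (continuousOn_const.mul (aux_contOn 2))).add
        (continuousOn_const.mul (aux_contOn 1))).sub
        (continuous_const.mul continuous_id).continuousOn)
  · -- derivative
    intro x hx
    have hx0 : x ≠ 0 := (ne_of_gt hx.1)
    have hlog := Real.hasDerivAt_log hx0
    have hid := hasDerivAt_id x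
    have hxlogn : ∀ m : ℕ, HasDerivAt (fun y : ℝ => y * Real.log y ^ m)
        (Real.log x ^ m + m * Real.log x ^ (m-1)) x := by
      intro m
      have h := hid.mul (hlog.pow m)
      refine h.congr_deriv ?_; symm
      rcases Nat.eq_zero_or_pos m with hm | hm
      · subst hm; simp
      · simp only [id_eq, Pi.pow_apply]
        field_simp
        try ring
    have H := ((((hid.const_mul c0).add
        (((hxlogn 1).sub hid).const_mul c1)).add
        ((((hxlogn 2).sub ((hxlogn 1).const_mul 2)).add (hid.const_mul 2)).const_mul c2)).add
        (((((hxlogn 3).sub ((hxlogn 2).const_mul 3)).add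
          ((hxlogn 1).const_mul 6)).sub (hid.const_mul 6)).const_mul c3))
    refine H.congr_deriv ?_; symm
    norm_num
    ring

lemma outer_val (a b : ℝ) :
    ∫ s in Ioc (0:ℝ) 1, (a + Real.log s) * ((1-b) * Real.log s - Real.log s ^ 2 / 2)
      = (1-b)*(2-a) - a + 3 := by
  have h : (fun s : ℝ => (a + Real.log s) * ((1-b) * Real.log s - Real.log s ^ 2 / 2))
      = fun s : ℝ => (0:ℝ) + (a*(1-b)) * Real.log s + ((1-b) - a/2) * Real.log s ^ 2
          + (-(1/2)) * Real.log s ^ 3 := by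
    funext s; ring
  rw [h, integral_log_poly]; ring

lemma kernel_eq {s t : ℝ} (hs0 : 0 < s) (ht0 : 0 < t) :
    min s t / (s * t) = (max s t)⁻¹ := by
  rcases le_total s t with h | h
  · rw [min_eq_left h, max_eq_right h]
    field_simp
  · rw [min_eq_right h, max_eq_left h]
    field_simp

lemma kernel_nonneg {s t : ℝ} (hs : s ∈ Ioc (0:ℝ) 1) (ht : t ∈ Ioc (0:ℝ) 1) :
    0 ≤ min s t / (s * t) - 1 := by
  obtain ⟨hs0, hs1⟩ := hs; obtain ⟨ht0, ht1⟩ := ht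
  rw [kernel_eq hs0 ht0]
  have hmax0 : 0 < max s t := lt_of_lt_of_le hs0 (le_max_left s t)
  have hmax1 : max s t ≤ 1 := max_le hs1 ht1
  have hinv : max s t * (max s t)⁻¹ = 1 := mul_inv_cancel₀ hmax0.ne'
  nlinarith [inv_pos.mpr hmax0]

lemma kernel_le {s t : ℝ} (hs : s ∈ Ioc (0:ℝ) 1) (ht : t ∈ Ioc (0:ℝ) 1) :
    min s t / (s * t) - 1 ≤ s ^ (-(1/2) : ℝ) * t ^ (-(1/2) : ℝ) := by
  obtain ⟨hs0, hs1⟩ := hs; obtain ⟨ht0, ht1⟩ := ht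
  rw [kernel_eq hs0 ht0]
  have hmax0 : 0 < max s t := lt_of_lt_of_le hs0 (le_max_left s t)
  have hst0 : 0 < s * t := mul_pos hs0 ht0
  have hsq : Real.sqrt (s*t) ≤ max s t := by
    have h1 : s * t ≤ max s t ^ 2 := by
      have := mul_le_mul (le_max_left s t) (le_max_right s t) ht0.le
        (le_trans hs0.le (le_max_left s t))
      nlinarith
    calc Real.sqrt (s*t) ≤ Real.sqrt (max s t ^ 2) := Real.sqrt_le_sqrt h1
      _ = max s t := Real.sqrt_sq hmax0.le
  have h1 : (max s t)⁻¹ ≤ (Real.sqrt (s*t))⁻¹ := by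
    apply inv_anti₀ (Real.sqrt_pos.mpr hst0) hsq
  have h2 : (Real.sqrt (s*t))⁻¹ = s ^ (-(1/2) : ℝ) * t ^ (-(1/2) : ℝ) := by
    rw [Real.sqrt_mul hs0.le, mul_inv, Real.sqrt_eq_rpow, Real.sqrt_eq_rpow,
      ← Real.rpow_neg hs0.le, ← Real.rpow_neg ht0.le]
    try norm_num
  linarith [h2 ▸ h1]

lemma weight_bound {a x : ℝ} (ha : 0 ≤ a) (hx : x ∈ Ioc (0:ℝ) 1) :
    |a + Real.log x| ≤ (a + 4) * x ^ (-(1/4) : ℝ) := by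
  obtain ⟨hx0, hx1⟩ := hx
  have hlog : Real.log x ≤ 0 := Real.log_nonpos hx0.le hx1
  have h1 : |a + Real.log x| ≤ a - Real.log x :=
    abs_le.2 ⟨by linarith, by linarith⟩
  have h2 : -Real.log x ≤ 4 * x ^ (-(1/4) : ℝ) := by
    have h := aux_neg_log_le (r := 1/4) (by norm_num) hx0
    norm_num at h ⊢
    linarith
  have h3 : (1:ℝ) ≤ x ^ (-(1/4) : ℝ) := by
    calc (1:ℝ) = x ^ (0:ℝ) := (Real.rpow_zero x).symm
      _ ≤ x ^ (-(1/4) : ℝ) := Real.rpow_le_rpow_of_exponent_ge hx0 hx1 (by norm_num)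
  calc |a + Real.log x| ≤ a - Real.log x := h1
    _ ≤ a * x ^ (-(1/4) : ℝ) + 4 * x ^ (-(1/4) : ℝ) := by nlinarith
    _ = (a + 4) * x ^ (-(1/4) : ℝ) := by ring

lemma prod_integrable {a b : ℝ} (ha : 0 ≤ a) (hb : 0 ≤ b) :
    IntegrableOn
      (fun p : ℝ × ℝ => (a + Real.log p.1) * (b + Real.log p.2) *
        (min p.1 p.2 / (p.1 * p.2) - 1)) (Ioc (0:ℝ) 1 ×ˢ Ioc (0:ℝ) 1) := by
  have hmeas : AEStronglyMeasurable
      (fun p : ℝ × ℝ => (a + Real.log p.1) * (b + Real.log p.2) *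
        (min p.1 p.2 / (p.1 * p.2) - 1))
      (volume.restrict (Ioc (0:ℝ) 1 ×ˢ Ioc (0:ℝ) 1)) := by
    apply Measurable.aestronglyMeasurable
    exact ((measurable_const.add (Real.measurable_log.comp measurable_fst)).mul
      (measurable_const.add (Real.measurable_log.comp measurable_snd))).mul
      (((measurable_fst.min measurable_snd).div (measurable_fst.mul measurable_snd)).sub
        measurable_const)
  unfold IntegrableOn
  rw [Measure.volume_eq_prod, ← Measure.prod_restrict]
  apply Integrable.mono'
    (g := fun p : ℝ × ℝ => ((a+4) * p.1 ^ (-(3/4) : ℝ)) * ((b+4) * p.2 ^ (-(3/4) : ℝ)))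
  · exact Integrable.mul_prod ((aux_int_rpow (by norm_num)).const_mul (a+4))
      ((aux_int_rpow (by norm_num)).const_mul (b+4))
  · rw [Measure.prod_restrict, ← Measure.volume_eq_prod]
    exact hmeas
  · rw [Measure.prod_restrict, ← Measure.volume_eq_prod,
      ae_restrict_iff' (measurableSet_Ioc.prod measurableSet_Ioc)]
    filter_upwards with p hp
    obtain ⟨hp1, hp2⟩ := hp
    have hK0 := kernel_nonneg hp1 hp2
    have hKle := kernel_le hp1 hp2
    have hw1 := weight_bound ha hp1
    have hw2 := weight_bound hb hp2
    have h1 : ‖(a + Real.log p.1) * (b + Real.log p.2) *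
        (min p.1 p.2 / (p.1 * p.2) - 1)‖
        = |a + Real.log p.1| * |b + Real.log p.2| * (min p.1 p.2 / (p.1 * p.2) - 1) := by
      rw [Real.norm_eq_abs, abs_mul, abs_mul, abs_of_nonneg hK0]
    rw [h1]
    have hb1 : |a + Real.log p.1| * |b + Real.log p.2| * (min p.1 p.2 / (p.1 * p.2) - 1)
        ≤ ((a + 4) * p.1 ^ (-(1/4) : ℝ)) * ((b + 4) * p.2 ^ (-(1/4) : ℝ))
          * (p.1 ^ (-(1/2) : ℝ) * p.2 ^ (-(1/2) : ℝ)) := by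
      have hn1 : (0:ℝ) ≤ |a + Real.log p.1| := abs_nonneg _
      have hn2 : (0:ℝ) ≤ |b + Real.log p.2| := abs_nonneg _
      have hg1 : (0:ℝ) ≤ (a + 4) * p.1 ^ (-(1/4) : ℝ) :=
        mul_nonneg (by linarith) (Real.rpow_nonneg hp1.1.le _)
      have hg2 : (0:ℝ) ≤ (b + 4) * p.2 ^ (-(1/4) : ℝ) :=
        mul_nonneg (by linarith) (Real.rpow_nonneg hp2.1.le _)
      exact mul_le_mul (mul_le_mul hw1 hw2 hn2 hg1) hKle hK0 (mul_nonneg hg1 hg2)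
    refine le_trans hb1 (le_of_eq ?_)
    have e1 : p.1 ^ (-(1/4) : ℝ) * p.1 ^ (-(1/2) : ℝ) = p.1 ^ (-(3/4) : ℝ) := by
      rw [← Real.rpow_add hp1.1]; norm_num
    have e2 : p.2 ^ (-(1/4) : ℝ) * p.2 ^ (-(1/2) : ℝ) = p.2 ^ (-(3/4) : ℝ) := by
      rw [← Real.rpow_add hp2.1]; norm_num
    calc ((a + 4) * p.1 ^ (-(1/4) : ℝ)) * ((b + 4) * p.2 ^ (-(1/4) : ℝ))
          * (p.1 ^ (-(1/2) : ℝ) * p.2 ^ (-(1/2) : ℝ))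
        = ((a+4) * (p.1 ^ (-(1/4) : ℝ) * p.1 ^ (-(1/2) : ℝ)))
          * ((b+4) * (p.2 ^ (-(1/4) : ℝ) * p.2 ^ (-(1/2) : ℝ))) := by ring
      _ = ((a+4) * p.1 ^ (-(3/4) : ℝ)) * ((b+4) * p.2 ^ (-(3/4) : ℝ)) := by rw [e1, e2]

lemma hasDerivAt_mul_log' {x : ℝ} (hx : x ≠ 0) :
    HasDerivAt (fun y : ℝ => y * Real.log y) (Real.log x + 1) x := by
  have := (hasDerivAt_id x).mul (Real.hasDerivAt_log hx)
  refine this.congr_deriv ?_; symm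
  simp only [id_eq, one_mul]
  field_simp

lemma inner_int (b : ℝ) {s : ℝ} (hs : s ∈ Ioc (0:ℝ) 1) :
    ∫ t in Ioc (0:ℝ) 1, (b + Real.log t) * (min s t / (s * t) - 1)
      = (1 - b) * Real.log s - Real.log s ^ 2 / 2 := by
  obtain ⟨hs0, hs1⟩ := hs
  set f : ℝ → ℝ := fun t => (b + Real.log t) * (min s t / (s * t) - 1) with hf
  have hIlog : IntegrableOn (fun t : ℝ => b + Real.log t) (Ioc 0 1) := by
    have h1 := aux_int_log_pow 1
    simp only [pow_one] at h1
    exact (integrableOn_const measure_Ioc_lt_top.ne).add h1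
  have heq1 : EqOn f (fun t : ℝ => (b + Real.log t) * (s⁻¹ - 1)) (Ioc 0 s) := by
    intro t ht
    have hmin : min s t = t := min_eq_right ht.2
    simp only [hf, hmin]
    rw [mul_comm s t, div_mul_eq_div_div, div_self ht.1.ne', one_div]
  have heq2 : EqOn f (fun t : ℝ => (b + Real.log t) * (t⁻¹ - 1)) (Ioc s 1) := by
    intro t ht
    have hmin : min s t = s := min_eq_left ht.1.le
    simp only [hf, hmin]
    rw [div_mul_eq_div_div, div_self hs0.ne', one_div]
  have hI1 : IntegrableOn f (Ioc 0 s) := by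
    apply IntegrableOn.congr_fun _ heq1.symm measurableSet_Ioc
    exact ((hIlog.mono_set (Ioc_subset_Ioc_right hs1)).mul_const _)
  have hI2 : IntegrableOn f (Ioc s 1) := by
    have hsub : Icc s 1 ⊆ ({0}ᶜ : Set ℝ) := by
      intro t ht
      exact (lt_of_lt_of_le hs0 ht.1).ne'
    have hcont : ContinuousOn f (Icc s 1) := by
      apply ContinuousOn.mul
      · exact continuousOn_const.add (Real.continuousOn_log.mono hsub)
      · apply ContinuousOn.sub _ continuousOn_const
        apply ContinuousOn.div
        · exact (continuous_const.min continuous_id).continuousOn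
        · exact (continuous_const.mul continuous_id).continuousOn
        · intro t ht
          exact (mul_pos hs0 (lt_of_lt_of_le hs0 ht.1)).ne'
    exact (hcont.integrableOn_Icc).mono_set Ioc_subset_Icc_self
  have E1 : ∫ t in Ioc (0:ℝ) s, f t = (b*s + (s*Real.log s - s)) * (s⁻¹ - 1) := by
    rw [setIntegral_congr_fun measurableSet_Ioc heq1, integral_mul_const]
    congr 1
    rw [← intervalIntegral.integral_of_le hs0.le]
    have key := intervalIntegral.integral_eq_sub_of_hasDerivAt_of_le hs0.le
      (f := fun t : ℝ => b*t + (t * Real.log t - t))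
      (f' := fun t : ℝ => b + Real.log t)
      (by
        apply ContinuousOn.add
        · exact (continuous_const.mul continuous_id).continuousOn
        · exact (Real.continuous_mul_log.sub continuous_id).continuousOn)
      (by
        intro x hx
        have H := ((hasDerivAt_id x).const_mul b).add
          ((hasDerivAt_mul_log' (ne_of_gt hx.1)).sub (hasDerivAt_id x))
        refine H.congr_deriv ?_
        ring)
      (by
        rw [intervalIntegrable_iff, uIoc_of_le hs0.le]
        exact hIlog.mono_set (Ioc_subset_Ioc_right hs1))
    rw [key]
    simp [Real.log_zero]
  have E2 : ∫ t in Ioc s 1, f t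
      = (1 - b) - (b*Real.log s + Real.log s^2/2 - b*s - (s*Real.log s - s)) := by
    rw [setIntegral_congr_fun measurableSet_Ioc heq2, ← intervalIntegral.integral_of_le hs1]
    have hsub : uIcc s 1 ⊆ ({0}ᶜ : Set ℝ) := by
      rw [uIcc_of_le hs1]
      intro t ht
      exact (lt_of_lt_of_le hs0 ht.1).ne'
    have key := intervalIntegral.integral_eq_sub_of_hasDerivAt
      (f := fun t : ℝ => b*Real.log t + Real.log t^2/2 - b*t - (t*Real.log t - t))
      (f' := fun t : ℝ => (b + Real.log t) * (t⁻¹ - 1))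
      (by
        intro x hx
        have hx0 : x ≠ 0 := hsub hx
        have H := ((((Real.hasDerivAt_log hx0).const_mul b).add
          (((Real.hasDerivAt_log hx0).pow 2).div_const 2)).sub
          ((hasDerivAt_id x).const_mul b)).sub
          ((hasDerivAt_mul_log' hx0).sub (hasDerivAt_id x))
        refine H.congr_deriv ?_; symm
        field_simp
        ring)
      (by
        apply ContinuousOn.intervalIntegrable
        apply ContinuousOn.mul
        · exact continuousOn_const.add (Real.continuousOn_log.mono hsub)
        · apply ContinuousOn.sub _ continuousOn_const
          exact ContinuousOn.inv₀ continuousOn_id (fun t ht => hsub ht))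
    rw [key]
    simp [Real.log_one]
    ring
  rw [← Ioc_union_Ioc_eq_Ioc hs0.le hs1,
    setIntegral_union (Ioc_disjoint_Ioc_of_le le_rfl) measurableSet_Ioc hI1 hI2, E1, E2]
  field_simp
  ring

lemma main_part {a b : ℝ} (ha : 0 ≤ a) (hb : 0 ≤ b) :
    ∫ p in Ioc (0:ℝ) 1 ×ˢ Ioc (0:ℝ) 1,
        (a + Real.log p.1) * (b + Real.log p.2) * (min p.1 p.2 / (p.1 * p.2) - 1)
      = (1-b)*(2-a) - a + 3 := by
  have hint := prod_integrable ha hb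
  unfold IntegrableOn at hint
  rw [Measure.volume_eq_prod, ← Measure.prod_restrict] at hint ⊢
  rw [MeasureTheory.integral_prod _ hint]
  have hcong : ∀ x ∈ Ioc (0:ℝ) 1,
      (∫ y in Ioc (0:ℝ) 1,
        (a + Real.log x) * (b + Real.log y) * (min x y / (x * y) - 1))
      = (a + Real.log x) * ((1-b) * Real.log x - Real.log x ^ 2 / 2) := by
    intro x hx
    simp_rw [mul_assoc]
    rw [MeasureTheory.integral_const_mul, inner_int b hx]
  calc (∫ x in Ioc (0:ℝ) 1, ∫ y in Ioc (0:ℝ) 1,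
        (a + Real.log x) * (b + Real.log y) * (min x y / (x * y) - 1))
      = ∫ x in Ioc (0:ℝ) 1,
          (a + Real.log x) * ((1-b) * Real.log x - Real.log x ^ 2 / 2) :=
        setIntegral_congr_fun measurableSet_Ioc (fun x hx => hcong x hx)
    _ = (1-b)*(2-a) - a + 3 := outer_val a b

end MleAux

section MleAux
open Filter Real
/-- The entries of the asymptotic covariance matrix `Σ` at `γ₀ = 0`, as double
integrals of the weight functions `-(2 + log t)` and `(3 + log t)` against the
covariance kernel `K₀(s,t) = min(s,t)/(st) - 1`. -/
theorem mle_asymptotic_covariance_gamma_zero :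
    (IntegrableOn
        (fun p : ℝ × ℝ => (2 + Real.log p.1) * (2 + Real.log p.2) *
          (min p.1 p.2 / (p.1 * p.2) - 1)) (Ioc (0 : ℝ) 1 ×ˢ Ioc (0 : ℝ) 1) ∧
      ∫ p in Ioc (0 : ℝ) 1 ×ˢ Ioc (0 : ℝ) 1,
          (2 + Real.log p.1) * (2 + Real.log p.2) *
            (min p.1 p.2 / (p.1 * p.2) - 1) = 1) ∧
    (IntegrableOn
        (fun p : ℝ × ℝ => -(2 + Real.log p.1) * (3 + Real.log p.2) *
          (min p.1 p.2 / (p.1 * p.2) - 1)) (Ioc (0 : ℝ) 1 ×ˢ Ioc (0 : ℝ) 1) ∧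
      ∫ p in Ioc (0 : ℝ) 1 ×ˢ Ioc (0 : ℝ) 1,
          -(2 + Real.log p.1) * (3 + Real.log p.2) *
            (min p.1 p.2 / (p.1 * p.2) - 1) = -1) ∧
    (IntegrableOn
        (fun p : ℝ × ℝ => (3 + Real.log p.1) * (3 + Real.log p.2) *
          (min p.1 p.2 / (p.1 * p.2) - 1)) (Ioc (0 : ℝ) 1 ×ˢ Ioc (0 : ℝ) 1) ∧
      ∫ p in Ioc (0 : ℝ) 1 ×ˢ Ioc (0 : ℝ) 1,
          (3 + Real.log p.1) * (3 + Real.log p.2) *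
            (min p.1 p.2 / (p.1 * p.2) - 1) = 2) := by
  refine ⟨⟨prod_integrable (by norm_num) (by norm_num), ?_⟩,
    ⟨?_, ?_⟩, ⟨prod_integrable (by norm_num) (by norm_num), ?_⟩⟩
  · rw [main_part (by norm_num : (0:ℝ) ≤ 2) (by norm_num : (0:ℝ) ≤ 2)]
    norm_num
  · exact ((prod_integrable (by norm_num : (0:ℝ) ≤ 2)
      (by norm_num : (0:ℝ) ≤ 3)).neg).congr
      (Filter.Eventually.of_forall fun p => by simp only [Pi.neg_apply]; ring)
  · have h : (∫ p in Ioc (0 : ℝ) 1 ×ˢ Ioc (0 : ℝ) 1,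
        -(2 + Real.log p.1) * (3 + Real.log p.2) * (min p.1 p.2 / (p.1 * p.2) - 1))
        = ∫ p in Ioc (0 : ℝ) 1 ×ˢ Ioc (0 : ℝ) 1,
          -((2 + Real.log p.1) * (3 + Real.log p.2) * (min p.1 p.2 / (p.1 * p.2) - 1)) := by
      apply integral_congr_ae
      exact Filter.Eventually.of_forall fun p => by ring
    rw [h, integral_neg, main_part (by norm_num : (0:ℝ) ≤ 2) (by norm_num : (0:ℝ) ≤ 3)]
    norm_num
  · rw [main_part (by norm_num : (0:ℝ) ≤ 3) (by norm_num : (0:ℝ) ≤ 3)]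
    norm_num

end MleAux
end
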